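/- arXiv:2604.16017 — 8 statements merged into one kernel-verified Lean document; each statement's English description precedes it below -/
import Mathlib

section
/- Let u, v : ℝ × ℝ² → ℝ² be smooth time-dependent vector fields such that for every t the spatial vector fields u(t,·) and v(t,·) are divergence-free. Set v̇ := ∂ₜv + (u·∇)v, u̇ := ∂ₜu + (u·∇)u, and v̈ := ∂ₜv̇ + (u·∇)v̇. Then for all (t,x) ∈ ℝ × ℝ², div v̈(t,x) = 2 ∑_{i,k=1}^{2} ∂ᵢu_k(t,x) ∂_k v̇ᵢ(t,x) + ∑_{i,k=1}^{2} ∂ᵢu̇_k(t,x) ∂_k vᵢ(t,x). (The identity uses that the spatial dimension is two.) -/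
open scoped BigOperators

/-- Partial derivative `∂ⱼ f` of a scalar function on `ℝ²`. -/
noncomputable def pd (f : (Fin 2 → ℝ) → ℝ) (j : Fin 2) (x : Fin 2 → ℝ) : ℝ :=
  fderiv ℝ f x (Pi.single j 1)

/-- Material derivative `ẇ = ∂ₜ w + (u·∇) w` of a time-dependent vector field. -/
noncomputable def matD (u w : ℝ → (Fin 2 → ℝ) → Fin 2 → ℝ) :
    ℝ → (Fin 2 → ℝ) → Fin 2 → ℝ :=
  fun t x i => deriv (fun s => w s x i) t + ∑ k, u t x k * pd (fun y => w t y i) k x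

noncomputable def Dd (w : ℝ × (Fin 2 → ℝ)) (F : (ℝ × (Fin 2 → ℝ)) → ℝ) :
    (ℝ × (Fin 2 → ℝ)) → ℝ := fun p => fderiv ℝ F p w

noncomputable def ee (k : Fin 2) : ℝ × (Fin 2 → ℝ) := (0, Pi.single k 1)

noncomputable def MDa (U : Fin 2 → (ℝ × (Fin 2 → ℝ)) → ℝ) (F : (ℝ × (Fin 2 → ℝ)) → ℝ) :
    (ℝ × (Fin 2 → ℝ)) → ℝ :=
  fun p => Dd (1, 0) F p + ∑ k, U k p * Dd (ee k) F p

section basic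
variable {F G : (ℝ × (Fin 2 → ℝ)) → ℝ}

theorem Dd_contDiff (hF : ContDiff ℝ (⊤ : ℕ∞) F) (w : ℝ × (Fin 2 → ℝ)) :
    ContDiff ℝ (⊤ : ℕ∞) (Dd w F) :=
  (hF.fderiv_right (by simp)).clm_apply contDiff_const

theorem Dd_add (hF : Differentiable ℝ F) (hG : Differentiable ℝ G)
    (w p : ℝ × (Fin 2 → ℝ)) : Dd w (fun q => F q + G q) p = Dd w F p + Dd w G p := by
  simp [Dd, fderiv_fun_add (hF p) (hG p)]

theorem Dd_sum {ι : Type*} {s : Finset ι} {A : ι → (ℝ × (Fin 2 → ℝ)) → ℝ}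
    (hA : ∀ i ∈ s, Differentiable ℝ (A i)) (w p : ℝ × (Fin 2 → ℝ)) :
    Dd w (fun q => ∑ i ∈ s, A i q) p = ∑ i ∈ s, Dd w (A i) p := by
  simp [Dd, fderiv_fun_sum (fun i hi => (hA i hi) p)]

theorem Dd_mul (hF : Differentiable ℝ F) (hG : Differentiable ℝ G)
    (w p : ℝ × (Fin 2 → ℝ)) :
    Dd w (fun q => F q * G q) p = Dd w F p * G p + F p * Dd w G p := by
  simp [Dd, fderiv_fun_mul (hF p) (hG p)]; ring

theorem Dd_zero (w p : ℝ × (Fin 2 → ℝ)) : Dd w (fun _ => (0:ℝ)) p = 0 := by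
  simp [Dd]

theorem Dd_comm (hF : ContDiff ℝ (⊤ : ℕ∞) F) (w z p : ℝ × (Fin 2 → ℝ)) :
    Dd w (Dd z F) p = Dd z (Dd w F) p := by
  have hd : Differentiable ℝ (fderiv ℝ F) := (hF.fderiv_right (m := (⊤ : ℕ∞)) (by simp)).differentiable (by simp)
  have h1 : ∀ (a b : ℝ × (Fin 2 → ℝ)), Dd a (Dd b F) p = fderiv ℝ (fderiv ℝ F) p a b := by
    intro a b
    have : fderiv ℝ (fun q => fderiv ℝ F q b) p
        = ((fderiv ℝ (fderiv ℝ F) p).flip) b := by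
      have := fderiv_clm_apply (hd p) (differentiableAt_const b)
      simpa using this
    show (fderiv ℝ (fun q => fderiv ℝ F q b) p) a = _
    rw [this]; rfl
  rw [h1, h1]
  exact ((hF.contDiffAt).isSymmSndFDerivAt (by rw [minSmoothness_of_isRCLikeNormedField]; exact WithTop.coe_le_coe.mpr (le_top : (2 : ℕ∞) ≤ ⊤))).eq w z

theorem pd_slice (hF : Differentiable ℝ F) (t : ℝ) (x : Fin 2 → ℝ) (j : Fin 2) :
    pd (fun y => F (t, y)) j x = Dd (ee j) F (t, x) := by
  have h : HasFDerivAt (fun y : Fin 2 → ℝ => F (t, y))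
      ((fderiv ℝ F (t, x)).comp (ContinuousLinearMap.inr ℝ ℝ (Fin 2 → ℝ))) x :=
    (hF (t, x)).hasFDerivAt.comp x (hasFDerivAt_prodMk_right t x)
  simp [pd, Dd, ee, h.fderiv]

theorem deriv_slice (hF : Differentiable ℝ F) (t : ℝ) (x : Fin 2 → ℝ) :
    deriv (fun s => F (s, x)) t = Dd (1, 0) F (t, x) := by
  have h : HasFDerivAt (fun s : ℝ => F (s, x))
      ((fderiv ℝ F (t, x)).comp (ContinuousLinearMap.inl ℝ ℝ (Fin 2 → ℝ))) t :=
    (hF (t, x)).hasFDerivAt.comp t (hasFDerivAt_prodMk_left t x)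
  have := h.hasDerivAt.deriv
  simpa [Dd] using this

end basic

section MDlemmas
variable {U : Fin 2 → (ℝ × (Fin 2 → ℝ)) → ℝ} {F G : (ℝ × (Fin 2 → ℝ)) → ℝ}

theorem MDa_contDiff (hU : ∀ k, ContDiff ℝ (⊤ : ℕ∞) (U k)) (hF : ContDiff ℝ (⊤ : ℕ∞) F) :
    ContDiff ℝ (⊤ : ℕ∞) (MDa U F) :=
  (Dd_contDiff hF _).add <| ContDiff.sum fun k _ => (hU k).mul (Dd_contDiff hF _)

theorem MDa_add (hF : Differentiable ℝ F) (hG : Differentiable ℝ G)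
    (p : ℝ × (Fin 2 → ℝ)) : MDa U (fun q => F q + G q) p = MDa U F p + MDa U G p := by
  simp only [MDa, Dd_add hF hG, mul_add, Finset.sum_add_distrib]; ring

theorem MDa_sum {ι : Type*} {s : Finset ι} {A : ι → (ℝ × (Fin 2 → ℝ)) → ℝ}
    (hA : ∀ i ∈ s, Differentiable ℝ (A i)) (p : ℝ × (Fin 2 → ℝ)) :
    MDa U (fun q => ∑ i ∈ s, A i q) p = ∑ i ∈ s, MDa U (A i) p := by
  simp only [MDa, Dd_sum hA, Finset.mul_sum, Finset.sum_add_distrib]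
  rw [Finset.sum_comm]

theorem MDa_mul (hF : Differentiable ℝ F) (hG : Differentiable ℝ G)
    (p : ℝ × (Fin 2 → ℝ)) :
    MDa U (fun q => F q * G q) p = MDa U F p * G p + F p * MDa U G p := by
  have e2 : ∑ k, U k p * Dd (ee k) (fun q => F q * G q) p
      = (∑ k, U k p * Dd (ee k) F p) * G p + F p * ∑ k, U k p * Dd (ee k) G p := by
    rw [Finset.sum_mul, Finset.mul_sum, ← Finset.sum_add_distrib]
    exact Finset.sum_congr rfl fun k _ => by rw [Dd_mul hF hG (ee k) p]; ring
  simp only [MDa, e2, Dd_mul hF hG (1,0) p]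
  ring

theorem MDa_zero (p : ℝ × (Fin 2 → ℝ)) : MDa U (fun _ => (0:ℝ)) p = 0 := by
  simp [MDa, Dd_zero]

theorem Dd_MDa (hU : ∀ k, ContDiff ℝ (⊤ : ℕ∞) (U k)) (hF : ContDiff ℝ (⊤ : ℕ∞) F)
    (w p : ℝ × (Fin 2 → ℝ)) :
    Dd w (MDa U F) p = MDa U (Dd w F) p + ∑ k, Dd w (U k) p * Dd (ee k) F p := by
  have hdF : ∀ z, Differentiable ℝ (Dd z F) := fun z => (Dd_contDiff hF z).differentiable (by simp)
  have hprod : ∀ k : Fin 2, Differentiable ℝ (fun q => U k q * Dd (ee k) F q) :=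
    fun k => ((hU k).differentiable (by simp)).mul (hdF _)
  have h1 : Dd w (MDa U F) p
      = Dd w (Dd (1,0) F) p
        + ∑ k, (Dd w (U k) p * Dd (ee k) F p + U k p * Dd w (Dd (ee k) F) p) := by
    show Dd w (fun q => Dd (1,0) F q + ∑ k, U k q * Dd (ee k) F q) p = _
    rw [Dd_add (hdF _) (Differentiable.fun_sum fun k _ => hprod k),
        Dd_sum (fun k _ => hprod k)]
    congr 1
    exact Finset.sum_congr rfl fun k _ =>
      Dd_mul ((hU k).differentiable (by simp)) (hdF _) w p
  rw [h1, Dd_comm hF w (1,0) p]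
  have h2 : ∀ k : Fin 2, Dd w (Dd (ee k) F) p = Dd (ee k) (Dd w F) p :=
    fun k => Dd_comm hF w (ee k) p
  simp only [h2, Finset.sum_add_distrib, MDa]
  ring

end MDlemmas

theorem core (U V : Fin 2 → (ℝ × (Fin 2 → ℝ)) → ℝ)
    (hU : ∀ k, ContDiff ℝ (⊤ : ℕ∞) (U k)) (hV : ∀ k, ContDiff ℝ (⊤ : ℕ∞) (V k))
    (hUdiv : ∀ p, ∑ i, Dd (ee i) (U i) p = 0)
    (hVdiv : ∀ p, ∑ i, Dd (ee i) (V i) p = 0)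
    (p : ℝ × (Fin 2 → ℝ)) :
    ∑ i, Dd (ee i) (MDa U (MDa U (V i))) p
      = 2 * (∑ i, ∑ k, Dd (ee i) (U k) p * Dd (ee k) (MDa U (V i)) p)
        + ∑ i, ∑ k, Dd (ee i) (MDa U (U k)) p * Dd (ee k) (V i) p := by
  have dU : ∀ k, Differentiable ℝ (U k) := fun k => (hU k).differentiable (by simp)
  have cMV : ∀ i, ContDiff ℝ (⊤ : ℕ∞) (MDa U (V i)) := fun i => MDa_contDiff hU (hV i)
  have cMU : ∀ j, ContDiff ℝ (⊤ : ℕ∞) (MDa U (U j)) := fun j => MDa_contDiff hU (hU j)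
  have dDdV : ∀ i k, Differentiable ℝ (Dd (ee k) (V i)) :=
    fun i k => (Dd_contDiff (hV i) _).differentiable (by simp)
  have dDdU : ∀ j k, Differentiable ℝ (Dd (ee k) (U j)) :=
    fun j k => (Dd_contDiff (hU j) _).differentiable (by simp)
  have dMDdV : ∀ i, Differentiable ℝ (MDa U (Dd (ee i) (V i))) :=
    fun i => (MDa_contDiff hU (Dd_contDiff (hV i) _)).differentiable (by simp)
  have h1 : ∀ i, Dd (ee i) (MDa U (MDa U (V i))) p
      = MDa U (Dd (ee i) (MDa U (V i))) p
        + ∑ j, Dd (ee i) (U j) p * Dd (ee j) (MDa U (V i)) p :=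
    fun i => Dd_MDa hU (cMV i) (ee i) p
  have hG : ∀ i, Dd (ee i) (MDa U (V i))
      = fun q => MDa U (Dd (ee i) (V i)) q + ∑ j, Dd (ee i) (U j) q * Dd (ee j) (V i) q :=
    fun i => funext fun q => Dd_MDa hU (hV i) (ee i) q
  have h2 : ∀ i, MDa U (Dd (ee i) (MDa U (V i))) p
      = MDa U (MDa U (Dd (ee i) (V i))) p
        + ∑ j, MDa U (fun q => Dd (ee i) (U j) q * Dd (ee j) (V i) q) p := by
    intro i
    rw [hG i,
      MDa_add (dMDdV i) (Differentiable.fun_sum fun j _ => (dDdU j i).fun_mul (dDdV i j)) p,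
      MDa_sum (fun j _ => (dDdU j i).fun_mul (dDdV i j)) p]
  have h3 : ∀ i j, MDa U (fun q => Dd (ee i) (U j) q * Dd (ee j) (V i) q) p
      = MDa U (Dd (ee i) (U j)) p * Dd (ee j) (V i) p
        + Dd (ee i) (U j) p * MDa U (Dd (ee j) (V i)) p :=
    fun i j => MDa_mul (dDdU j i) (dDdV i j) p
  have h4 : ∀ i j, MDa U (Dd (ee i) (U j)) p
      = Dd (ee i) (MDa U (U j)) p - ∑ k, Dd (ee i) (U k) p * Dd (ee k) (U j) p := by
    intro i j
    have := Dd_MDa hU (hU j) (ee i) p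
    linarith
  have h5 : ∀ i j, MDa U (Dd (ee j) (V i)) p
      = Dd (ee j) (MDa U (V i)) p - ∑ k, Dd (ee j) (U k) p * Dd (ee k) (V i) p := by
    intro i j
    have := Dd_MDa hU (hV i) (ee j) p
    linarith
  have h6 : ∑ i, MDa U (MDa U (Dd (ee i) (V i))) p = 0 := by
    rw [← MDa_sum (fun i _ => dMDdV i) p]
    have e : (fun q => ∑ i, MDa U (Dd (ee i) (V i)) q) = fun _ => (0:ℝ) := by
      funext q
      rw [← MDa_sum (fun i _ => dDdV i i) q]
      have e2 : (fun r => ∑ i, Dd (ee i) (V i) r) = fun _ => (0:ℝ) := funext hVdiv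
      rw [e2, MDa_zero]
    rw [e, MDa_zero]
  have ha := hUdiv p
  have hb := hVdiv p
  simp only [Fin.sum_univ_two] at h1 h2 h3 h4 h5 h6 ha hb ⊢
  linear_combination h1 0 + h1 1 + h2 0 + h2 1 + h6
    + h3 0 0 + h3 0 1 + h3 1 0 + h3 1 1
    + Dd (ee 0) (V 0) p * h4 0 0 + Dd (ee 1) (V 0) p * h4 0 1
    + Dd (ee 0) (V 1) p * h4 1 0 + Dd (ee 1) (V 1) p * h4 1 1
    + Dd (ee 0) (U 0) p * h5 0 0 + Dd (ee 0) (U 1) p * h5 0 1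
    + Dd (ee 1) (U 0) p * h5 1 0 + Dd (ee 1) (U 1) p * h5 1 1
    - 2 * (Dd (ee 0) (U 0) p * Dd (ee 0) (V 0) p + Dd (ee 0) (U 1) p * Dd (ee 1) (V 0) p
        + Dd (ee 1) (U 0) p * Dd (ee 0) (V 1) p + Dd (ee 1) (U 1) p * Dd (ee 1) (V 1) p) * ha
    + 2 * (Dd (ee 0) (U 0) p * Dd (ee 1) (U 1) p - Dd (ee 0) (U 1) p * Dd (ee 1) (U 0) p) * hb

theorem comp_contDiff {w : ℝ → (Fin 2 → ℝ) → Fin 2 → ℝ}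
    (hw : ContDiff ℝ (⊤ : ℕ∞) (fun p : ℝ × (Fin 2 → ℝ) => w p.1 p.2)) (i : Fin 2) :
    ContDiff ℝ (⊤ : ℕ∞) (fun p : ℝ × (Fin 2 → ℝ) => w p.1 p.2 i) :=
  (ContinuousLinearMap.proj (R := ℝ) (φ := fun _ : Fin 2 => ℝ) i).contDiff.comp hw

theorem matD_eq (u w : ℝ → (Fin 2 → ℝ) → Fin 2 → ℝ)
    (hw : ContDiff ℝ (⊤ : ℕ∞) (fun p : ℝ × (Fin 2 → ℝ) => w p.1 p.2)) (i : Fin 2)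
    (t : ℝ) (x : Fin 2 → ℝ) :
    matD u w t x i
      = MDa (fun k p => u p.1 p.2 k) (fun p => w p.1 p.2 i) (t, x) := by
  have hFi : Differentiable ℝ (fun p : ℝ × (Fin 2 → ℝ) => w p.1 p.2 i) :=
    (comp_contDiff hw i).differentiable (by simp)
  show _ + _ = _ + _
  congr 1
  · exact deriv_slice hFi t x
  · exact Finset.sum_congr rfl fun k _ => by
      have := pd_slice hFi t x k
      exact congrArg (fun z => u t x k * z) this

theorem matD_contDiff (u w : ℝ → (Fin 2 → ℝ) → Fin 2 → ℝ)
    (hu : ContDiff ℝ (⊤ : ℕ∞) (fun p : ℝ × (Fin 2 → ℝ) => u p.1 p.2))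
    (hw : ContDiff ℝ (⊤ : ℕ∞) (fun p : ℝ × (Fin 2 → ℝ) => w p.1 p.2)) :
    ContDiff ℝ (⊤ : ℕ∞) (fun p : ℝ × (Fin 2 → ℝ) => matD u w p.1 p.2) := by
  have e : (fun p : ℝ × (Fin 2 → ℝ) => matD u w p.1 p.2)
      = fun p => (fun i => MDa (fun k q => u q.1 q.2 k) (fun q => w q.1 q.2 i) p) :=
    funext fun p => funext fun i => matD_eq u w hw i p.1 p.2
  rw [e]
  exact contDiff_pi.mpr fun i =>
    MDa_contDiff (fun k => comp_contDiff hu k) (comp_contDiff hw i)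

/-- For smooth divergence-free `u, v` on `ℝ × ℝ²`, with `v̇ = ∂ₜv + (u·∇)v`,
`u̇ = ∂ₜu + (u·∇)u`, `v̈ = ∂ₜv̇ + (u·∇)v̇`:
`div v̈ = 2 ∑ᵢₖ ∂ᵢu_k ∂_k v̇ᵢ + ∑ᵢₖ ∂ᵢu̇_k ∂_k vᵢ`. -/
theorem div_second_material_derivative
    (u v : ℝ → (Fin 2 → ℝ) → Fin 2 → ℝ)
    (hu : ContDiff ℝ (⊤ : ℕ∞) (fun p : ℝ × (Fin 2 → ℝ) => u p.1 p.2))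
    (hv : ContDiff ℝ (⊤ : ℕ∞) (fun p : ℝ × (Fin 2 → ℝ) => v p.1 p.2))
    (hudiv : ∀ t x, ∑ i, pd (fun y => u t y i) i x = 0)
    (hvdiv : ∀ t x, ∑ i, pd (fun y => v t y i) i x = 0) :
    ∀ t x, ∑ i, pd (fun y => matD u (matD u v) t y i) i x
      = 2 * (∑ i, ∑ k, pd (fun y => u t y k) i x * pd (fun y => matD u v t y i) k x)
        + ∑ i, ∑ k, pd (fun y => matD u u t y k) i x * pd (fun y => v t y i) k x := by
  intro t x
  set U : Fin 2 → (ℝ × (Fin 2 → ℝ)) → ℝ := fun k p => u p.1 p.2 k with hUdef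
  set V : Fin 2 → (ℝ × (Fin 2 → ℝ)) → ℝ := fun i p => v p.1 p.2 i with hVdef
  have hU : ∀ k, ContDiff ℝ (⊤ : ℕ∞) (U k) := fun k => comp_contDiff hu k
  have hV : ∀ i, ContDiff ℝ (⊤ : ℕ∞) (V i) := fun i => comp_contDiff hv i
  have dU : ∀ k, Differentiable ℝ (U k) := fun k => (hU k).differentiable (by simp)
  have dV : ∀ i, Differentiable ℝ (V i) := fun i => (hV i).differentiable (by simp)
  have hmv : ContDiff ℝ (⊤ : ℕ∞) (fun p : ℝ × (Fin 2 → ℝ) => matD u v p.1 p.2) :=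
    matD_contDiff u v hu hv
  have hmu : ContDiff ℝ (⊤ : ℕ∞) (fun p : ℝ × (Fin 2 → ℝ) => matD u u p.1 p.2) :=
    matD_contDiff u u hu hu
  -- identification of components of matD with MDa
  have eMV : ∀ i, (fun p : ℝ × (Fin 2 → ℝ) => matD u v p.1 p.2 i) = MDa U (V i) :=
    fun i => funext fun p => matD_eq u v hv i p.1 p.2
  have eMU : ∀ k, (fun p : ℝ × (Fin 2 → ℝ) => matD u u p.1 p.2 k) = MDa U (U k) :=
    fun k => funext fun p => matD_eq u u hu k p.1 p.2
  have cMV : ∀ i, ContDiff ℝ (⊤ : ℕ∞) (MDa U (V i)) := fun i => MDa_contDiff hU (hV i)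
  have cMU : ∀ k, ContDiff ℝ (⊤ : ℕ∞) (MDa U (U k)) := fun k => MDa_contDiff hU (hU k)
  have dMV : ∀ i, Differentiable ℝ (MDa U (V i)) := fun i => (cMV i).differentiable (by simp)
  have dMU : ∀ k, Differentiable ℝ (MDa U (U k)) := fun k => (cMU k).differentiable (by simp)
  have dMMV : ∀ i, Differentiable ℝ (MDa U (MDa U (V i))) :=
    fun i => (MDa_contDiff hU (cMV i)).differentiable (by simp)
  -- translate goal pieces
  have A : ∀ i : Fin 2, pd (fun y => matD u (matD u v) t y i) i x
      = Dd (ee i) (MDa U (MDa U (V i))) (t, x) := by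
    intro i
    have e1 : (fun y => matD u (matD u v) t y i)
        = fun y => MDa U (MDa U (V i)) (t, y) := by
      funext y
      rw [matD_eq u (matD u v) hmv i t y, eMV i]
    rw [e1]
    exact pd_slice (dMMV i) t x i
  have B : ∀ i k : Fin 2, pd (fun y => u t y k) i x = Dd (ee i) (U k) (t, x) :=
    fun i k => pd_slice (dU k) t x i
  have C : ∀ i k : Fin 2, pd (fun y => matD u v t y i) k x
      = Dd (ee k) (MDa U (V i)) (t, x) := by
    intro i k
    have e1 : (fun y => matD u v t y i) = fun y => MDa U (V i) (t, y) := by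
      funext y
      exact matD_eq u v hv i t y
    rw [e1]
    exact pd_slice (dMV i) t x k
  have D : ∀ i k : Fin 2, pd (fun y => matD u u t y k) i x
      = Dd (ee i) (MDa U (U k)) (t, x) := by
    intro i k
    have e1 : (fun y => matD u u t y k) = fun y => MDa U (U k) (t, y) := by
      funext y
      exact matD_eq u u hu k t y
    rw [e1]
    exact pd_slice (dMU k) t x i
  have E : ∀ i k : Fin 2, pd (fun y => v t y i) k x = Dd (ee k) (V i) (t, x) :=
    fun i k => pd_slice (dV i) t x k
  have hUdiv : ∀ p : ℝ × (Fin 2 → ℝ), ∑ i, Dd (ee i) (U i) p = 0 := by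
    intro p
    have h := hudiv p.1 p.2
    calc ∑ i, Dd (ee i) (U i) p
        = ∑ i, pd (fun y => u p.1 y i) i p.2 :=
          Finset.sum_congr rfl fun i _ => (pd_slice (dU i) p.1 p.2 i).symm
      _ = 0 := h
  have hVdiv : ∀ p : ℝ × (Fin 2 → ℝ), ∑ i, Dd (ee i) (V i) p = 0 := by
    intro p
    have h := hvdiv p.1 p.2
    calc ∑ i, Dd (ee i) (V i) p
        = ∑ i, pd (fun y => v p.1 y i) i p.2 :=
          Finset.sum_congr rfl fun i _ => (pd_slice (dV i) p.1 p.2 i).symm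
      _ = 0 := h
  calc ∑ i, pd (fun y => matD u (matD u v) t y i) i x
      = ∑ i, Dd (ee i) (MDa U (MDa U (V i))) (t, x) :=
        Finset.sum_congr rfl fun i _ => A i
    _ = 2 * (∑ i, ∑ k, Dd (ee i) (U k) (t, x) * Dd (ee k) (MDa U (V i)) (t, x))
        + ∑ i, ∑ k, Dd (ee i) (MDa U (U k)) (t, x) * Dd (ee k) (V i) (t, x) :=
        core U V hU hV hUdiv hVdiv (t, x)
    _ = 2 * (∑ i, ∑ k, pd (fun y => u t y k) i x * pd (fun y => matD u v t y i) k x)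
        + ∑ i, ∑ k, pd (fun y => matD u u t y k) i x * pd (fun y => v t y i) k x := by
        congr 1
        · congr 1
          exact Finset.sum_congr rfl fun i _ => Finset.sum_congr rfl fun k _ => by
            rw [B i k, C i k]
        · exact Finset.sum_congr rfl fun i _ => Finset.sum_congr rfl fun k _ => by
            rw [D i k, E i k]
end

section
/- Let u, v : ℝ × ℝ² → ℝ² be smooth time-dependent vector fields such that for every t the spatial vector fields u(t,·) and v(t,·) are divergence-free. Set v̇ := ∂ₜv + (u·∇)v, u̇ := ∂ₜu + (u·∇)u, v̈ := ∂ₜv̇ + (u·∇)v̇, and v⃛ := ∂ₜv̈ + (u·∇)v̈. Then for all (t,x) ∈ ℝ × ℝ², div v⃛ = (∂ₜ + u·∇)[ 3 ∑_{i,k=1}^{2} ∂ᵢu_k ∂_k v̇ᵢ + ∑_{i,k=1}^{2} ∂ᵢv_k ∂_k u̇ᵢ ] − ∑_{i,k=1}^{2} ∂ᵢu̇_k ∂_k v̇ᵢ + (div u̇)(div v̇). -/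
open scoped BigOperators

/-- Material derivative `(∂ₜ + u·∇) f` of a time-dependent scalar function. -/
noncomputable def matDs (u : ℝ → (Fin 2 → ℝ) → Fin 2 → ℝ) (f : ℝ → (Fin 2 → ℝ) → ℝ) :
    ℝ → (Fin 2 → ℝ) → ℝ :=
  fun t x => deriv (fun s => f s x) t + ∑ k, u t x k * pd (fun y => f t y) k x

noncomputable section

abbrev EE := Fin 2 → ℝ
abbrev PP := ℝ × EE

/-- directional derivative along (1, u) -/
def Dop (u : ℝ → EE → Fin 2 → ℝ) (G : PP → ℝ) : PP → ℝ :=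
  fun p => fderiv ℝ G p (1, u p.1 p.2)

/-- spatial partial derivative -/
def Pdd (G : PP → ℝ) (j : Fin 2) : PP → ℝ :=
  fun p => fderiv ℝ G p ((0 : ℝ), Pi.single j (1:ℝ))

theorem smooth_fderiv_apply {G : PP → ℝ} (hG : ContDiff ℝ (⊤ : ℕ∞) G) {c : PP → PP}
    (hc : ContDiff ℝ (⊤ : ℕ∞) c) : ContDiff ℝ (⊤ : ℕ∞) (fun p => fderiv ℝ G p (c p)) :=
  (hG.fderiv_right (by simp)).clm_apply hc

theorem smooth_Pdd {G : PP → ℝ} (hG : ContDiff ℝ (⊤ : ℕ∞) G) (j : Fin 2) :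
    ContDiff ℝ (⊤ : ℕ∞) (Pdd G j) :=
  smooth_fderiv_apply hG contDiff_const

theorem smooth_Dop {u : ℝ → EE → Fin 2 → ℝ}
    (hu : ContDiff ℝ (⊤ : ℕ∞) (fun p : PP => u p.1 p.2)) {G : PP → ℝ} (hG : ContDiff ℝ (⊤ : ℕ∞) G) :
    ContDiff ℝ (⊤ : ℕ∞) (Dop u G) :=
  smooth_fderiv_apply hG (contDiff_const.prodMk hu)

theorem pd_eq_Pdd {G : PP → ℝ} (t : ℝ) (x : EE) (hG : DifferentiableAt ℝ G (t, x))
    (j : Fin 2) : pd (fun y => G (t, y)) j x = Pdd G j (t, x) := by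
  have h1 : HasFDerivAt (fun y : EE => ((t : ℝ), y))
      (ContinuousLinearMap.inr ℝ ℝ EE) x :=
    (hasFDerivAt_const t x).prodMk (hasFDerivAt_id x)
  have h2 : HasFDerivAt (fun y => G (t, y))
      ((fderiv ℝ G (t, x)).comp (ContinuousLinearMap.inr ℝ ℝ EE)) x :=
    (hG.hasFDerivAt).comp x h1
  rw [pd, h2.fderiv]
  rfl

theorem deriv_eq_Dop {G : PP → ℝ} (t : ℝ) (x : EE) (hG : DifferentiableAt ℝ G (t, x)) :
    deriv (fun s => G (s, x)) t = fderiv ℝ G (t, x) (1, 0) := by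
  have h1 : HasDerivAt (fun s : ℝ => ((s : ℝ), x)) ((1 : ℝ), (0 : EE)) t := by
    simpa using (hasDerivAt_id t).prodMk (hasDerivAt_const t x)
  have h2 := (hG.hasFDerivAt).comp_hasDerivAt t h1
  exact h2.deriv

theorem dir_expand (L : PP →L[ℝ] ℝ) (y : EE) :
    L (1, y) = L (1, 0) + ∑ k, y k * L ((0:ℝ), Pi.single k (1:ℝ)) := by
  have hy : ((1:ℝ), y) = ((1:ℝ), (0:EE)) + ∑ k, y k • (((0:ℝ), Pi.single k (1:ℝ)) : PP) := by
    rw [Prod.ext_iff]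
    refine ⟨by simp [Prod.fst_sum], ?_⟩
    simp only [Prod.snd_sum, Prod.snd]
    funext j
    simp [Finset.sum_apply, Pi.single_apply]
    fin_cases j <;> simp
  rw [hy, map_add, map_sum]
  congr 1
  refine Finset.sum_congr rfl fun k _ => ?_
  have : (y k • (((0:ℝ), Pi.single k (1:ℝ)) : PP)) = y k • (((0:ℝ), Pi.single k (1:ℝ)) : PP) := rfl
  rw [map_smul]
  simp [smul_eq_mul]

section calc_lemmas

variable {G H : PP → ℝ} {p : PP} (w : PP)

theorem dirD_add (hG : DifferentiableAt ℝ G p) (hH : DifferentiableAt ℝ H p) :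
    fderiv ℝ (fun q => G q + H q) p w = fderiv ℝ G p w + fderiv ℝ H p w := by
  rw [fderiv_fun_add hG hH]; rfl

theorem dirD_mul (hG : DifferentiableAt ℝ G p) (hH : DifferentiableAt ℝ H p) :
    fderiv ℝ (fun q => G q * H q) p w = G p * fderiv ℝ H p w + H p * fderiv ℝ G p w := by
  rw [fderiv_fun_mul hG hH]; simp [smul_eq_mul]

theorem dirD_sum {ι : Type*} (s : Finset ι) (f : ι → PP → ℝ)
    (h : ∀ i ∈ s, DifferentiableAt ℝ (f i) p) :
    fderiv ℝ (fun q => ∑ i ∈ s, f i q) p w = ∑ i ∈ s, fderiv ℝ (f i) p w := by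
  rw [fderiv_fun_sum h]; simp

theorem dirD_const_mul (c : ℝ) (hG : DifferentiableAt ℝ G p) :
    fderiv ℝ (fun q => c * G q) p w = c * fderiv ℝ G p w := by
  rw [fderiv_const_mul hG c]; simp

end calc_lemmas

theorem matDs_eq_Dop (u : ℝ → EE → Fin 2 → ℝ) {G : PP → ℝ} (hG : ContDiff ℝ (⊤ : ℕ∞) G)
    (t : ℝ) (x : EE) : matDs u (fun s y => G (s, y)) t x = Dop u G (t, x) := by
  have hd : DifferentiableAt ℝ G (t, x) := (hG.differentiable (by simp)) _
  show deriv (fun s => G (s, x)) t + ∑ k, u t x k * pd (fun y => G (t, y)) k x = _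
  rw [deriv_eq_Dop t x hd]
  have hk : ∀ k, pd (fun y => G (t, y)) k x = Pdd G k (t, x) := fun k => pd_eq_Pdd t x hd k
  simp only [hk]
  rw [Dop, dir_expand (fderiv ℝ G (t, x)) (u t x)]
  rfl

theorem matD_eq_Dop (u : ℝ → EE → Fin 2 → ℝ) {w : ℝ → EE → Fin 2 → ℝ} (i : Fin 2)
    (hw : ContDiff ℝ (⊤ : ℕ∞) (fun p : PP => w p.1 p.2 i)) (t : ℝ) (x : EE) :
    matD u w t x i = Dop u (fun p => w p.1 p.2 i) (t, x) :=
  matDs_eq_Dop u hw t x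

theorem dir_expand0 (L : PP →L[ℝ] ℝ) (z : EE) :
    L ((0:ℝ), z) = ∑ k, z k * L ((0:ℝ), Pi.single k (1:ℝ)) := by
  have hz : (((0:ℝ), z) : PP) = ∑ k, z k • (((0:ℝ), Pi.single k (1:ℝ)) : PP) := by
    rw [Prod.ext_iff]
    refine ⟨by simp [Prod.fst_sum], ?_⟩
    simp only [Prod.snd_sum, Prod.snd]
    funext j
    fin_cases j <;> simp [Finset.sum_apply, Pi.single_apply]
  rw [hz, map_sum]
  refine Finset.sum_congr rfl fun k _ => ?_
  rw [map_smul]; simp [smul_eq_mul]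

theorem comm_lemma (u : ℝ → EE → Fin 2 → ℝ) (hu : ContDiff ℝ (⊤ : ℕ∞) (fun p : PP => u p.1 p.2))
    {G : PP → ℝ} (hG : ContDiff ℝ (⊤ : ℕ∞) G) (j : Fin 2) (p : PP) :
    Pdd (Dop u G) j p
      = Dop u (Pdd G j) p + ∑ k, Pdd (fun q => u q.1 q.2 k) j p * Pdd G k p := by
  have hF's : ContDiff ℝ (⊤ : ℕ∞) (fderiv ℝ G) := hG.fderiv_right (by simp)
  have hF'd : DifferentiableAt ℝ (fderiv ℝ G) p := hF's.differentiable (by simp) p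
  have hUd : DifferentiableAt ℝ (fun q : PP => u q.1 q.2) p := hu.differentiable (by simp) p
  set f'' := fderiv ℝ (fderiv ℝ G) p with hf''
  set U' := fderiv ℝ (fun q : PP => u q.1 q.2) p with hU'
  set ej : PP := ((0:ℝ), Pi.single j (1:ℝ)) with hej
  set ep : PP := ((1:ℝ), u p.1 p.2) with hep
  -- (i)
  have hi : Dop u (Pdd G j) p = f'' ep ej := by
    have h : HasFDerivAt (fun q => fderiv ℝ G q ej)
        ((ContinuousLinearMap.apply ℝ ℝ ej).comp f'') p :=
      (ContinuousLinearMap.apply ℝ ℝ ej).hasFDerivAt.comp p hF'd.hasFDerivAt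
    have : Dop u (Pdd G j) p = fderiv ℝ (fun q => fderiv ℝ G q ej) p ep := rfl
    rw [this, h.fderiv]; rfl
  -- (ii)
  have heu : HasFDerivAt (fun q : PP => (((1:ℝ), u q.1 q.2) : PP))
      (((0 : PP →L[ℝ] ℝ)).prod U') p :=
    (hasFDerivAt_const (1:ℝ) p).prodMk hUd.hasFDerivAt
  have h2 : HasFDerivAt (fun q => fderiv ℝ G q (((1:ℝ), u q.1 q.2) : PP))
      ((fderiv ℝ G p).comp (((0 : PP →L[ℝ] ℝ)).prod U') + f''.flip ep) p :=
    hF'd.hasFDerivAt.clm_apply heu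
  have hii : Pdd (Dop u G) j p
      = fderiv ℝ G p (((0:ℝ), U' ej) : PP) + f'' ej ep := by
    have : Pdd (Dop u G) j p
        = fderiv ℝ (fun q => fderiv ℝ G q (((1:ℝ), u q.1 q.2) : PP)) p ej := rfl
    rw [this, h2.fderiv]
    simp [ContinuousLinearMap.add_apply, ContinuousLinearMap.comp_apply,
      ContinuousLinearMap.prod_apply, ContinuousLinearMap.flip_apply]
  -- (iii) symmetry
  have hsym : f'' ej ep = f'' ep ej := hG.contDiffAt.isSymmSndFDerivAt (by rw [minSmoothness_of_isRCLikeNormedField]; exact WithTop.coe_le_coe.mpr le_top) ej ep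
  -- (iv)
  have hz : ∀ k, U' ej k = Pdd (fun q => u q.1 q.2 k) j p := by
    intro k
    have h : HasFDerivAt (fun q : PP => u q.1 q.2 k)
        ((ContinuousLinearMap.proj k).comp U') p :=
      (ContinuousLinearMap.proj (R := ℝ) (φ := fun _ : Fin 2 => ℝ) k).hasFDerivAt.comp p
        hUd.hasFDerivAt
    rw [Pdd, h.fderiv]; rfl
  rw [hii, hsym, ← hi, dir_expand0]
  simp only [hz]
  exact add_comm _ _

def Uc (u : ℝ → EE → Fin 2 → ℝ) (k : Fin 2) : PP → ℝ := fun p => u p.1 p.2 k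

theorem smooth_Uc {u : ℝ → EE → Fin 2 → ℝ} (hu : ContDiff ℝ (⊤ : ℕ∞) (fun p : PP => u p.1 p.2))
    (k : Fin 2) : ContDiff ℝ (⊤ : ℕ∞) (Uc u k) :=
  (ContinuousLinearMap.proj (R := ℝ) (φ := fun _ : Fin 2 => ℝ) k).contDiff.comp hu

theorem comm_Uc (u : ℝ → EE → Fin 2 → ℝ) (hu : ContDiff ℝ (⊤ : ℕ∞) (fun p : PP => u p.1 p.2))
    {G : PP → ℝ} (hG : ContDiff ℝ (⊤ : ℕ∞) G) (j : Fin 2) (p : PP) :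
    Pdd (Dop u G) j p
      = Dop u (Pdd G j) p + ∑ k, Pdd (Uc u k) j p * Pdd G k p :=
  comm_lemma u hu hG j p

theorem div_Dop (u : ℝ → EE → Fin 2 → ℝ) (hu : ContDiff ℝ (⊤ : ℕ∞) (fun p : PP => u p.1 p.2))
    (W : Fin 2 → PP → ℝ) (hW : ∀ i, ContDiff ℝ (⊤ : ℕ∞) (W i)) (p : PP) :
    ∑ i, Pdd (Dop u (W i)) i p
      = Dop u (fun q => ∑ i, Pdd (W i) i q) p
        + ∑ i, ∑ k, Pdd (Uc u k) i p * Pdd (W i) k p := by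
  have h1 : ∀ i, Pdd (Dop u (W i)) i p
      = Dop u (Pdd (W i) i) p + ∑ k, Pdd (Uc u k) i p * Pdd (W i) k p :=
    fun i => comm_Uc u hu (hW i) i p
  simp only [h1, Finset.sum_add_distrib]
  congr 1
  have h2 : Dop u (fun q => ∑ i, Pdd (W i) i q) p = ∑ i, Dop u (Pdd (W i) i) p := by
    have := dirD_sum (p := p) ((1:ℝ), u p.1 p.2) Finset.univ (fun i => Pdd (W i) i)
      (fun i _ => ((smooth_Pdd (hW i) i).differentiable (by simp)) p)
    exact this
  rw [h2]

section DopRules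

variable (u : ℝ → EE → Fin 2 → ℝ) {G H : PP → ℝ} (p : PP)

theorem Dop_add (hG : ContDiff ℝ (⊤ : ℕ∞) G) (hH : ContDiff ℝ (⊤ : ℕ∞) H) :
    Dop u (fun q => G q + H q) p = Dop u G p + Dop u H p :=
  dirD_add _ (hG.differentiable (by simp) p) (hH.differentiable (by simp) p)

theorem Dop_mul (hG : ContDiff ℝ (⊤ : ℕ∞) G) (hH : ContDiff ℝ (⊤ : ℕ∞) H) :
    Dop u (fun q => G q * H q) p = G p * Dop u H p + H p * Dop u G p :=
  dirD_mul _ (hG.differentiable (by simp) p) (hH.differentiable (by simp) p)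

theorem Dop_const_mul (c : ℝ) (hG : ContDiff ℝ (⊤ : ℕ∞) G) :
    Dop u (fun q => c * G q) p = c * Dop u G p :=
  dirD_const_mul _ c (hG.differentiable (by simp) p)

theorem Dop_sub (hG : ContDiff ℝ (⊤ : ℕ∞) G) (hH : ContDiff ℝ (⊤ : ℕ∞) H) :
    Dop u (fun q => G q - H q) p = Dop u G p - Dop u H p := by
  have hd : DifferentiableAt ℝ H p := hH.differentiable (by simp) p
  have : Dop u (fun q => G q - H q) p
      = fderiv ℝ (fun q => G q - H q) p ((1:ℝ), u p.1 p.2) := rfl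
  rw [this, fderiv_fun_sub (hG.differentiable (by simp) p) hd]
  simp [Dop]

theorem Dop_sum {ι : Type*} (s : Finset ι) (f : ι → PP → ℝ)
    (hf : ∀ i ∈ s, ContDiff ℝ (⊤ : ℕ∞) (f i)) :
    Dop u (fun q => ∑ i ∈ s, f i q) p = ∑ i ∈ s, Dop u (f i) p :=
  dirD_sum _ s f (fun i hi => ((hf i hi).differentiable (by simp)) p)

theorem Dop_mul3 {F : PP → ℝ} (hF : ContDiff ℝ (⊤ : ℕ∞) F) (hG : ContDiff ℝ (⊤ : ℕ∞) G)
    (hH : ContDiff ℝ (⊤ : ℕ∞) H) :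
    Dop u (fun q => F q * G q * H q) p
      = Dop u F p * G p * H p + F p * Dop u G p * H p + F p * G p * Dop u H p := by
  rw [Dop_mul u p (hF.mul hG) hH, Dop_mul u p hF hG]
  ring

end DopRules

theorem Dop_tr (u : ℝ → EE → Fin 2 → ℝ) (p : PP) (F G : Fin 2 → Fin 2 → PP → ℝ)
    (hF : ∀ i k, ContDiff ℝ (⊤ : ℕ∞) (F i k)) (hG : ∀ i k, ContDiff ℝ (⊤ : ℕ∞) (G i k)) :
    Dop u (fun q => ∑ i, ∑ k, F i k q * G k i q) p
      = ∑ i, ∑ k, (Dop u (F i k) p * G k i p + F i k p * Dop u (G k i) p) := by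
  rw [Dop_sum u p Finset.univ _ (fun i _ => ContDiff.sum fun k _ => (hF i k).mul (hG k i))]
  refine Finset.sum_congr rfl fun i _ => ?_
  rw [Dop_sum u p Finset.univ _ (fun k _ => (hF i k).mul (hG k i))]
  refine Finset.sum_congr rfl fun k _ => ?_
  rw [Dop_mul u p (hF i k) (hG k i)]
  ring

theorem Dop_tr3 (u : ℝ → EE → Fin 2 → ℝ) (p : PP) (F G H : Fin 2 → Fin 2 → PP → ℝ)
    (hF : ∀ i k, ContDiff ℝ (⊤ : ℕ∞) (F i k)) (hG : ∀ i k, ContDiff ℝ (⊤ : ℕ∞) (G i k))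
    (hH : ∀ i k, ContDiff ℝ (⊤ : ℕ∞) (H i k)) :
    Dop u (fun q => ∑ i, ∑ k, ∑ m, F i k q * G k m q * H m i q) p
      = ∑ i, ∑ k, ∑ m, (Dop u (F i k) p * G k m p * H m i p
          + F i k p * Dop u (G k m) p * H m i p + F i k p * G k m p * Dop u (H m i) p) := by
  rw [Dop_sum u p Finset.univ _ (fun i _ => ContDiff.sum fun k _ =>
    ContDiff.sum fun m _ => ((hF i k).mul (hG k m)).mul (hH m i))]
  refine Finset.sum_congr rfl fun i _ => ?_
  rw [Dop_sum u p Finset.univ _ (fun k _ => ContDiff.sum fun m _ =>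
    ((hF i k).mul (hG k m)).mul (hH m i))]
  refine Finset.sum_congr rfl fun k _ => ?_
  rw [Dop_sum u p Finset.univ _ (fun m _ => ((hF i k).mul (hG k m)).mul (hH m i))]
  refine Finset.sum_congr rfl fun m _ => ?_
  exact Dop_mul3 u p (hF i k) (hG k m) (hH m i)

section Atoms

variable (u v : ℝ → EE → Fin 2 → ℝ)

def U1 (u : ℝ → EE → Fin 2 → ℝ) (k : Fin 2) : PP → ℝ := Dop u (Uc u k)
def V1 (u v : ℝ → EE → Fin 2 → ℝ) (k : Fin 2) : PP → ℝ := Dop u (Uc v k)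
def V2 (u v : ℝ → EE → Fin 2 → ℝ) (k : Fin 2) : PP → ℝ := Dop u (V1 u v k)
def V3 (u v : ℝ → EE → Fin 2 → ℝ) (k : Fin 2) : PP → ℝ := Dop u (V2 u v k)
def MA (u : ℝ → EE → Fin 2 → ℝ) (i k : Fin 2) : PP → ℝ := Pdd (Uc u k) i
def MB (u v : ℝ → EE → Fin 2 → ℝ) (i k : Fin 2) : PP → ℝ := Pdd (Uc v k) i
def MA1 (u : ℝ → EE → Fin 2 → ℝ) (i k : Fin 2) : PP → ℝ := Pdd (U1 u k) i
def MB1 (u v : ℝ → EE → Fin 2 → ℝ) (i k : Fin 2) : PP → ℝ := Pdd (V1 u v k) i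
def MA2 (u : ℝ → EE → Fin 2 → ℝ) (i k : Fin 2) : PP → ℝ := Pdd (Dop u (U1 u k)) i
def MB2 (u v : ℝ → EE → Fin 2 → ℝ) (i k : Fin 2) : PP → ℝ := Pdd (V2 u v k) i

def S2fn (u v : ℝ → EE → Fin 2 → ℝ) : PP → ℝ := fun q => ∑ i, ∑ k, MA u i k q * MB u v k i q
def T2fn (u v : ℝ → EE → Fin 2 → ℝ) : PP → ℝ := fun q => ∑ i, ∑ k, MA u i k q * MB1 u v k i q
def Rfn (u v : ℝ → EE → Fin 2 → ℝ) : PP → ℝ := fun q => ∑ i, ∑ k, MB u v i k q * MA1 u k i q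

variable {u v}
variable (hu : ContDiff ℝ (⊤ : ℕ∞) (fun p : PP => u p.1 p.2))
  (hv : ContDiff ℝ (⊤ : ℕ∞) (fun p : PP => v p.1 p.2))

include hu

theorem smooth_U1 (k : Fin 2) : ContDiff ℝ (⊤ : ℕ∞) (U1 u k) := smooth_Dop hu (smooth_Uc hu k)
theorem smooth_MA (i k : Fin 2) : ContDiff ℝ (⊤ : ℕ∞) (MA u i k) := smooth_Pdd (smooth_Uc hu k) i
theorem smooth_MA1 (i k : Fin 2) : ContDiff ℝ (⊤ : ℕ∞) (MA1 u i k) := smooth_Pdd (smooth_U1 hu k) i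

include hv

theorem smooth_V1 (k : Fin 2) : ContDiff ℝ (⊤ : ℕ∞) (V1 u v k) := smooth_Dop hu (smooth_Uc hv k)
theorem smooth_V2 (k : Fin 2) : ContDiff ℝ (⊤ : ℕ∞) (V2 u v k) := smooth_Dop hu (smooth_V1 hu hv k)
theorem smooth_MB (i k : Fin 2) : ContDiff ℝ (⊤ : ℕ∞) (MB u v i k) := smooth_Pdd (smooth_Uc hv k) i
theorem smooth_MB1 (i k : Fin 2) : ContDiff ℝ (⊤ : ℕ∞) (MB1 u v i k) :=
  smooth_Pdd (smooth_V1 hu hv k) i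
theorem smooth_S2fn : ContDiff ℝ (⊤ : ℕ∞) (S2fn u v) :=
  ContDiff.sum fun i _ => ContDiff.sum fun k _ => (smooth_MA hu i k).mul (smooth_MB hu hv k i)
theorem smooth_T2fn : ContDiff ℝ (⊤ : ℕ∞) (T2fn u v) :=
  ContDiff.sum fun i _ => ContDiff.sum fun k _ =>
    (smooth_MA hu i k).mul (smooth_MB1 hu hv k i)
theorem smooth_Rfn : ContDiff ℝ (⊤ : ℕ∞) (Rfn u v) :=
  ContDiff.sum fun i _ => ContDiff.sum fun k _ =>
    (smooth_MB hu hv i k).mul (smooth_MA1 hu k i)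

omit hv

theorem dMA (i k : Fin 2) (p : PP) :
    Dop u (MA u i k) p = MA1 u i k p - ∑ m, MA u i m p * MA u m k p := by
  have h := comm_Uc u hu (smooth_Uc hu k) i p
  have e1 : Pdd (Dop u (Uc u k)) i p = MA1 u i k p := rfl
  have e2 : (∑ m, Pdd (Uc u m) i p * Pdd (Uc u k) m p) = ∑ m, MA u i m p * MA u m k p := rfl
  have e3 : Dop u (Pdd (Uc u k) i) p = Dop u (MA u i k) p := rfl
  rw [e1, e2, e3] at h
  linarith

theorem dMA1 (i k : Fin 2) (p : PP) :
    Dop u (MA1 u i k) p = MA2 u i k p - ∑ m, MA u i m p * MA1 u m k p := by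
  have h := comm_Uc u hu (smooth_U1 hu k) i p
  have e1 : Pdd (Dop u (U1 u k)) i p = MA2 u i k p := rfl
  have e2 : (∑ m, Pdd (Uc u m) i p * Pdd (U1 u k) m p)
      = ∑ m, MA u i m p * MA1 u m k p := rfl
  have e3 : Dop u (Pdd (U1 u k) i) p = Dop u (MA1 u i k) p := rfl
  rw [e1, e2, e3] at h
  linarith

include hv

theorem dMB (i k : Fin 2) (p : PP) :
    Dop u (MB u v i k) p = MB1 u v i k p - ∑ m, MA u i m p * MB u v m k p := by
  have h := comm_Uc u hu (smooth_Uc hv k) i p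
  have e1 : Pdd (Dop u (Uc v k)) i p = MB1 u v i k p := rfl
  have e2 : (∑ m, Pdd (Uc u m) i p * Pdd (Uc v k) m p)
      = ∑ m, MA u i m p * MB u v m k p := rfl
  have e3 : Dop u (Pdd (Uc v k) i) p = Dop u (MB u v i k) p := rfl
  rw [e1, e2, e3] at h
  linarith

theorem dMB1 (i k : Fin 2) (p : PP) :
    Dop u (MB1 u v i k) p = MB2 u v i k p - ∑ m, MA u i m p * MB1 u v m k p := by
  have h := comm_Uc u hu (smooth_V1 hu hv k) i p
  have e1 : Pdd (Dop u (V1 u v k)) i p = MB2 u v i k p := rfl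
  have e2 : (∑ m, Pdd (Uc u m) i p * Pdd (V1 u v k) m p)
      = ∑ m, MA u i m p * MB1 u v m k p := rfl
  have e3 : Dop u (Pdd (V1 u v k) i) p = Dop u (MB1 u v i k) p := rfl
  rw [e1, e2, e3] at h
  linarith

end Atoms

theorem Dop_zero (u : ℝ → EE → Fin 2 → ℝ) (p : PP) : Dop u (fun _ => (0:ℝ)) p = 0 := by
  have : Dop u (fun _ => (0:ℝ)) p = fderiv ℝ (fun _ : PP => (0:ℝ)) p ((1:ℝ), u p.1 p.2) := rfl
  rw [this, fderiv_fun_const]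
  simp

section Main

variable {u v : ℝ → EE → Fin 2 → ℝ}
variable (hu : ContDiff ℝ (⊤ : ℕ∞) (fun p : PP => u p.1 p.2))
  (hv : ContDiff ℝ (⊤ : ℕ∞) (fun p : PP => v p.1 p.2))

include hv in
theorem div_translate (hdiv : ∀ t x, ∑ i, pd (fun y => v t y i) i x = 0) :
    ∀ p : PP, ∑ i, Pdd (Uc v i) i p = 0 := by
  rintro ⟨t, x⟩
  rw [← hdiv t x]
  exact Finset.sum_congr rfl fun i _ =>
    (pd_eq_Pdd t x ((smooth_Uc hv i).differentiable (by simp) (t, x)) i).symm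

include hu hv

theorem divV1 (hvdiv : ∀ t x, ∑ i, pd (fun y => v t y i) i x = 0) (p : PP) :
    ∑ i, Pdd (V1 u v i) i p = S2fn u v p := by
  have h := div_Dop u hu (fun i => Uc v i) (fun i => smooth_Uc hv i) p
  have hz : (fun q => ∑ i, Pdd (Uc v i) i q) = fun _ => (0:ℝ) :=
    funext (div_translate hv hvdiv)
  rw [hz, Dop_zero] at h
  have e : (∑ i, Pdd (Dop u (Uc v i)) i p) = ∑ i, Pdd (V1 u v i) i p := rfl
  rw [e] at h
  rw [h]
  simp [S2fn, MA, MB]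

omit hv in
theorem divU1 (hudiv : ∀ t x, ∑ i, pd (fun y => u t y i) i x = 0) (p : PP) :
    ∑ i, Pdd (U1 u i) i p = ∑ i, ∑ k, MA u i k p * MA u k i p := by
  have h := div_Dop u hu (fun i => Uc u i) (fun i => smooth_Uc hu i) p
  have hz : (fun q => ∑ i, Pdd (Uc u i) i q) = fun _ => (0:ℝ) :=
    funext (div_translate hu hudiv)
  rw [hz, Dop_zero] at h
  have e : (∑ i, Pdd (Dop u (Uc u i)) i p) = ∑ i, Pdd (U1 u i) i p := rfl
  rw [e] at h
  rw [h]
  simp [MA]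

theorem divV2 (hvdiv : ∀ t x, ∑ i, pd (fun y => v t y i) i x = 0) (p : PP) :
    ∑ i, Pdd (V2 u v i) i p = Dop u (S2fn u v) p + T2fn u v p := by
  have h := div_Dop u hu (V1 u v) (fun i => smooth_V1 hu hv i) p
  have hz : (fun q => ∑ i, Pdd (V1 u v i) i q) = S2fn u v :=
    funext (divV1 hu hv hvdiv)
  rw [hz] at h
  have e : (∑ i, Pdd (Dop u (V1 u v i)) i p) = ∑ i, Pdd (V2 u v i) i p := rfl
  rw [e] at h
  rw [h]
  rfl

theorem divV3 (hvdiv : ∀ t x, ∑ i, pd (fun y => v t y i) i x = 0) (p : PP) :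
    ∑ i, Pdd (V3 u v i) i p
      = Dop u (Dop u (S2fn u v)) p + Dop u (T2fn u v) p
        + ∑ i, ∑ k, MA u i k p * MB2 u v k i p := by
  have h := div_Dop u hu (V2 u v) (fun i => smooth_V2 hu hv i) p
  have hz : (fun q => ∑ i, Pdd (V2 u v i) i q)
      = fun q => Dop u (S2fn u v) q + T2fn u v q :=
    funext (divV2 hu hv hvdiv)
  rw [hz] at h
  rw [Dop_add u p (smooth_Dop hu (smooth_S2fn hu hv)) (smooth_T2fn hu hv)] at h
  have e : (∑ i, Pdd (Dop u (V2 u v i)) i p) = ∑ i, Pdd (V3 u v i) i p := rfl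
  rw [e] at h
  rw [h]
  rfl

end Main

section Main2

variable {u v : ℝ → EE → Fin 2 → ℝ}
variable (hu : ContDiff ℝ (⊤ : ℕ∞) (fun p : PP => u p.1 p.2))
  (hv : ContDiff ℝ (⊤ : ℕ∞) (fun p : PP => v p.1 p.2))

include hu hv

theorem DopS2 :
    Dop u (S2fn u v) = fun q =>
      (∑ i, ∑ k, MA1 u i k q * MB u v k i q)
      + (∑ i, ∑ k, MA u i k q * MB1 u v k i q)
      - 2 * ∑ i, ∑ k, ∑ m, MA u i k q * MA u k m q * MB u v m i q := by
  funext p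
  have h0 : Dop u (S2fn u v) p
      = ∑ i, ∑ k, (Dop u (MA u i k) p * MB u v k i p
          + MA u i k p * Dop u (MB u v k i) p) :=
    Dop_tr u p (MA u) (MB u v) (smooth_MA hu) (smooth_MB hu hv)
  rw [h0]
  simp only [dMA hu, dMB hu hv]
  simp only [Fin.sum_univ_two]
  ring

theorem DopT2 (p : PP) :
    Dop u (T2fn u v) p
      = ∑ i, ∑ k, ((MA1 u i k p - ∑ m, MA u i m p * MA u m k p) * MB1 u v k i p
          + MA u i k p * (MB2 u v k i p - ∑ m, MA u k m p * MB1 u v m i p)) := by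
  have h0 : Dop u (T2fn u v) p
      = ∑ i, ∑ k, (Dop u (MA u i k) p * MB1 u v k i p
          + MA u i k p * Dop u (MB1 u v k i) p) :=
    Dop_tr u p (MA u) (MB1 u v) (smooth_MA hu) (smooth_MB1 hu hv)
  rw [h0]
  simp only [dMA hu, dMB1 hu hv]

theorem DopR (p : PP) :
    Dop u (Rfn u v) p
      = ∑ i, ∑ k, ((MB1 u v i k p - ∑ m, MA u i m p * MB u v m k p) * MA1 u k i p
          + MB u v i k p * (MA2 u k i p - ∑ m, MA u k m p * MA1 u m i p)) := by
  have h0 : Dop u (Rfn u v) p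
      = ∑ i, ∑ k, (Dop u (MB u v i k) p * MA1 u k i p
          + MB u v i k p * Dop u (MA1 u k i) p) :=
    Dop_tr u p (MB u v) (MA1 u) (smooth_MB hu hv) (smooth_MA1 hu)
  rw [h0]
  simp only [dMB hu hv, dMA1 hu]

theorem DDS2 (p : PP) :
    Dop u (Dop u (S2fn u v)) p
      = (∑ i, ∑ k, ((MA2 u i k p - ∑ m, MA u i m p * MA1 u m k p) * MB u v k i p
          + MA1 u i k p * (MB1 u v k i p - ∑ m, MA u k m p * MB u v m i p)))
        + (∑ i, ∑ k, ((MA1 u i k p - ∑ m, MA u i m p * MA u m k p) * MB1 u v k i p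
          + MA u i k p * (MB2 u v k i p - ∑ m, MA u k m p * MB1 u v m i p)))
        - 2 * ∑ i, ∑ k, ∑ m,
            ((MA1 u i k p - ∑ n, MA u i n p * MA u n k p) * MA u k m p * MB u v m i p
            + MA u i k p * (MA1 u k m p - ∑ n, MA u k n p * MA u n m p) * MB u v m i p
            + MA u i k p * MA u k m p
                * (MB1 u v m i p - ∑ n, MA u m n p * MB u v n i p)) := by
  rw [DopS2 hu hv]
  have hA : ContDiff ℝ (⊤ : ℕ∞) (fun q : PP => ∑ i, ∑ k, MA1 u i k q * MB u v k i q) :=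
    ContDiff.sum fun i _ => ContDiff.sum fun k _ =>
      (smooth_MA1 hu i k).mul (smooth_MB hu hv k i)
  have hB : ContDiff ℝ (⊤ : ℕ∞) (fun q : PP => ∑ i, ∑ k, MA u i k q * MB1 u v k i q) :=
    ContDiff.sum fun i _ => ContDiff.sum fun k _ =>
      (smooth_MA hu i k).mul (smooth_MB1 hu hv k i)
  have hC : ContDiff ℝ (⊤ : ℕ∞)
      (fun q : PP => ∑ i, ∑ k, ∑ m, MA u i k q * MA u k m q * MB u v m i q) :=
    ContDiff.sum fun i _ => ContDiff.sum fun k _ => ContDiff.sum fun m _ =>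
      ((smooth_MA hu i k).mul (smooth_MA hu k m)).mul (smooth_MB hu hv m i)
  rw [Dop_sub u p (hA.add hB) (contDiff_const.mul hC), Dop_add u p hA hB,
    Dop_const_mul u p 2 hC,
    Dop_tr u p (MA1 u) (MB u v) (smooth_MA1 hu) (smooth_MB hu hv),
    Dop_tr u p (MA u) (MB1 u v) (smooth_MA hu) (smooth_MB1 hu hv),
    Dop_tr3 u p (MA u) (MA u) (MB u v) (smooth_MA hu) (smooth_MA hu) (smooth_MB hu hv)]
  simp only [dMA hu, dMB hu hv, dMA1 hu, dMB1 hu hv]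

end Main2

theorem final_algebra (a b a1 b1 a2 b2 : Fin 2 → Fin 2 → ℝ)
    (c1 : a 0 0 + a 1 1 = 0) (c2 : b 0 0 + b 1 1 = 0)
    (c3 : a1 0 0 + a1 1 1 = ∑ i, ∑ k, a i k * a k i)
    (c4 : b1 0 0 + b1 1 1 = ∑ i, ∑ k, a i k * b k i) :
    ((∑ i, ∑ k, ((a2 i k - ∑ m, a i m * a1 m k) * b k i
          + a1 i k * (b1 k i - ∑ m, a k m * b m i)))
        + (∑ i, ∑ k, ((a1 i k - ∑ m, a i m * a m k) * b1 k i
          + a i k * (b2 k i - ∑ m, a k m * b1 m i)))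
        - 2 * ∑ i, ∑ k, ∑ m,
            ((a1 i k - ∑ n, a i n * a n k) * a k m * b m i
            + a i k * (a1 k m - ∑ n, a k n * a n m) * b m i
            + a i k * a k m * (b1 m i - ∑ n, a m n * b n i)))
      + (∑ i, ∑ k, ((a1 i k - ∑ m, a i m * a m k) * b1 k i
          + a i k * (b2 k i - ∑ m, a k m * b1 m i)))
      + (∑ i, ∑ k, a i k * b2 k i)
    = (3 * (∑ i, ∑ k, ((a1 i k - ∑ m, a i m * a m k) * b1 k i
          + a i k * (b2 k i - ∑ m, a k m * b1 m i)))
        + (∑ i, ∑ k, ((b1 i k - ∑ m, a i m * b m k) * a1 k i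
          + b i k * (a2 k i - ∑ m, a k m * a1 m i))))
      - (∑ i, ∑ k, a1 i k * b1 k i)
      + (∑ i, a1 i i) * (∑ i, b1 i i) := by
  simp only [Fin.sum_univ_two] at c3 c4 ⊢
  have ha : a 1 1 = -(a 0 0) := by linarith
  have hb : b 1 1 = -(b 0 0) := by linarith
  simp only [ha, hb] at c3 c4 ⊢
  have ha1 : a1 1 1 = a 0 0 * a 0 0 + a 0 1 * a 1 0 + a 1 0 * a 0 1
      + a 0 0 * a 0 0 - a1 0 0 := by linear_combination c3
  have hb1 : b1 1 1 = a 0 0 * b 0 0 + a 0 1 * b 1 0 + a 1 0 * b 0 1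
      + a 0 0 * b 0 0 - b1 0 0 := by linear_combination c4
  simp only [ha1, hb1]
  ring

end

/-- For smooth divergence-free `u, v` on `ℝ × ℝ²`, with `v̇ = ∂ₜv + (u·∇)v`,
`u̇ = ∂ₜu + (u·∇)u`, `v̈ = ∂ₜv̇ + (u·∇)v̇`, `v⃛ = ∂ₜv̈ + (u·∇)v̈`:
`div v⃛ = (∂ₜ + u·∇)[3 ∑ᵢₖ ∂ᵢu_k ∂_k v̇ᵢ + ∑ᵢₖ ∂ᵢv_k ∂_k u̇ᵢ]
          − ∑ᵢₖ ∂ᵢu̇_k ∂_k v̇ᵢ + (div u̇)(div v̇)`. -/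
theorem div_third_material_derivative
    (u v : ℝ → (Fin 2 → ℝ) → Fin 2 → ℝ)
    (hu : ContDiff ℝ (⊤ : ℕ∞) (fun p : ℝ × (Fin 2 → ℝ) => u p.1 p.2))
    (hv : ContDiff ℝ (⊤ : ℕ∞) (fun p : ℝ × (Fin 2 → ℝ) => v p.1 p.2))
    (hudiv : ∀ t x, ∑ i, pd (fun y => u t y i) i x = 0)
    (hvdiv : ∀ t x, ∑ i, pd (fun y => v t y i) i x = 0) :
    ∀ t x, ∑ i, pd (fun y => matD u (matD u (matD u v)) t y i) i x
      = matDs u (fun s y =>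
            3 * (∑ i, ∑ k, pd (fun z => u s z k) i y * pd (fun z => matD u v s z i) k y)
            + ∑ i, ∑ k, pd (fun z => v s z k) i y * pd (fun z => matD u u s z i) k y) t x
        - (∑ i, ∑ k, pd (fun y => matD u u t y k) i x * pd (fun y => matD u v t y i) k x)
        + (∑ i, pd (fun y => matD u u t y i) i x)
          * (∑ i, pd (fun y => matD u v t y i) i x) := by
  intro t x
  -- function-level identifications
  have hU1fun : ∀ k, (fun q : PP => matD u u q.1 q.2 k) = U1 u k := by
    intro k; funext q
    exact matD_eq_Dop u (w := u) k (smooth_Uc hu k) q.1 q.2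
  have hW1 : ∀ i, (fun q : PP => matD u v q.1 q.2 i) = V1 u v i := by
    intro i; funext q
    exact matD_eq_Dop u (w := v) i (smooth_Uc hv i) q.1 q.2
  have hsW1 : ∀ i, ContDiff ℝ (⊤ : ℕ∞) (fun q : PP => matD u v q.1 q.2 i) := by
    intro i; rw [hW1 i]; exact smooth_V1 hu hv i
  have hW2 : ∀ i, (fun q : PP => matD u (matD u v) q.1 q.2 i) = V2 u v i := by
    intro i; funext q
    have h := matD_eq_Dop u (w := matD u v) i (hsW1 i) q.1 q.2
    rw [h, hW1 i]
    rfl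
  have hsW2 : ∀ i, ContDiff ℝ (⊤ : ℕ∞) (fun q : PP => matD u (matD u v) q.1 q.2 i) := by
    intro i; rw [hW2 i]; exact smooth_V2 hu hv i
  have hW3 : ∀ i, (fun q : PP => matD u (matD u (matD u v)) q.1 q.2 i) = V3 u v i := by
    intro i; funext q
    have h := matD_eq_Dop u (w := matD u (matD u v)) i (hsW2 i) q.1 q.2
    rw [h, hW2 i]
    rfl
  -- pointwise pd translations
  have hL : ∀ i, pd (fun y => matD u (matD u (matD u v)) t y i) i x
      = Pdd (V3 u v i) i (t, x) := by
    intro i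
    have hfun : (fun y => matD u (matD u (matD u v)) t y i)
        = fun y => V3 u v i (t, y) := funext fun y => congrFun (hW3 i) (t, y)
    rw [hfun]
    exact pd_eq_Pdd t x
      ((smooth_Dop hu (smooth_V2 hu hv i)).differentiable (by simp) (t, x)) i
  have hR1 : ∀ i k, pd (fun y => matD u u t y k) i x = MA1 u i k (t, x) := by
    intro i k
    have hfun : (fun y => matD u u t y k) = fun y => U1 u k (t, y) :=
      funext fun y => congrFun (hU1fun k) (t, y)
    rw [hfun]
    exact pd_eq_Pdd t x ((smooth_U1 hu k).differentiable (by simp) (t, x)) i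
  have hR2 : ∀ i k, pd (fun y => matD u v t y i) k x = MB1 u v k i (t, x) := by
    intro i k
    have hfun : (fun y => matD u v t y i) = fun y => V1 u v i (t, y) :=
      funext fun y => congrFun (hW1 i) (t, y)
    rw [hfun]
    exact pd_eq_Pdd t x ((smooth_V1 hu hv i).differentiable (by simp) (t, x)) k
  -- matDs translation
  have hsmG : ContDiff ℝ (⊤ : ℕ∞) (fun q : PP => 3 * T2fn u v q + Rfn u v q) :=
    (contDiff_const.mul (smooth_T2fn hu hv)).add (smooth_Rfn hu hv)
  have hGfun : (fun s y =>
        3 * (∑ i, ∑ k, pd (fun z => u s z k) i y * pd (fun z => matD u v s z i) k y)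
        + ∑ i, ∑ k, pd (fun z => v s z k) i y * pd (fun z => matD u u s z i) k y)
      = fun s y => (fun q : PP => 3 * T2fn u v q + Rfn u v q) (s, y) := by
    funext s y
    have h1 : ∀ (i k : Fin 2), pd (fun z => u s z k) i y = MA u i k (s, y) := fun i k =>
      pd_eq_Pdd s y ((smooth_Uc hu k).differentiable (by simp) (s, y)) i
    have h2 : ∀ (i k : Fin 2), pd (fun z => matD u v s z i) k y = MB1 u v k i (s, y) := by
      intro i k
      have hfun : (fun z => matD u v s z i) = fun z => V1 u v i (s, z) :=
        funext fun z => congrFun (hW1 i) (s, z)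
      rw [hfun]
      exact pd_eq_Pdd s y ((smooth_V1 hu hv i).differentiable (by simp) (s, y)) k
    have h3 : ∀ (i k : Fin 2), pd (fun z => v s z k) i y = MB u v i k (s, y) := fun i k =>
      pd_eq_Pdd s y ((smooth_Uc hv k).differentiable (by simp) (s, y)) i
    have h4 : ∀ (i k : Fin 2), pd (fun z => matD u u s z i) k y = MA1 u k i (s, y) := by
      intro i k
      have hfun : (fun z => matD u u s z i) = fun z => U1 u i (s, z) :=
        funext fun z => congrFun (hU1fun i) (s, z)
      rw [hfun]
      exact pd_eq_Pdd s y ((smooth_U1 hu i).differentiable (by simp) (s, y)) k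
    simp only [h1, h2, h3, h4]
    rfl
  have hmatDs : matDs u (fun s y =>
        3 * (∑ i, ∑ k, pd (fun z => u s z k) i y * pd (fun z => matD u v s z i) k y)
        + ∑ i, ∑ k, pd (fun z => v s z k) i y * pd (fun z => matD u u s z i) k y) t x
      = Dop u (fun q : PP => 3 * T2fn u v q + Rfn u v q) (t, x) := by
    rw [hGfun]
    exact matDs_eq_Dop u hsmG t x
  have hsplit : Dop u (fun q : PP => 3 * T2fn u v q + Rfn u v q) (t, x)
      = 3 * Dop u (T2fn u v) (t, x) + Dop u (Rfn u v) (t, x) := by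
    rw [Dop_add u (t, x) (contDiff_const.mul (smooth_T2fn hu hv)) (smooth_Rfn hu hv),
      Dop_const_mul u (t, x) 3 (smooth_T2fn hu hv)]
  -- constraints
  have c1 : MA u 0 0 (t, x) + MA u 1 1 (t, x) = 0 := by
    have h := div_translate hu hudiv (t, x)
    rw [Fin.sum_univ_two] at h
    exact h
  have c2 : MB u v 0 0 (t, x) + MB u v 1 1 (t, x) = 0 := by
    have h := div_translate hv hvdiv (t, x)
    rw [Fin.sum_univ_two] at h
    exact h
  have c3 : MA1 u 0 0 (t, x) + MA1 u 1 1 (t, x)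
      = ∑ i, ∑ k, MA u i k (t, x) * MA u k i (t, x) := by
    have h := divU1 hu hudiv (t, x)
    rw [Fin.sum_univ_two] at h
    exact h
  have c4 : MB1 u v 0 0 (t, x) + MB1 u v 1 1 (t, x)
      = ∑ i, ∑ k, MA u i k (t, x) * MB u v k i (t, x) := by
    have h := divV1 hu hv hvdiv (t, x)
    rw [Fin.sum_univ_two] at h
    exact h
  simp only [hL, hR1, hR2]
  rw [divV3 hu hv hvdiv (t, x), hmatDs, hsplit, DDS2 hu hv (t, x), DopT2 hu hv (t, x),
    DopR hu hv (t, x)]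
  exact final_algebra (fun i k => MA u i k (t, x)) (fun i k => MB u v i k (t, x))
    (fun i k => MA1 u i k (t, x)) (fun i k => MB1 u v i k (t, x))
    (fun i k => MA2 u i k (t, x)) (fun i k => MB2 u v i k (t, x)) c1 c2 c3 c4
end

section
/- There exists a constant C > 0 with the following property: for every continuously differentiable function f : ℝ² → ℝ whose gradient is square-integrable, i.e. ∫_{ℝ²} ‖∇f(x)‖² dx < ∞, and for every ball B = B(x₀, r) ⊂ ℝ² (x₀ ∈ ℝ², r > 0), one has (1/|B|) ∫_B | f(x) − (1/|B|) ∫_B f(y) dy | dx ≤ C ( ∫_{ℝ²} ‖∇f(y)‖² dy )^{1/2}. In other words, ‖f‖_{BMO(ℝ²)} ≤ C ‖∇f‖_{L²(ℝ²)}. -/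
open MeasureTheory

local notation "𝔼" => EuclideanSpace ℝ (Fin 2)

noncomputable section BMOAux

private lemma bmo_vol_ball (x : 𝔼) {r : ℝ} (hr : 0 ≤ r) :
    volume (Metric.ball x r) = ENNReal.ofReal (Real.pi * r ^ 2) := by
  rw [EuclideanSpace.volume_ball]
  simp only [Fintype.card_fin]
  rw [show ((2:ℕ):ℝ)/2 + 1 = 2 by norm_num, Real.Gamma_two, div_one,
    Real.sq_sqrt Real.pi_pos.le, ← ENNReal.ofReal_pow hr, ← ENNReal.ofReal_mul (by positivity),
    mul_comm]

private lemma bmo_cs_ball {g : 𝔼 → ℝ} (hg : Continuous g)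
    (z : 𝔼) {ρ : ℝ} (hρ : 0 ≤ ρ) :
    ∫⁻ x in Metric.ball z ρ, ENNReal.ofReal (g x) ≤
      (∫⁻ x, ENNReal.ofReal (g x) ^ (2:ℝ)) ^ ((1:ℝ)/2) *
        ENNReal.ofReal (Real.sqrt Real.pi * ρ) := by
  have hmeas : AEMeasurable (fun x => ENNReal.ofReal (g x)) (volume.restrict (Metric.ball z ρ)) :=
    (ENNReal.measurable_ofReal.comp hg.measurable).aemeasurable
  have h := ENNReal.lintegral_mul_le_Lp_mul_Lq (volume.restrict (Metric.ball z ρ))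
    (Real.HolderConjugate.two_two : Real.HolderConjugate 2 2)
    hmeas (aemeasurable_const (b := (1:ENNReal)))
  simp only [Pi.mul_apply, mul_one, ENNReal.one_rpow, lintegral_one,
    Measure.restrict_apply MeasurableSet.univ, Set.univ_inter] at h
  refine h.trans ?_
  gcongr
  · exact Measure.restrict_le_self
  · rw [bmo_vol_ball z hρ, ENNReal.ofReal_rpow_of_nonneg (by positivity) (by norm_num)]
    apply le_of_eq
    congr 1
    rw [← Real.sqrt_eq_rpow, Real.sqrt_mul Real.pi_pos.le, Real.sqrt_sq hρ]

/-- L² (Cauchy–Schwarz) bound of the integral of a nonnegative function over a ball. -/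
private lemma bmo_ball_L2 {g : 𝔼 → ℝ} (hg : Continuous g) {I : ℝ} (hI0 : 0 ≤ I)
    (hI : ∫⁻ x, ENNReal.ofReal (g x) ^ (2:ℝ) = ENNReal.ofReal I)
    (z : 𝔼) {ρ : ℝ} (hρ : 0 ≤ ρ) :
    ∫⁻ x in Metric.ball z ρ, ENNReal.ofReal (g x) ≤
      ENNReal.ofReal (Real.sqrt I * (Real.sqrt Real.pi * ρ)) := by
  refine (bmo_cs_ball hg z hρ).trans ?_
  rw [hI, ENNReal.ofReal_rpow_of_nonneg hI0 (by norm_num), ← ENNReal.ofReal_mul (by positivity),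
    ← Real.sqrt_eq_rpow]

/-- Change of variables under the homothety `x ↦ y + t • (x - y)`. -/
private lemma bmo_scaled {g : 𝔼 → ℝ} (hg : Continuous g) {t : ℝ} (ht0 : 0 < t)
    (y x₀ : 𝔼) {r : ℝ} :
    ∫⁻ x in Metric.ball x₀ r, ENNReal.ofReal (g (y + t • (x - y))) =
      ENNReal.ofReal ((t^2)⁻¹) *
        ∫⁻ x in Metric.ball (y + t • (x₀ - y)) (t*r), ENNReal.ofReal (g x) := by
  set φ : 𝔼 → 𝔼 := fun x => y + t • (x - y) with hφ
  set G : 𝔼 → ENNReal := fun x => ENNReal.ofReal (g x) with hG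
  set S : Set 𝔼 := Metric.ball (y + t • (x₀ - y)) (t*r) with hS
  have hGm : Measurable G := ENNReal.measurable_ofReal.comp hg.measurable
  have hpre : Metric.ball x₀ r = φ ⁻¹' S := by
    ext x
    simp only [Set.mem_preimage, hS, hφ, Metric.mem_ball, dist_eq_norm]
    have : y + t • (x - y) - (y + t • (x₀ - y)) = t • (x - x₀) := by module
    rw [this, norm_smul, Real.norm_eq_abs, abs_of_pos ht0, mul_lt_mul_iff_right₀ ht0]
  have hφm : Measurable φ :=
    (continuous_const.add ((continuous_id.sub continuous_const).const_smul t)).measurable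
  have hmap : Measure.map φ volume = ENNReal.ofReal ((t^2)⁻¹) • (volume : Measure 𝔼) := by
    have : φ = (fun z : 𝔼 => (y - t • y) + z) ∘ (fun x : 𝔼 => t • x) := by
      funext x; simp only [Function.comp_apply, hφ]; module
    rw [this, ← Measure.map_map (measurable_const_add _) (measurable_const_smul _),
      Measure.map_addHaar_smul volume ht0.ne', Measure.map_smul,
      Measure.IsAddLeftInvariant.map_add_left_eq_self (μ := (volume : Measure 𝔼)) (y - t • y)]
    congr 2
    rw [finrank_euclideanSpace, Fintype.card_fin, abs_of_nonneg (by positivity)]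
  calc ∫⁻ x in Metric.ball x₀ r, G (φ x)
      = ∫⁻ x, (φ ⁻¹' S).indicator (fun x => G (φ x)) x := by
        rw [← lintegral_indicator (hpre ▸ (hφm measurableSet_ball)), hpre]
    _ = ∫⁻ x, S.indicator G (φ x) := by
        apply lintegral_congr
        intro x
        exact Set.indicator_comp_right φ (s := S) (g := G)
    _ = ∫⁻ x, S.indicator G x ∂(Measure.map φ volume) := by
        rw [lintegral_map (hGm.indicator measurableSet_ball) hφm]
    _ = ENNReal.ofReal ((t^2)⁻¹) * ∫⁻ x in S, G x := by
        rw [hmap, lintegral_smul_measure, lintegral_indicator measurableSet_ball, smul_eq_mul]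

/-- Combined homothety + L² bound, for homothety ratio `t ∈ [1/2, 1]`. -/
private lemma bmo_homothety_bound {g : 𝔼 → ℝ} (hg : Continuous g) {I : ℝ} (hI0 : 0 ≤ I)
    (hI : ∫⁻ x, ENNReal.ofReal (g x) ^ (2:ℝ) = ENNReal.ofReal I)
    {t : ℝ} (ht2 : 1/2 ≤ t) (ht1 : t ≤ 1) (y x₀ : 𝔼) {r : ℝ} (hr : 0 ≤ r) :
    ∫⁻ x in Metric.ball x₀ r, ENNReal.ofReal (g (y + t • (x - y))) ≤
      ENNReal.ofReal (4 * (Real.sqrt I * (Real.sqrt Real.pi * r))) := by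
  have ht0 : 0 < t := lt_of_lt_of_le (by norm_num) ht2
  rw [bmo_scaled hg ht0 y x₀]
  calc ENNReal.ofReal ((t^2)⁻¹) *
        ∫⁻ x in Metric.ball (y + t • (x₀ - y)) (t*r), ENNReal.ofReal (g x)
      ≤ ENNReal.ofReal ((t^2)⁻¹) *
          ENNReal.ofReal (Real.sqrt I * (Real.sqrt Real.pi * (t*r))) := by
        gcongr
        exact bmo_ball_L2 hg hI0 hI _ (by positivity)
    _ = ENNReal.ofReal ((t^2)⁻¹ * (Real.sqrt I * (Real.sqrt Real.pi * (t*r)))) := by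
        rw [← ENNReal.ofReal_mul (by positivity)]
    _ ≤ ENNReal.ofReal (4 * (Real.sqrt I * (Real.sqrt Real.pi * r))) := by
        apply ENNReal.ofReal_le_ofReal
        have h4 : (t^2)⁻¹ * t ≤ 4 := by
          rw [sq]
          rw [mul_inv]
          rw [mul_assoc, inv_mul_cancel₀ ht0.ne']
          rw [mul_one]
          calc t⁻¹ ≤ (1/2)⁻¹ := by
                apply inv_anti₀ (by norm_num) ht2
            _ ≤ 4 := by norm_num
        have hnn : 0 ≤ Real.sqrt I * (Real.sqrt Real.pi * r) := by positivity
        calc (t^2)⁻¹ * (Real.sqrt I * (Real.sqrt Real.pi * (t*r)))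
            = ((t^2)⁻¹ * t) * (Real.sqrt I * (Real.sqrt Real.pi * r)) := by ring
          _ ≤ 4 * (Real.sqrt I * (Real.sqrt Real.pi * r)) := by
              apply mul_le_mul_of_nonneg_right h4 hnn

/-- FTC along the segment from `y` to `x`. -/
private lemma bmo_ftc {f : 𝔼 → ℝ} (hf : ContDiff ℝ 1 f) (x y : 𝔼) :
    |f x - f y| ≤ ‖x - y‖ * ∫ t in (0:ℝ)..1, ‖fderiv ℝ f (y + t • (x - y))‖ := by
  set γ : ℝ → 𝔼 := fun s => y + s • (x - y) with hγdef
  have hγc : Continuous γ := continuous_const.add (continuous_id.smul continuous_const)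
  have hgc : Continuous fun t : ℝ => fderiv ℝ f (γ t) :=
    (hf.continuous_fderiv one_ne_zero).comp hγc
  have hγ : ∀ t : ℝ, HasDerivAt γ (x - y) t := by
    intro t
    have h1 : HasDerivAt (fun s : ℝ => s • (x - y)) ((1:ℝ) • (x - y)) t :=
      (hasDerivAt_id t).smul_const (x - y)
    rw [one_smul] at h1
    exact h1.const_add y
  have hF : ∀ t ∈ Set.uIcc (0:ℝ) 1,
      HasDerivAt (fun s => f (γ s)) (fderiv ℝ f (γ t) (x - y)) t := by
    intro t _
    exact ((hf.differentiable one_ne_zero (γ t)).hasFDerivAt).comp_hasDerivAt t (hγ t)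
  have hint : IntervalIntegrable (fun t => fderiv ℝ f (γ t) (x - y)) volume 0 1 :=
    (hgc.clm_apply continuous_const).intervalIntegrable 0 1
  have heq : ∫ t in (0:ℝ)..1, fderiv ℝ f (γ t) (x - y) = f x - f y := by
    rw [intervalIntegral.integral_eq_sub_of_hasDerivAt hF hint]
    simp [hγdef]
  calc |f x - f y| = ‖∫ t in (0:ℝ)..1, fderiv ℝ f (γ t) (x - y)‖ := by
        rw [heq]; exact (Real.norm_eq_abs _).symm
    _ ≤ ∫ t in (0:ℝ)..1, ‖fderiv ℝ f (γ t) (x - y)‖ :=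
        intervalIntegral.norm_integral_le_integral_norm zero_le_one
    _ ≤ ∫ t in (0:ℝ)..1, ‖fderiv ℝ f (γ t)‖ * ‖x - y‖ := by
        apply intervalIntegral.integral_mono_on zero_le_one hint.norm
        · exact ((hgc.norm.mul continuous_const)).intervalIntegrable 0 1
        · intro t _
          exact (fderiv ℝ f (γ t)).le_opNorm _
    _ = ‖x - y‖ * ∫ t in (0:ℝ)..1, ‖fderiv ℝ f (γ t)‖ := by
        simp_rw [mul_comm ‖fderiv ℝ f (γ _)‖ ‖x - y‖]
        rw [intervalIntegral.integral_const_mul]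

end BMOAux

/-- Embedding `Ḣ¹(ℝ²) ↪ BMO(ℝ²)` for `C¹` functions: there is a universal `C > 0`
such that for every `C¹` function `f : ℝ² → ℝ` with square-integrable gradient and
every ball `B(x₀, r)`, the mean oscillation of `f` over the ball is at most
`C ‖∇f‖_{L²(ℝ²)}`. -/
theorem bmo_le_sqrt_dirichlet :
    ∃ C > 0, ∀ f : EuclideanSpace ℝ (Fin 2) → ℝ,
      ContDiff ℝ 1 f →
      Integrable (fun x => ‖fderiv ℝ f x‖ ^ 2) →
      ∀ (x₀ : EuclideanSpace ℝ (Fin 2)) (r : ℝ), 0 < r →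
        (volume (Metric.ball x₀ r)).toReal⁻¹ *
            ∫ x in Metric.ball x₀ r,
              |f x - (volume (Metric.ball x₀ r)).toReal⁻¹ * ∫ y in Metric.ball x₀ r, f y|
          ≤ C * Real.sqrt (∫ y, ‖fderiv ℝ f y‖ ^ 2) := by
  refine ⟨8, by norm_num, ?_⟩
  intro f hf hfi x₀ r hr
  set g : 𝔼 → ℝ := fun x => ‖fderiv ℝ f x‖ with hgdef
  have hg : Continuous g := (hf.continuous_fderiv one_ne_zero).norm
  have hg0 : ∀ x, 0 ≤ g x := fun x => norm_nonneg _
  set I : ℝ := ∫ y, ‖fderiv ℝ f y‖ ^ 2 with hIdef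
  have hI0 : 0 ≤ I := integral_nonneg fun x => by positivity
  set G : 𝔼 → ENNReal := fun x => ENNReal.ofReal (g x) with hGdef
  have hGm : Measurable G := ENNReal.measurable_ofReal.comp hg.measurable
  have hI : ∫⁻ x, ENNReal.ofReal (g x) ^ (2:ℝ) = ENNReal.ofReal I := by
    rw [hIdef, ofReal_integral_eq_lintegral_ofReal hfi
      (Filter.Eventually.of_forall fun x => by positivity)]
    apply lintegral_congr
    intro x
    rw [ENNReal.ofReal_rpow_of_nonneg (hg0 x) (by norm_num)]
    congr 1
    rw [show (2:ℝ) = ((2:ℕ):ℝ) by norm_num, Real.rpow_natCast]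
  set S : ℝ := Real.sqrt I with hSdef
  have hS0 : 0 ≤ S := Real.sqrt_nonneg _
  set B : Set 𝔼 := Metric.ball x₀ r with hB
  have hVval : volume B = ENNReal.ofReal (Real.pi * r^2) := bmo_vol_ball x₀ hr.le
  have hVr : (volume B).toReal = Real.pi * r^2 := by
    rw [hVval, ENNReal.toReal_ofReal (by positivity)]
  have hVrpos : 0 < (volume B).toReal := by rw [hVr]; positivity
  set K4 : ENNReal := ENNReal.ofReal (4 * (S * (Real.sqrt Real.pi * r))) with hK4
  -- bound for the inner double integral, for each time slice
  have hDB : ∀ t ∈ Set.Ioc (0:ℝ) 1,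
      (∫⁻ x in B, ∫⁻ y in B, G (y + t • (x - y))) ≤ K4 * volume B := by
    intro t ht
    obtain ⟨ht0, ht1⟩ := ht
    rcases le_total t (1/2) with h | h
    · have hs2 : 1/2 ≤ 1 - t := by linarith
      have hs1 : 1 - t ≤ 1 := by linarith
      have hinner : ∀ x, (∫⁻ y in B, G (y + t • (x - y))) ≤ K4 := by
        intro x
        have hrw : ∀ y : 𝔼, y + t • (x - y) = x + (1-t) • (y - x) := by intro y; module
        calc (∫⁻ y in B, G (y + t • (x - y)))
            = ∫⁻ y in B, G (x + (1-t) • (y - x)) := by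
              apply lintegral_congr; intro y; rw [hrw y]
          _ ≤ K4 := bmo_homothety_bound hg hI0 hI hs2 hs1 x x₀ hr.le
      calc (∫⁻ x in B, ∫⁻ y in B, G (y + t • (x - y)))
          ≤ ∫⁻ _x in B, K4 := lintegral_mono fun x => hinner x
        _ = K4 * volume B := by rw [setLIntegral_const]
    · have hswap : (∫⁻ x in B, ∫⁻ y in B, G (y + t • (x - y)))
          = ∫⁻ y in B, ∫⁻ x in B, G (y + t • (x - y)) := by
        apply lintegral_lintegral_swap
        exact ((ENNReal.continuous_ofReal.comp (hg.comp
          (continuous_snd.add ((continuous_fst.sub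
            continuous_snd).const_smul t)))).measurable).aemeasurable
      rw [hswap]
      have hinner : ∀ y, (∫⁻ x in B, G (y + t • (x - y))) ≤ K4 := fun y =>
        bmo_homothety_bound hg hI0 hI h ht1 y x₀ hr.le
      calc (∫⁻ y in B, ∫⁻ x in B, G (y + t • (x - y)))
          ≤ ∫⁻ _y in B, K4 := lintegral_mono fun y => hinner y
        _ = K4 * volume B := by rw [setLIntegral_const]
  set TI : Set ℝ := Set.Ioc (0:ℝ) 1 with hTI
  -- Fubini swaps to move the `t` integral out
  have hswap1 : ∀ x, (∫⁻ y in B, ∫⁻ t in TI, G (y + t • (x - y)))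
      = ∫⁻ t in TI, ∫⁻ y in B, G (y + t • (x - y)) := by
    intro x
    apply lintegral_lintegral_swap
    exact ((ENNReal.continuous_ofReal.comp (hg.comp
      (continuous_fst.add (continuous_snd.smul
        (continuous_const.sub continuous_fst))))).measurable).aemeasurable
  have hswap2 : (∫⁻ x in B, ∫⁻ t in TI, ∫⁻ y in B, G (y + t • (x - y)))
      = ∫⁻ t in TI, ∫⁻ x in B, ∫⁻ y in B, G (y + t • (x - y)) := by
    apply lintegral_lintegral_swap
    apply Measurable.aemeasurable
    apply Measurable.lintegral_prod_right (f := fun (p : 𝔼 × ℝ) (y : 𝔼) => G (y + p.2 • (p.1 - y)))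
    exact ((ENNReal.continuous_ofReal.comp (hg.comp
      (continuous_snd.add ((continuous_fst.snd).smul
        ((continuous_fst.fst).sub continuous_snd))))).measurable)
  -- triple integral bound
  have hTriple : (∫⁻ x in B, ∫⁻ y in B, ∫⁻ t in TI, G (y + t • (x - y))) ≤ K4 * volume B := by
    calc (∫⁻ x in B, ∫⁻ y in B, ∫⁻ t in TI, G (y + t • (x - y)))
        = ∫⁻ x in B, ∫⁻ t in TI, ∫⁻ y in B, G (y + t • (x - y)) := by
          apply lintegral_congr; intro x; exact hswap1 x
      _ = ∫⁻ t in TI, ∫⁻ x in B, ∫⁻ y in B, G (y + t • (x - y)) := hswap2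
      _ ≤ ∫⁻ _t in TI, K4 * volume B := setLIntegral_mono' measurableSet_Ioc hDB
      _ = K4 * volume B := by
          rw [setLIntegral_const, hTI, Real.volume_Ioc]
          norm_num
  -- pointwise FTC bound in lintegral form
  have hptw : ∀ x ∈ B, ∀ y ∈ B, ENNReal.ofReal |f x - f y| ≤
      ENNReal.ofReal (2*r) * ∫⁻ t in TI, G (y + t • (x - y)) := by
    intro x hx y hy
    have hxy : ‖x - y‖ ≤ 2 * r := by
      have h1 : dist x x₀ < r := Metric.mem_ball.mp hx
      have h2 : dist y x₀ < r := Metric.mem_ball.mp hy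
      calc ‖x - y‖ = dist x y := (dist_eq_norm x y).symm
        _ ≤ dist x x₀ + dist x₀ y := dist_triangle x x₀ y
        _ ≤ 2 * r := by rw [dist_comm x₀ y]; linarith
    have hγc : Continuous fun t : ℝ => g (y + t • (x - y)) :=
      hg.comp (continuous_const.add (continuous_id.smul continuous_const))
    have hIc : IntegrableOn (fun t : ℝ => g (y + t • (x - y))) TI volume :=
      hγc.integrableOn_Ioc
    have hnn : 0 ≤ ∫ t in (0:ℝ)..1, g (y + t • (x - y)) := by
      apply intervalIntegral.integral_nonneg zero_le_one
      intro t _; exact hg0 _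
    have hreal : |f x - f y| ≤ (2*r) * ∫ t in (0:ℝ)..1, g (y + t • (x - y)) := by
      refine (bmo_ftc hf x y).trans ?_
      exact mul_le_mul_of_nonneg_right hxy hnn
    refine (ENNReal.ofReal_le_ofReal hreal).trans ?_
    rw [ENNReal.ofReal_mul (by positivity)]
    gcongr
    rw [intervalIntegral.integral_of_le zero_le_one,
      ofReal_integral_eq_lintegral_ofReal hIc
        (Filter.Eventually.of_forall fun t => hg0 _)]
  -- the double oscillation integral bound
  have hOsc : (∫⁻ x in B, ∫⁻ y in B, ENNReal.ofReal |f x - f y|)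
      ≤ ENNReal.ofReal (2*r) * (K4 * volume B) := by
    calc (∫⁻ x in B, ∫⁻ y in B, ENNReal.ofReal |f x - f y|)
        ≤ ∫⁻ x in B, ENNReal.ofReal (2*r) *
            ∫⁻ y in B, ∫⁻ t in TI, G (y + t • (x - y)) := by
          apply setLIntegral_mono' Metric.isOpen_ball.measurableSet
          intro x hx
          rw [← lintegral_const_mul' _ _ ENNReal.ofReal_ne_top]
          apply setLIntegral_mono' Metric.isOpen_ball.measurableSet
          intro y hy
          exact hptw x hx y hy
      _ = ENNReal.ofReal (2*r) * ∫⁻ x in B, ∫⁻ y in B, ∫⁻ t in TI, G (y + t • (x - y)) := by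
          rw [lintegral_const_mul' _ _ ENNReal.ofReal_ne_top]
      _ ≤ ENNReal.ofReal (2*r) * (K4 * volume B) := by gcongr
  -- average step
  have hfB : IntegrableOn f B volume :=
    ((hf.continuous).continuousOn.integrableOn_compact
      (isCompact_closedBall x₀ r)).mono_set Metric.ball_subset_closedBall
  haveI : IsFiniteMeasure (volume.restrict B) := by
    constructor
    rw [Measure.restrict_apply_univ, hVval]
    exact ENNReal.ofReal_lt_top
  set c : ℝ := (volume B).toReal⁻¹ * ∫ y in B, f y with hc
  have havg : ∀ x ∈ B, ENNReal.ofReal |f x - c| ≤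
      (volume B)⁻¹ * ∫⁻ y in B, ENNReal.ofReal |f x - f y| := by
    intro x hx
    have hsub : Integrable (fun y => f x - f y) (volume.restrict B) := by
      apply Integrable.sub _ hfB
      exact integrable_const _
    have hkey : f x - c = (volume B).toReal⁻¹ * ∫ y in B, (f x - f y) := by
      rw [integral_sub (integrable_const _) hfB, setIntegral_const, smul_eq_mul]
      rw [mul_sub, ← mul_assoc, measureReal_def, inv_mul_cancel₀ hVrpos.ne', one_mul, hc]
    have habs : |f x - c| ≤ (volume B).toReal⁻¹ * ∫ y in B, |f x - f y| := by
      rw [hkey, abs_mul, abs_of_nonneg (by positivity : (0:ℝ) ≤ (volume B).toReal⁻¹)]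
      apply mul_le_mul_of_nonneg_left _ (by positivity)
      calc |∫ y in B, (f x - f y)| = ‖∫ y in B, (f x - f y)‖ := (Real.norm_eq_abs _).symm
        _ ≤ ∫ y in B, ‖f x - f y‖ := norm_integral_le_integral_norm _
        _ = ∫ y in B, |f x - f y| := by simp [Real.norm_eq_abs]
    refine (ENNReal.ofReal_le_ofReal habs).trans ?_
    rw [ENNReal.ofReal_mul (by positivity),
      ofReal_integral_eq_lintegral_ofReal hsub.abs
        (Filter.Eventually.of_forall fun y => abs_nonneg _)]
    gcongr
    rw [ENNReal.ofReal_inv_of_pos hVrpos, ENNReal.ofReal_toReal]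
    rw [hVval]; exact ENNReal.ofReal_ne_top
  -- putting everything together at the lintegral level
  have hmain : (∫⁻ x in B, ENNReal.ofReal |f x - c|)
      ≤ ENNReal.ofReal (8 * (S * (Real.sqrt Real.pi * r)) * r) := by
    have hVne : volume B ≠ 0 := by rw [hVval]; simp [ENNReal.ofReal_eq_zero]; positivity
    have hVnetop : volume B ≠ ⊤ := by rw [hVval]; exact ENNReal.ofReal_ne_top
    calc (∫⁻ x in B, ENNReal.ofReal |f x - c|)
        ≤ ∫⁻ x in B, (volume B)⁻¹ * ∫⁻ y in B, ENNReal.ofReal |f x - f y| := by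
          apply setLIntegral_mono' Metric.isOpen_ball.measurableSet
          intro x hx
          exact havg x hx
      _ = (volume B)⁻¹ * ∫⁻ x in B, ∫⁻ y in B, ENNReal.ofReal |f x - f y| := by
          rw [lintegral_const_mul' _ _ (ENNReal.inv_ne_top.mpr hVne)]
      _ ≤ (volume B)⁻¹ * (ENNReal.ofReal (2*r) * (K4 * volume B)) := by gcongr
      _ = ENNReal.ofReal (2*r) * K4 * ((volume B)⁻¹ * volume B) := by ring
      _ = ENNReal.ofReal (2*r) * K4 := by
          rw [ENNReal.inv_mul_cancel hVne hVnetop, mul_one]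
      _ = ENNReal.ofReal (8 * (S * (Real.sqrt Real.pi * r)) * r) := by
          rw [hK4, ← ENNReal.ofReal_mul (by positivity)]
          congr 1
          ring
  -- back to the real world
  have hmeas_osc : AEStronglyMeasurable (fun x => |f x - c|) (volume.restrict B) :=
    ((hf.continuous.sub continuous_const).abs).aestronglyMeasurable
  have hreal_eq : (∫ x in B, |f x - c|)
      = (∫⁻ x in B, ENNReal.ofReal |f x - c|).toReal := by
    rw [integral_eq_lintegral_of_nonneg_ae
      (Filter.Eventually.of_forall fun x => abs_nonneg _) hmeas_osc]
  have hfinal : (∫ x in B, |f x - c|) ≤ 8 * (S * (Real.sqrt Real.pi * r)) * r := by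
    rw [hreal_eq]
    exact ENNReal.toReal_le_of_le_ofReal (by positivity) hmain
  -- final numeric computation
  calc (volume B).toReal⁻¹ * ∫ x in B, |f x - c|
      ≤ (volume B).toReal⁻¹ * (8 * (S * (Real.sqrt Real.pi * r)) * r) := by
        apply mul_le_mul_of_nonneg_left hfinal (by positivity)
    _ = 8 * S * (Real.sqrt Real.pi / Real.pi) := by
        rw [hVr]
        field_simp
    _ ≤ 8 * S := by
        have hsq : Real.sqrt Real.pi / Real.pi ≤ 1 := by
          rw [div_le_one Real.pi_pos]
          calc Real.sqrt Real.pi ≤ Real.sqrt (Real.pi ^ 2) :=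
                Real.sqrt_le_sqrt (by nlinarith [Real.pi_gt_three])
            _ = Real.pi := Real.sqrt_sq Real.pi_pos.le
        calc 8 * S * (Real.sqrt Real.pi / Real.pi) ≤ 8 * S * 1 := by
              apply mul_le_mul_of_nonneg_left hsq (by positivity)
          _ = 8 * S := by ring
end

section
/- There exists a universal constant C > 0 with the following property. Let ρ > 0 and let f : ℝ² → ℝ² be integrable with support contained in the closed ball of radius ρ centered at the origin and with ∫_{ℝ²} f(y) dy = 0. Define Q(x) := (1/2π) ∫_{ℝ²} ((x−y)/‖x−y‖²) · f(y) dy. Then for every x ∈ ℝ² with ‖x‖ ≥ 2ρ, |Q(x)| ≤ C ‖x‖^{−2} ∫_{ℝ²} ‖y‖ ‖f(y)‖ dy. -/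
open MeasureTheory
open scoped RealInnerProductSpace

lemma stokes_inv_smul_sub {E : Type*} [NormedAddCommGroup E] [InnerProductSpace ℝ E]
    (v w : E) (hv : v ≠ 0) (hw : w ≠ 0) :
    ‖(‖v‖^2)⁻¹ • v - (‖w‖^2)⁻¹ • w‖ = ‖v - w‖ / (‖v‖ * ‖w‖) := by
  have h := dist_div_norm_sq_smul hv hw 1
  simp only [one_pow, one_div, div_pow, inv_pow] at h
  rw [dist_eq_norm, dist_eq_norm] at h
  rw [h]; ring

/-- Decay of the Stokes pressure generated by a mean-free, compactly supported force:
there is a universal `C > 0` such that if `f` is integrable, supported in the closed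
ball of radius `ρ` around the origin, and has zero mean, then
`Q(x) := (2π)⁻¹ ∫ ⟨(x−y)/‖x−y‖², f(y)⟩ dy` satisfies
`|Q(x)| ≤ C ‖x‖⁻² ∫ ‖y‖‖f(y)‖ dy` for `‖x‖ ≥ 2ρ`. -/
theorem stokes_pressure_decay :
    ∃ C > 0, ∀ (ρ : ℝ), 0 < ρ →
      ∀ f : EuclideanSpace ℝ (Fin 2) → EuclideanSpace ℝ (Fin 2),
        Integrable f →
        Function.support f ⊆ Metric.closedBall 0 ρ →
        (∫ y, f y) = 0 →
        ∀ x : EuclideanSpace ℝ (Fin 2), 2 * ρ ≤ ‖x‖ →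
          |(2 * Real.pi)⁻¹ * ∫ y, ⟪x - y, f y⟫ / ‖x - y‖ ^ 2|
            ≤ C / ‖x‖ ^ 2 * ∫ y, ‖y‖ * ‖f y‖ := by
  refine ⟨2, two_pos, fun ρ hρ f hf hsupp hmean x hx => ?_⟩
  have hx0 : 0 < ‖x‖ := lt_of_lt_of_le (by linarith) hx
  have hxne : x ≠ 0 := by simpa [norm_pos_iff] using hx0
  set a : EuclideanSpace ℝ (Fin 2) := (‖x‖^2)⁻¹ • x with ha
  -- pointwise facts on the support
  have hsupp' : ∀ y, f y ≠ 0 → ‖y‖ ≤ ρ := fun y hy => by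
    simpa [Metric.mem_closedBall, dist_zero_right] using hsupp (by simpa [Function.mem_support] using hy)
  -- pointwise bound for the shifted integrand
  set g : EuclideanSpace ℝ (Fin 2) → ℝ :=
    fun y => ⟪x - y, f y⟫ / ‖x - y‖ ^ 2 - ⟪a, f y⟫ with hg
  have hbound : ∀ y, ‖g y‖ ≤ 2 / ‖x‖ ^ 2 * (‖y‖ * ‖f y‖) := by
    intro y
    rcases eq_or_ne (f y) 0 with h0 | h0
    · have : g y = 0 := by simp [hg, h0]
      rw [this, norm_zero]
      positivity
    · have hyρ : ‖y‖ ≤ ρ := hsupp' y h0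
      have hxy0 : x - y ≠ 0 := by
        intro h
        have : x = y := by simpa [sub_eq_zero] using h
        have : ‖x‖ ≤ ρ := this ▸ hyρ
        linarith
      have hxy : ‖x‖ / 2 ≤ ‖x - y‖ := by
        have := norm_sub_norm_le x (x - y)
        simp only [sub_sub_cancel] at this
        linarith
      have hrewrite : ⟪x - y, f y⟫ / ‖x - y‖ ^ 2 = ⟪(‖x - y‖^2)⁻¹ • (x - y), f y⟫ := by
        rw [real_inner_smul_left]; ring
      have : g y = ⟪(‖x - y‖^2)⁻¹ • (x - y) - a, f y⟫ := by
        simp only [hg]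
        rw [hrewrite, ha, inner_sub_left]
      rw [this]
      calc ‖⟪(‖x - y‖^2)⁻¹ • (x - y) - a, f y⟫‖
          ≤ ‖(‖x - y‖^2)⁻¹ • (x - y) - a‖ * ‖f y‖ := norm_inner_le_norm _ _
        _ = ‖x - y - x‖ / (‖x - y‖ * ‖x‖) * ‖f y‖ := by
            rw [ha, stokes_inv_smul_sub _ _ hxy0 hxne]
        _ = ‖y‖ / (‖x - y‖ * ‖x‖) * ‖f y‖ := by
            rw [show x - y - x = -y by abel, norm_neg]
        _ ≤ ‖y‖ / (‖x‖ / 2 * ‖x‖) * ‖f y‖ := by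
            have hpos : 0 < ‖x‖ / 2 * ‖x‖ := mul_pos (by linarith) hx0
            gcongr
        _ = 2 / ‖x‖ ^ 2 * (‖y‖ * ‖f y‖) := by
            field_simp
  -- measurability of g
  have hfm := hf.aestronglyMeasurable
  have hmeas1 : AEStronglyMeasurable (fun y => ⟪x - y, f y⟫) volume := by
    exact AEStronglyMeasurable.inner ((continuous_const.sub continuous_id).aestronglyMeasurable) hfm
  have hmeas2 : AEStronglyMeasurable (fun y : EuclideanSpace ℝ (Fin 2) => (‖x - y‖ ^ 2)⁻¹) volume :=
    (((continuous_const.sub continuous_id).norm.pow 2).measurable.inv).aestronglyMeasurable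
  have hmeasg : AEStronglyMeasurable g volume := by
    have : g = fun y => ⟪x - y, f y⟫ * (‖x - y‖ ^ 2)⁻¹ - ⟪a, f y⟫ := by
      funext y; simp [hg, div_eq_mul_inv]
    rw [this]
    exact (hmeas1.mul hmeas2).sub (aestronglyMeasurable_const.inner hfm)
  -- integrability of the bound
  have hBint : Integrable (fun y => ‖y‖ * ‖f y‖) volume := by
    refine (hf.norm.const_mul ρ).mono' ?_ ?_
    · exact (continuous_norm.aestronglyMeasurable.mul hf.norm.aestronglyMeasurable)
    · filter_upwards with y
      rcases eq_or_ne (f y) 0 with h0 | h0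
      · simp only [h0, norm_zero, mul_zero, norm_mul, norm_norm]
        positivity
      · have := hsupp' y h0
        have hn : 0 ≤ ‖f y‖ := norm_nonneg _
        simp only [norm_mul, norm_norm]
        nlinarith [norm_nonneg y]
  have hgint : Integrable g volume := by
    refine (hBint.const_mul (2 / ‖x‖ ^ 2)).mono' hmeasg ?_
    filter_upwards with y using hbound y
  -- the mean-zero reduction
  have hzero : (∫ y, ⟪a, f y⟫) = 0 := by
    rw [integral_inner hf, hmean, inner_zero_right]
  have hsplit : (∫ y, ⟪x - y, f y⟫ / ‖x - y‖ ^ 2) = ∫ y, g y := by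
    have : (fun y => ⟪x - y, f y⟫ / ‖x - y‖ ^ 2) = fun y => g y + ⟪a, f y⟫ := by
      funext y; rw [hg]; ring
    rw [this, integral_add hgint (hf.const_inner a), hzero, add_zero]
  -- final estimate
  have hIbound : ‖∫ y, g y‖ ≤ ∫ y, 2 / ‖x‖ ^ 2 * (‖y‖ * ‖f y‖) := by
    refine norm_integral_le_of_norm_le (hBint.const_mul _) ?_
    filter_upwards with y using hbound y
  have hpi : (0:ℝ) < 2 * Real.pi := by positivity
  have hInt_nonneg : 0 ≤ ∫ y, ‖y‖ * ‖f y‖ :=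
    integral_nonneg fun y => by positivity
  rw [hsplit, abs_mul, abs_of_pos (inv_pos.mpr hpi)]
  calc (2 * Real.pi)⁻¹ * |∫ y, g y|
      ≤ 1 * |∫ y, g y| := by
        have h1 : (2 * Real.pi)⁻¹ ≤ 1 := by
          rw [inv_le_one_iff₀]; right; nlinarith [Real.pi_gt_three]
        exact mul_le_mul_of_nonneg_right h1 (abs_nonneg _)
    _ = ‖∫ y, g y‖ := by rw [one_mul, Real.norm_eq_abs]
    _ ≤ ∫ y, 2 / ‖x‖ ^ 2 * (‖y‖ * ‖f y‖) := hIbound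
    _ = 2 / ‖x‖ ^ 2 * ∫ y, ‖y‖ * ‖f y‖ := integral_const_mul _ _
end

section
/- There exists a universal constant C > 0 with the following property. Let ρ > 0 and let f : ℝ² → ℝ² be integrable with support contained in the closed ball of radius ρ centered at the origin and with ∫_{ℝ²} f(y) dy = 0. For z ∈ ℝ² \ {0} and m ∈ ℝ², define the Stokeslet W(z)m := (1/4π) ( (log ‖z‖) m − (⟨z, m⟩/‖z‖²) z ), and set w(x) := ∫_{ℝ²} W(x−y) f(y) dy. Then for every x ∈ ℝ² with ‖x‖ ≥ 2ρ, ‖w(x)‖ ≤ C ‖x‖^{−1} ∫_{ℝ²} ‖y‖ ‖f(y)‖ dy. -/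
open MeasureTheory
open scoped RealInnerProductSpace

lemma log_sub_log_le {u v : ℝ} (hv : 0 < v) (h : v ≤ u) :
    Real.log u - Real.log v ≤ (u - v) / v := by
  have hu : 0 < u := hv.trans_le h
  have h1 : Real.log u - Real.log v = Real.log (u / v) :=
    (Real.log_div hu.ne' hv.ne').symm
  have h2 := Real.log_le_sub_one_of_pos (div_pos hu hv)
  have h3 : u / v - 1 = (u - v) / v := by field_simp
  linarith [h1, h2, h3]

lemma abs_log_sub_log_le {u v w : ℝ} (hw : 0 < w) (hwu : w ≤ u) (hwv : w ≤ v) :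
    |Real.log u - Real.log v| ≤ |u - v| / w := by
  have hu := hw.trans_le hwu; have hv := hw.trans_le hwv
  rcases le_total v u with h | h
  · rw [abs_of_nonneg (sub_nonneg.2 (Real.log_le_log hv h)),
      abs_of_nonneg (sub_nonneg.2 h)]
    calc Real.log u - Real.log v ≤ (u - v) / v := log_sub_log_le hv h
      _ ≤ (u - v) / w := by gcongr
  · rw [abs_sub_comm, abs_sub_comm u v,
      abs_of_nonneg (sub_nonneg.2 (Real.log_le_log hu h)),
      abs_of_nonneg (sub_nonneg.2 h)]
    calc Real.log v - Real.log u ≤ (v - u) / u := log_sub_log_le hu h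
      _ ≤ (v - u) / w := by gcongr


set_option maxHeartbeats 1000000 in
lemma key_est {E : Type*} [NormedAddCommGroup E] [InnerProductSpace ℝ E]
    (x y m : E) (hx : 0 < ‖x‖) (hy : 2 * ‖y‖ ≤ ‖x‖) :
    ‖(4 * Real.pi)⁻¹ • ((Real.log ‖x - y‖) • m - (⟪x - y, m⟫ / ‖x - y‖ ^ 2) • (x - y))
      - (4 * Real.pi)⁻¹ • ((Real.log ‖x‖) • m - (⟪x, m⟫ / ‖x‖ ^ 2) • x)‖
      ≤ 2 / ‖x‖ * (‖y‖ * ‖m‖) := by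
  set a := x - y with ha
  have hax : x - a = y := by simp [ha]
  have hdiff : |‖a‖ - ‖x‖| ≤ ‖y‖ := by
    calc |‖a‖ - ‖x‖| ≤ ‖a - x‖ := abs_norm_sub_norm_le a x
      _ = ‖y‖ := by rw [show a - x = -y by simp [ha], norm_neg]
  have ha2 : ‖x‖ / 2 ≤ ‖a‖ := by
    have := abs_le.1 hdiff; linarith [this.1]
  have hau : ‖a‖ ≤ 3 / 2 * ‖x‖ := by
    have := abs_le.1 hdiff; linarith [this.2]
  have ha0 : 0 < ‖a‖ := lt_of_lt_of_le (by linarith) ha2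
  have hym : ⟪y, m⟫ = ⟪x, m⟫ - ⟪a, m⟫ := by rw [← inner_sub_left, hax]
  have hrw :
      (4 * Real.pi)⁻¹ • ((Real.log ‖a‖) • m - (⟪a, m⟫ / ‖a‖ ^ 2) • a)
        - (4 * Real.pi)⁻¹ • ((Real.log ‖x‖) • m - (⟪x, m⟫ / ‖x‖ ^ 2) • x)
      = (4 * Real.pi)⁻¹ • ((Real.log ‖a‖ - Real.log ‖x‖) • m
          + (⟪y, m⟫ / ‖a‖ ^ 2) • a
          + (-⟪x, m⟫) • ((‖a‖ ^ 2)⁻¹ • a - (‖x‖ ^ 2)⁻¹ • x)) := by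
    rw [hym]
    match_scalars <;> field_simp <;> ring
  rw [hrw]
  have hΔ : ‖(‖a‖ ^ 2)⁻¹ • a - (‖x‖ ^ 2)⁻¹ • x‖ ≤ 14 * ‖y‖ / ‖x‖ ^ 2 := by
    have tri : ‖(‖a‖ ^ 2)⁻¹ • a - (‖x‖ ^ 2)⁻¹ • x‖
        ≤ ‖(‖a‖ ^ 2)⁻¹ • (a - x)‖ + ‖((‖a‖ ^ 2)⁻¹ - (‖x‖ ^ 2)⁻¹) • x‖ := by
      have : (‖a‖ ^ 2)⁻¹ • a - (‖x‖ ^ 2)⁻¹ • x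
          = (‖a‖ ^ 2)⁻¹ • (a - x) + ((‖a‖ ^ 2)⁻¹ - (‖x‖ ^ 2)⁻¹) • x := by
        module
      rw [this]; exact norm_add_le _ _
    have e1 : ‖(‖a‖ ^ 2)⁻¹ • (a - x)‖ = (‖a‖ ^ 2)⁻¹ * ‖y‖ := by
      rw [norm_smul, Real.norm_eq_abs, abs_inv, abs_of_nonneg (by positivity),
        show a - x = -y by simp [ha], norm_neg]
    have e2 : ‖((‖a‖ ^ 2)⁻¹ - (‖x‖ ^ 2)⁻¹) • x‖ = |(‖a‖ ^ 2)⁻¹ - (‖x‖ ^ 2)⁻¹| * ‖x‖ := by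
      rw [norm_smul, Real.norm_eq_abs]
    have e3 : |(‖a‖ ^ 2)⁻¹ - (‖x‖ ^ 2)⁻¹| ≤ (‖x‖ + ‖a‖) * ‖y‖ / (‖a‖ ^ 2 * ‖x‖ ^ 2) := by
      rw [inv_sub_inv (by positivity) (by positivity), abs_div]
      rw [abs_of_nonneg (show (0:ℝ) ≤ ‖a‖ ^ 2 * ‖x‖ ^ 2 by positivity)]
      gcongr
      calc |‖x‖ ^ 2 - ‖a‖ ^ 2| = |‖x‖ - ‖a‖| * (‖x‖ + ‖a‖) := by
            rw [show ‖x‖ ^ 2 - ‖a‖ ^ 2 = (‖x‖ - ‖a‖) * (‖x‖ + ‖a‖) by ring, abs_mul,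
              abs_of_nonneg (show (0:ℝ) ≤ ‖x‖ + ‖a‖ by positivity)]
        _ ≤ ‖y‖ * (‖x‖ + ‖a‖) := by
            gcongr; rw [abs_sub_comm]; exact hdiff
        _ = (‖x‖ + ‖a‖) * ‖y‖ := by ring
    have hy0 : (0:ℝ) ≤ ‖y‖ := norm_nonneg _
    have key1 : (‖a‖ ^ 2)⁻¹ * ‖y‖ ≤ 4 * ‖y‖ / ‖x‖ ^ 2 := by
      rw [inv_mul_eq_div, div_le_div_iff₀ (by positivity) (by positivity)]
      have hq1 : ‖x‖ ^ 2 ≤ 4 * ‖a‖ ^ 2 := by nlinarith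
      nlinarith [mul_le_mul_of_nonneg_left hq1 hy0]
    have key2 : (‖x‖ + ‖a‖) * ‖y‖ / (‖a‖ ^ 2 * ‖x‖ ^ 2) * ‖x‖ ≤ 10 * ‖y‖ / ‖x‖ ^ 2 := by
      rw [div_mul_eq_mul_div, div_le_div_iff₀ (by positivity) (by positivity)]
      have h2a : ‖x‖ ≤ 2 * ‖a‖ := by linarith
      have hq : (‖x‖ + ‖a‖) * ‖x‖ ≤ 10 * ‖a‖ ^ 2 := by nlinarith
      nlinarith [mul_le_mul_of_nonneg_left hq (mul_nonneg hy0 (sq_nonneg ‖x‖))]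
    calc ‖(‖a‖ ^ 2)⁻¹ • a - (‖x‖ ^ 2)⁻¹ • x‖
        ≤ (‖a‖ ^ 2)⁻¹ * ‖y‖ + |(‖a‖ ^ 2)⁻¹ - (‖x‖ ^ 2)⁻¹| * ‖x‖ := by
          rw [← e1, ← e2]; exact tri
      _ ≤ 4 * ‖y‖ / ‖x‖ ^ 2 + (‖x‖ + ‖a‖) * ‖y‖ / (‖a‖ ^ 2 * ‖x‖ ^ 2) * ‖x‖ := by
          gcongr
      _ ≤ 4 * ‖y‖ / ‖x‖ ^ 2 + 10 * ‖y‖ / ‖x‖ ^ 2 := by gcongr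
      _ = 14 * ‖y‖ / ‖x‖ ^ 2 := by ring
  -- bound the three terms
  have hL : ‖(Real.log ‖a‖ - Real.log ‖x‖) • m‖ ≤ 2 * ‖y‖ / ‖x‖ * ‖m‖ := by
    rw [norm_smul, Real.norm_eq_abs]
    gcongr
    calc |Real.log ‖a‖ - Real.log ‖x‖| ≤ |‖a‖ - ‖x‖| / (‖x‖ / 2) :=
        abs_log_sub_log_le (by linarith) ha2 (by linarith)
      _ ≤ ‖y‖ / (‖x‖ / 2) := by gcongr
      _ = 2 * ‖y‖ / ‖x‖ := by field_simp
  have hT1 : ‖(⟪y, m⟫ / ‖a‖ ^ 2) • a‖ ≤ 2 * ‖y‖ / ‖x‖ * ‖m‖ := by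
    rw [norm_smul, Real.norm_eq_abs, abs_div, abs_of_nonneg (show (0:ℝ) ≤ ‖a‖^2 by positivity)]
    have hi : |⟪y, m⟫| ≤ ‖y‖ * ‖m‖ := abs_real_inner_le_norm y m
    calc |⟪y, m⟫| / ‖a‖ ^ 2 * ‖a‖ = |⟪y, m⟫| / ‖a‖ := by
          field_simp
      _ ≤ ‖y‖ * ‖m‖ / (‖x‖ / 2) := by gcongr
      _ = 2 * ‖y‖ / ‖x‖ * ‖m‖ := by field_simp
  have hT2 : ‖(-⟪x, m⟫) • ((‖a‖ ^ 2)⁻¹ • a - (‖x‖ ^ 2)⁻¹ • x)‖ ≤ 14 * ‖y‖ / ‖x‖ * ‖m‖ := by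
    rw [norm_smul, Real.norm_eq_abs, abs_neg]
    have hi : |⟪x, m⟫| ≤ ‖x‖ * ‖m‖ := abs_real_inner_le_norm x m
    calc |⟪x, m⟫| * ‖(‖a‖ ^ 2)⁻¹ • a - (‖x‖ ^ 2)⁻¹ • x‖
        ≤ (‖x‖ * ‖m‖) * (14 * ‖y‖ / ‖x‖ ^ 2) := by
          gcongr
      _ = 14 * ‖y‖ / ‖x‖ * ‖m‖ := by field_simp
  have hpi : (4 * Real.pi)⁻¹ ≤ 12⁻¹ := by
    have := Real.pi_gt_three
    rw [inv_le_inv₀ (by linarith) (by norm_num)]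
    linarith
  have hsum : ‖(Real.log ‖a‖ - Real.log ‖x‖) • m + (⟪y, m⟫ / ‖a‖ ^ 2) • a
      + (-⟪x, m⟫) • ((‖a‖ ^ 2)⁻¹ • a - (‖x‖ ^ 2)⁻¹ • x)‖ ≤ 18 * ‖y‖ / ‖x‖ * ‖m‖ := by
    calc _ ≤ ‖(Real.log ‖a‖ - Real.log ‖x‖) • m + (⟪y, m⟫ / ‖a‖ ^ 2) • a‖
        + ‖(-⟪x, m⟫) • ((‖a‖ ^ 2)⁻¹ • a - (‖x‖ ^ 2)⁻¹ • x)‖ := norm_add_le _ _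
      _ ≤ (‖(Real.log ‖a‖ - Real.log ‖x‖) • m‖ + ‖(⟪y, m⟫ / ‖a‖ ^ 2) • a‖)
        + ‖(-⟪x, m⟫) • ((‖a‖ ^ 2)⁻¹ • a - (‖x‖ ^ 2)⁻¹ • x)‖ := by
          gcongr; exact norm_add_le _ _
      _ ≤ (2 * ‖y‖ / ‖x‖ * ‖m‖ + 2 * ‖y‖ / ‖x‖ * ‖m‖) + 14 * ‖y‖ / ‖x‖ * ‖m‖ := by
          gcongr
      _ = 18 * ‖y‖ / ‖x‖ * ‖m‖ := by ring
  rw [norm_smul, Real.norm_eq_abs, abs_of_nonneg (by positivity)]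
  have h1 : (4 * Real.pi)⁻¹ * ‖(Real.log ‖a‖ - Real.log ‖x‖) • m + (⟪y, m⟫ / ‖a‖ ^ 2) • a
      + (-⟪x, m⟫) • ((‖a‖ ^ 2)⁻¹ • a - (‖x‖ ^ 2)⁻¹ • x)‖
      ≤ 12⁻¹ * (18 * ‖y‖ / ‖x‖ * ‖m‖) :=
    mul_le_mul hpi hsum (norm_nonneg _) (by norm_num)
  have h2 : 12⁻¹ * (18 * ‖y‖ / ‖x‖ * ‖m‖) ≤ 2 / ‖x‖ * (‖y‖ * ‖m‖) := by
    rw [show (12:ℝ)⁻¹ * (18 * ‖y‖ / ‖x‖ * ‖m‖) = 3 / 2 * (‖y‖ * ‖m‖) / ‖x‖ by ring,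
      show 2 / ‖x‖ * (‖y‖ * ‖m‖) = 2 * (‖y‖ * ‖m‖) / ‖x‖ by ring]
    gcongr
    nlinarith [mul_nonneg (norm_nonneg y) (norm_nonneg m)]
  exact le_trans h1 h2


noncomputable def Tx {E : Type*} [NormedAddCommGroup E] [InnerProductSpace ℝ E] (x : E) : E →L[ℝ] E :=
  (4 * Real.pi)⁻¹ • ((Real.log ‖x‖) • ContinuousLinearMap.id ℝ E
    - (‖x‖ ^ 2)⁻¹ • ((innerSL ℝ x).smulRight x))

lemma Tx_apply {E : Type*} [NormedAddCommGroup E] [InnerProductSpace ℝ E] (x m : E) :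
    Tx x m = (4 * Real.pi)⁻¹ • ((Real.log ‖x‖) • m - (⟪x, m⟫ / ‖x‖ ^ 2) • x) := by
  simp only [Tx, ContinuousLinearMap.smul_apply, ContinuousLinearMap.sub_apply,
    ContinuousLinearMap.id_apply, ContinuousLinearMap.smulRight_apply, innerSL_apply_apply,
    smul_smul, div_eq_inv_mul]

/-- Decay of the Stokes velocity generated by a mean-free, compactly supported force:
there is a universal `C > 0` such that if `f` is integrable, supported in the closed
ball of radius `ρ` around the origin, and has zero mean, then the Stokeslet potential
`w(x) := ∫ W(x−y) f(y) dy`, with `W(z)m = (4π)⁻¹((log‖z‖) m − (⟨z,m⟩/‖z‖²) z)`,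
satisfies `‖w(x)‖ ≤ C ‖x‖⁻¹ ∫ ‖y‖‖f(y)‖ dy` for `‖x‖ ≥ 2ρ`. -/
theorem stokes_velocity_decay :
    ∃ C > 0, ∀ (ρ : ℝ), 0 < ρ →
      ∀ f : EuclideanSpace ℝ (Fin 2) → EuclideanSpace ℝ (Fin 2),
        Integrable f →
        Function.support f ⊆ Metric.closedBall 0 ρ →
        (∫ y, f y) = 0 →
        ∀ x : EuclideanSpace ℝ (Fin 2), 2 * ρ ≤ ‖x‖ →
          ‖∫ y, (4 * Real.pi)⁻¹ •
              ((Real.log ‖x - y‖) • f y - (⟪x - y, f y⟫ / ‖x - y‖ ^ 2) • (x - y))‖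
            ≤ C / ‖x‖ * ∫ y, ‖y‖ * ‖f y‖ := by
  refine ⟨2, by norm_num, ?_⟩
  intro ρ hρ f hf hsupp hmean x hx2ρ
  have hxpos : 0 < ‖x‖ := lt_of_lt_of_le (by linarith) hx2ρ
  set F : EuclideanSpace ℝ (Fin 2) → EuclideanSpace ℝ (Fin 2) := fun y =>
    (4 * Real.pi)⁻¹ • ((Real.log ‖x - y‖) • f y - (⟪x - y, f y⟫ / ‖x - y‖ ^ 2) • (x - y))
    with hF
  -- integrability of the comparison weight
  have hbw : Integrable (fun y => ‖y‖ * ‖f y‖) := by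
    refine Integrable.mono (hf.norm.const_mul ρ) ?_ ?_
    · exact (continuous_norm.aestronglyMeasurable).mul hf.1.norm
    · filter_upwards with y
      by_cases h : f y = 0
      · simp [h]
      · have hyρ : ‖y‖ ≤ ρ := by
          have := hsupp (Function.mem_support.2 h)
          simpa [Metric.mem_closedBall, dist_zero_right] using this
        rw [Real.norm_eq_abs, Real.norm_eq_abs, abs_of_nonneg (by positivity),
          abs_of_nonneg (by positivity)]
        exact mul_le_mul_of_nonneg_right hyρ (norm_nonneg _)
  have hIbw : 0 ≤ ∫ y, ‖y‖ * ‖f y‖ :=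
    integral_nonneg fun y => by positivity
  -- integrability of the linear part
  have hG : Integrable (fun y => Tx x (f y)) := (Tx x).integrable_comp hf
  have hGzero : (∫ y, Tx x (f y)) = 0 := by
    rw [ContinuousLinearMap.integral_comp_comm (Tx x) hf, hmean, map_zero]
  -- pointwise bound on the difference
  have hkey : ∀ y, ‖F y - Tx x (f y)‖ ≤ 2 / ‖x‖ * (‖y‖ * ‖f y‖) := by
    intro y
    by_cases h : f y = 0
    · simp [hF, h, Tx_apply]
    · have hyρ : ‖y‖ ≤ ρ := by
        have := hsupp (Function.mem_support.2 h)
        simpa [Metric.mem_closedBall, dist_zero_right] using this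
      rw [hF, Tx_apply]
      exact key_est x y (f y) hxpos (by linarith)
  -- measurability of F
  have hmF : AEStronglyMeasurable F volume := by
    have hcont : Continuous fun y : EuclideanSpace ℝ (Fin 2) => x - y :=
      continuous_const.sub continuous_id
    have h1 : AEStronglyMeasurable (fun y => Real.log ‖x - y‖) volume :=
      (Real.measurable_log.comp hcont.norm.measurable).aestronglyMeasurable
    have h2 : AEStronglyMeasurable (fun y => (Real.log ‖x - y‖) • f y) volume :=
      h1.smul hf.1
    have h3 : AEStronglyMeasurable (fun y => (⟪x - y, f y⟫ : ℝ)) volume :=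
      hcont.aestronglyMeasurable.inner hf.1
    have h4 : AEStronglyMeasurable (fun y => (⟪x - y, f y⟫ / ‖x - y‖ ^ 2 : ℝ)) volume :=
      (h3.aemeasurable.div ((hcont.norm.pow 2).measurable).aemeasurable).aestronglyMeasurable
    have h5 : AEStronglyMeasurable
        (fun y => (⟪x - y, f y⟫ / ‖x - y‖ ^ 2 : ℝ) • (x - y)) volume :=
      h4.smul hcont.aestronglyMeasurable
    exact ((h2.sub h5).const_smul ((4 * Real.pi)⁻¹ : ℝ))
  -- integrability of the difference
  have hD : Integrable (fun y => F y - Tx x (f y)) := by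
    refine Integrable.mono (hbw.const_mul (2 / ‖x‖)) (hmF.sub hG.1) ?_
    filter_upwards with y
    rw [Real.norm_eq_abs, abs_of_nonneg (by positivity)]
    exact hkey y
  -- split the integral
  have hsplit : (∫ y, F y) = ∫ y, (F y - Tx x (f y)) := by
    have : (∫ y, F y) = ∫ y, ((F y - Tx x (f y)) + Tx x (f y)) := by
      congr 1; funext y; abel
    rw [this, integral_add hD hG, hGzero, add_zero]
  rw [hsplit]
  calc ‖∫ y, (F y - Tx x (f y))‖ ≤ ∫ y, 2 / ‖x‖ * (‖y‖ * ‖f y‖) :=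
      norm_integral_le_of_norm_le (hbw.const_mul _) (Filter.Eventually.of_forall hkey)
    _ = 2 / ‖x‖ * ∫ y, ‖y‖ * ‖f y‖ := integral_const_mul _ _
end

section
/- Let h : ℝ² → ℝ be twice continuously differentiable with Δh(x) = ∂₁²h(x) + ∂₂²h(x) = 0 for every x ∈ ℝ², and assume that its gradient is square-integrable: ∫_{ℝ²} ‖∇h(x)‖² dx < ∞. Then h is constant. -/
open MeasureTheory

section HarmonicLiouvilleAux

open Set
open scoped Real

set_option maxHeartbeats 1000000

noncomputable section


lemma circle_bound {f : ℂ → ℂ} (hf : Differentiable ℂ f) (c : ℂ) {R : ℝ} (hR : 0 < R) :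
    2 * π * ‖f c‖ ≤ ∫ θ in (0:ℝ)..(2 * π), ‖f (circleMap c R θ)‖ := by
  have key := Complex.circleIntegral_sub_center_inv_smul_of_differentiable_on_off_countable
    (f := f) (c := c) hR Set.countable_empty hf.continuous.continuousOn
    (fun z _ => hf z)
  have h2 : ‖∮ z in C(c, R), (z - c)⁻¹ • f z‖ = 2 * π * ‖f c‖ := by
    rw [key, norm_smul]
    simp [Complex.norm_I, abs_of_pos Real.pi_pos]
  calc 2 * π * ‖f c‖ = ‖∮ z in C(c, R), (z - c)⁻¹ • f z‖ := h2.symm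
    _ ≤ ∫ θ in (0:ℝ)..(2 * π), ‖deriv (circleMap c R) θ •
          (circleMap c R θ - c)⁻¹ • f (circleMap c R θ)‖ := by
        rw [circleIntegral]
        exact intervalIntegral.norm_integral_le_integral_norm (by positivity)
    _ = ∫ θ in (0:ℝ)..(2 * π), ‖f (circleMap c R θ)‖ := by
        refine intervalIntegral.integral_congr fun θ _ => ?_
        rw [deriv_circleMap, norm_smul, norm_smul, norm_inv, circleMap_sub_center]
        simp only [norm_mul, norm_circleMap_zero, Complex.norm_I,
          abs_of_pos hR, mul_one]
        field_simp

lemma disk_bound {g : ℂ → ℂ} (hg : Differentiable ℂ g)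
    (hint : Integrable (fun z : ℂ => ‖g z‖ ^ 2)) (c : ℂ) {R : ℝ} (hR : 0 < R) :
    π * R ^ 2 * ‖g c‖ ^ 2 ≤ ∫ z : ℂ, ‖g z‖ ^ 2 := by
  set F : ℂ → ℝ := fun z => ‖g z‖ ^ 2 with hF
  -- circle mean value bound for ‖g‖²
  have circ : ∀ r : ℝ, 0 < r →
      2 * π * ‖g c‖ ^ 2 ≤ ∫ θ in (0:ℝ)..(2 * π), F (circleMap c r θ) := by
    intro r hr
    have := circle_bound (f := fun z => g z * g z) (hg.mul hg) c hr
    rw [hF]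
    simpa [norm_mul, pow_two] using this
  -- translated function
  set G : ℂ → ℝ := fun z => F (c + z) with hG
  have hGint : Integrable G := by
    have h1 : MeasurePreserving (fun z : ℂ => c + z) volume volume :=
      measurePreserving_add_left volume c
    exact (h1.integrable_comp_emb (Homeomorph.addLeft c).measurableEmbedding).2 hint
  have hGnn : ∀ z, 0 ≤ G z := fun z => by positivity
  have hGint_eq : ∫ z, G z = ∫ z, F z := by
    simpa using integral_add_left_eq_self F c
  set W : ℝ × ℝ → ℝ := fun p => p.1 • G (Complex.polarCoord.symm p) with hW
  have polar : ∫ p in polarCoord.target, W p = ∫ z, F z := by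
    rw [hW]
    rw [Complex.integral_comp_polarCoord_symm G]
    exact hGint_eq
  -- integrability of W on the target, via the Jacobian lemma
  set B : ℝ × ℝ → ℝ × ℝ →L[ℝ] ℝ × ℝ := fun p =>
    LinearMap.toContinuousLinearMap (Matrix.toLin (Module.Basis.finTwoProd ℝ) (Module.Basis.finTwoProd ℝ)
      !![Real.cos p.2, -p.1 * Real.sin p.2; Real.sin p.2, p.1 * Real.cos p.2]) with hB
  have A : ∀ p ∈ polarCoord.target, HasFDerivWithinAt polarCoord.symm (B p) polarCoord.target p :=
    fun p _ => (hasFDerivAt_polarCoord_symm p).hasFDerivWithinAt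
  have B_det : ∀ p, (B p).det = p.1 := by
    intro p
    conv_rhs => rw [← one_mul p.1, ← Real.cos_sq_add_sin_sq p.2]
    simp only [B, neg_mul, LinearMap.det_toContinuousLinearMap, LinearMap.det_toLin,
      Matrix.det_fin_two_of, sub_neg_eq_add]
    ring
  set G' : ℝ × ℝ → ℝ := fun q => G (Complex.equivRealProdCLM.symm q) with hG'
  have hG'int : Integrable G' := by
    exact ((MeasurePreserving.symm _ Complex.volume_preserving_equiv_real_prod).integrable_comp_emb
      Complex.measurableEquivRealProd.symm.measurableEmbedding).2 hGint
  have hWT : IntegrableOn W polarCoord.target := by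
    have hinj : InjOn polarCoord.symm polarCoord.target := by
      have := polarCoord.symm.injOn
      rwa [OpenPartialHomeomorph.symm_source] at this
    have himg := (integrableOn_image_iff_integrableOn_abs_det_fderiv_smul volume
      (polarCoord.open_target.measurableSet) A hinj G').2
    rw [polarCoord.symm_image_target_eq_source] at himg
    have h1 : IntegrableOn (fun p => |(B p).det| • G' (polarCoord.symm p)) polarCoord.target := by
      apply (integrableOn_image_iff_integrableOn_abs_det_fderiv_smul volume
        (polarCoord.open_target.measurableSet) A hinj G').1
      rw [polarCoord.symm_image_target_eq_source]
      exact hG'int.integrableOn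
    apply (integrableOn_congr_fun ?_ polarCoord.open_target.measurableSet).2 h1
    intro p hp
    rw [polarCoord_target] at hp
    show p.1 • G (Complex.polarCoord.symm p) = |(B p).det| • G' (polarCoord.symm p)
    rw [B_det, abs_of_pos (mem_Ioi.1 hp.1)]
    rfl
  -- reduce to the rectangle
  set s : Set (ℝ × ℝ) := Ioo (0:ℝ) R ×ˢ Ioo (-π) π with hs
  have hsub : s ⊆ polarCoord.target := by
    rw [polarCoord_target]
    exact prod_mono Ioo_subset_Ioi_self le_rfl
  have hWs : IntegrableOn W s := hWT.mono_set hsub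
  have hWnn : ∀ p ∈ polarCoord.target, 0 ≤ W p := by
    intro p hp
    rw [polarCoord_target] at hp
    have : (0:ℝ) < p.1 := hp.1
    have := hGnn (Complex.polarCoord.symm p)
    simp only [hW, smul_eq_mul]
    positivity
  have hmono : ∫ p in s, W p ≤ ∫ p in polarCoord.target, W p := by
    apply setIntegral_mono_set hWT
    · exact ae_restrict_of_forall_mem polarCoord.open_target.measurableSet hWnn
    · exact HasSubset.Subset.eventuallyLE hsub
  -- evaluate the rectangle integral via Fubini
  have hWs' : IntegrableOn W (Ioo (0:ℝ) R ×ˢ Ioo (-π) π) (volume.prod volume) := by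
    rwa [← Measure.volume_eq_prod]
  have hfub : ∫ p in s, W p = ∫ r in Ioo (0:ℝ) R, ∫ θ in Ioo (-π) π, W (r, θ) := by
    rw [hs]
    rw [show (volume : Measure (ℝ × ℝ)) = volume.prod volume from Measure.volume_eq_prod ℝ ℝ]
    exact setIntegral_prod W hWs'
  -- inner bound
  have hIinn : ∀ r ∈ Ioo (0:ℝ) R,
      2 * π * ‖g c‖ ^ 2 * r ≤ ∫ θ in Ioo (-π) π, W (r, θ) := by
    intro r hr
    have hrpos : 0 < r := hr.1
    have hcm : ∀ θ : ℝ, G (Complex.polarCoord.symm (r, θ)) = F (circleMap c r θ) := by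
      intro θ
      rw [hG]
      congr 1
      simp [circleMap, Complex.exp_mul_I, Complex.ofReal_cos, Complex.ofReal_sin]
    have h1 : ∫ θ in Ioo (-π) π, W (r, θ) = r * ∫ θ in (-π)..π, F (circleMap c r θ) := by
      simp only [hW, smul_eq_mul, hcm]
      rw [← intervalIntegral.integral_const_mul,
        intervalIntegral.integral_of_le (by linarith [Real.pi_pos] : -π ≤ π),
        integral_Ioc_eq_integral_Ioo]
    have hper : Function.Periodic (fun θ => F (circleMap c r θ)) (2 * π) :=
      (periodic_circleMap c r).comp F
    have h2 : ∫ θ in (-π)..π, F (circleMap c r θ) = ∫ θ in (0:ℝ)..(2*π), F (circleMap c r θ) := by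
      have h3 := hper.intervalIntegral_add_eq (-π) 0
      have e1 : -π + 2*π = π := by ring
      have e2 : (0:ℝ) + 2*π = 2*π := by ring
      rw [e1, e2] at h3
      exact h3
    calc 2 * π * ‖g c‖ ^ 2 * r ≤ (∫ θ in (0:ℝ)..(2*π), F (circleMap c r θ)) * r :=
          mul_le_mul_of_nonneg_right (circ r hrpos) hrpos.le
      _ = r * ∫ θ in (-π)..π, F (circleMap c r θ) := by rw [h2]; ring
      _ = ∫ θ in Ioo (-π) π, W (r, θ) := h1.symm
  -- outer integration
  have hInt1 : IntegrableOn (fun r => ∫ θ in Ioo (-π) π, W (r, θ)) (Ioo (0:ℝ) R) := by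
    have h4 : Integrable W ((volume.restrict (Ioo (0:ℝ) R)).prod (volume.restrict (Ioo (-π) π))) := by
      rwa [Measure.prod_restrict]
    exact h4.integral_prod_left
  have hInt2 : IntegrableOn (fun r => 2 * π * ‖g c‖ ^ 2 * r) (Ioo (0:ℝ) R) :=
    ((continuous_const.mul continuous_id).integrableOn_Icc (a := (0:ℝ)) (b := R)).mono_set
      Ioo_subset_Icc_self
  have houter : ∫ r in Ioo (0:ℝ) R, 2 * π * ‖g c‖ ^ 2 * r ≤
      ∫ r in Ioo (0:ℝ) R, ∫ θ in Ioo (-π) π, W (r, θ) :=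
    setIntegral_mono_on hInt2 hInt1 measurableSet_Ioo hIinn
  have hval : ∫ r in Ioo (0:ℝ) R, 2 * π * ‖g c‖ ^ 2 * r = π * R ^ 2 * ‖g c‖ ^ 2 := by
    rw [← integral_Ioc_eq_integral_Ioo, ← intervalIntegral.integral_of_le hR.le,
      intervalIntegral.integral_const_mul, integral_id]
    ring
  calc π * R ^ 2 * ‖g c‖ ^ 2 = ∫ r in Ioo (0:ℝ) R, 2 * π * ‖g c‖ ^ 2 * r := hval.symm
    _ ≤ ∫ r in Ioo (0:ℝ) R, ∫ θ in Ioo (-π) π, W (r, θ) := houter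
    _ = ∫ p in s, W p := hfub.symm
    _ ≤ ∫ p in polarCoord.target, W p := hmono
    _ = ∫ z, F z := polar


lemma entire_L2_zero {g : ℂ → ℂ} (hg : Differentiable ℂ g)
    (hint : Integrable (fun z : ℂ => ‖g z‖ ^ 2)) (c : ℂ) : g c = 0 := by
  by_contra hc
  set C := ∫ z : ℂ, ‖g z‖ ^ 2 with hCdef
  have hC : 0 ≤ C := integral_nonneg fun z => by positivity
  have hgc : 0 < ‖g c‖ ^ 2 := by
    have := norm_pos_iff.2 hc
    positivity
  set R : ℝ := Real.sqrt ((C + 1) / (π * ‖g c‖ ^ 2)) with hRdef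
  have hq : 0 < (C + 1) / (π * ‖g c‖ ^ 2) := by
    apply div_pos (by linarith) (by positivity)
  have hR : 0 < R := Real.sqrt_pos.2 hq
  have hb := disk_bound hg hint c hR
  rw [hRdef, Real.sq_sqrt hq.le] at hb
  have : π * ((C + 1) / (π * ‖g c‖ ^ 2)) * ‖g c‖ ^ 2 = C + 1 := by
    have h9 : π * ‖g c‖ ^ 2 ≠ 0 := by positivity
    calc π * ((C + 1) / (π * ‖g c‖ ^ 2)) * ‖g c‖ ^ 2
        = (C + 1) * ((π * ‖g c‖ ^ 2) / (π * ‖g c‖ ^ 2)) := by ring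
      _ = C + 1 := by rw [div_self h9, mul_one]
  rw [this] at hb
  rw [← hCdef] at hb
  linarith

end

end HarmonicLiouvilleAux

section HarmonicLiouvilleMain

open Set
open scoped Real

set_option maxHeartbeats 1000000

/-- Liouville theorem with finite Dirichlet energy: a `C²` harmonic function on `ℝ²`
whose gradient is square-integrable is constant. -/
theorem harmonic_finite_dirichlet_const
    (h : EuclideanSpace ℝ (Fin 2) → ℝ)
    (hreg : ContDiff ℝ 2 h)
    (hharm : ∀ x, ∑ i : Fin 2,
      fderiv ℝ (fun y => fderiv ℝ h y (EuclideanSpace.single i (1:ℝ))) x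
        (EuclideanSpace.single i (1:ℝ)) = 0)
    (hint : Integrable (fun x => ‖fderiv ℝ h x‖ ^ 2)) :
    ∀ x y, h x = h y := by
  classical
  set e := Complex.orthonormalBasisOneI.repr with he
  set eL : ℂ →L[ℝ] EuclideanSpace ℝ (Fin 2) :=
    (e.toContinuousLinearEquiv : ℂ →L[ℝ] EuclideanSpace ℝ (Fin 2)) with heL
  have heLe : ∀ z : ℂ, eL z = e z := fun z => rfl
  have e1 : e 1 = EuclideanSpace.single (0 : Fin 2) (1:ℝ) := by
    ext j
    fin_cases j <;> simp [he, EuclideanSpace.single_apply]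
  have eI : e Complex.I = EuclideanSpace.single (1 : Fin 2) (1:ℝ) := by
    ext j
    fin_cases j <;> simp [he, EuclideanSpace.single_apply]
  set u : ℂ → ℝ := fun z => h (e z) with hu
  have hucd : ContDiff ℝ 2 u := hreg.comp e.contDiff
  have hud : Differentiable ℝ u := hucd.differentiable (by norm_num)
  have hhd : Differentiable ℝ h := hreg.differentiable (by norm_num)
  have hcomp : ∀ z, fderiv ℝ u z = (fderiv ℝ h (e z)).comp eL := by
    intro z
    have h1 : HasFDerivAt u ((fderiv ℝ h (e z)).comp eL) z :=
      ((hhd (e z)).hasFDerivAt.comp z eL.hasFDerivAt)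
    exact h1.fderiv
  have hfu : ∀ z w, fderiv ℝ u z w = fderiv ℝ h (e z) (e w) := by
    intro z w; rw [hcomp z]; rfl
  have hfd1 : ContDiff ℝ 1 (fderiv ℝ u) := hucd.fderiv_right (by norm_num)
  have hBd : ∀ z, HasFDerivAt (fderiv ℝ u) (fderiv ℝ (fderiv ℝ u) z) z :=
    fun z => (hfd1.differentiable one_ne_zero z).hasFDerivAt
  have hsymm : ∀ z v w, fderiv ℝ (fderiv ℝ u) z v w = fderiv ℝ (fderiv ℝ u) z w v :=
    fun z v w => second_derivative_symmetric (fun y => (hud y).hasFDerivAt) (hBd z) v w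
  have hhfd1 : ContDiff ℝ 1 (fderiv ℝ h) := hreg.fderiv_right (by norm_num)
  have hKey : ∀ z v w, fderiv ℝ (fderiv ℝ u) z v w
      = fderiv ℝ (fun x => fderiv ℝ h x (e w)) (e z) (e v) := by
    intro z v w
    have h1 : HasFDerivAt (fun y => fderiv ℝ u y w)
        ((ContinuousLinearMap.apply ℝ ℝ w).comp (fderiv ℝ (fderiv ℝ u) z)) z :=
      (ContinuousLinearMap.apply ℝ ℝ w).hasFDerivAt.comp z (hBd z)
    have hdh1 : HasFDerivAt (fun x => fderiv ℝ h x (e w))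
        ((ContinuousLinearMap.apply ℝ ℝ (e w)).comp (fderiv ℝ (fderiv ℝ h) (e z))) (e z) :=
      (ContinuousLinearMap.apply ℝ ℝ (e w)).hasFDerivAt.comp (e z)
        ((hhfd1.differentiable one_ne_zero (e z)).hasFDerivAt)
    have h2 : HasFDerivAt (fun y => fderiv ℝ h (e y) (e w))
        (((ContinuousLinearMap.apply ℝ ℝ (e w)).comp
          (fderiv ℝ (fderiv ℝ h) (e z))).comp eL) z :=
      hdh1.comp z eL.hasFDerivAt
    have heq : (fun y => fderiv ℝ u y w) = (fun y => fderiv ℝ h (e y) (e w)) :=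
      funext fun y => hfu y w
    rw [heq] at h1
    have h3 := congrArg (fun L : ℂ →L[ℝ] ℝ => L v) (h1.unique h2)
    have h4 : fderiv ℝ (fun x => fderiv ℝ h x (e w)) (e z)
        = (ContinuousLinearMap.apply ℝ ℝ (e w)).comp (fderiv ℝ (fderiv ℝ h) (e z)) :=
      hdh1.fderiv
    rw [h4]
    exact h3
  have hharm' : ∀ z, fderiv ℝ (fderiv ℝ u) z 1 1
      + fderiv ℝ (fderiv ℝ u) z Complex.I Complex.I = 0 := by
    intro z
    have hs := hharm (e z)
    rw [Fin.sum_univ_two] at hs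
    rw [hKey z 1 1, hKey z Complex.I Complex.I, e1, eI]
    exact hs
  set gfun : ℂ → ℂ := fun z =>
    ((fderiv ℝ u z 1 : ℝ) : ℂ) - Complex.I * ((fderiv ℝ u z Complex.I : ℝ) : ℂ) with hg
  have hgd : Differentiable ℂ gfun := by
    intro z
    set B := fderiv ℝ (fderiv ℝ u) z with hBdef
    set cc : ℂ := ((B 1 1 : ℝ) : ℂ) - Complex.I * ((B 1 Complex.I : ℝ) : ℂ) with hcc
    have h1 : HasFDerivAt (fun y => ((fderiv ℝ u y 1 : ℝ) : ℂ))
        (Complex.ofRealCLM.comp ((ContinuousLinearMap.apply ℝ ℝ (1:ℂ)).comp B)) z :=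
      Complex.ofRealCLM.hasFDerivAt.comp z
        ((ContinuousLinearMap.apply ℝ ℝ (1:ℂ)).hasFDerivAt.comp z (hBd z))
    have h2 : HasFDerivAt (fun y => ((fderiv ℝ u y Complex.I : ℝ) : ℂ))
        (Complex.ofRealCLM.comp ((ContinuousLinearMap.apply ℝ ℝ (Complex.I)).comp B)) z :=
      Complex.ofRealCLM.hasFDerivAt.comp z
        ((ContinuousLinearMap.apply ℝ ℝ (Complex.I)).hasFDerivAt.comp z (hBd z))
    have h3 : HasFDerivAt gfun
        (Complex.ofRealCLM.comp ((ContinuousLinearMap.apply ℝ ℝ (1:ℂ)).comp B)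
          - Complex.I • Complex.ofRealCLM.comp
            ((ContinuousLinearMap.apply ℝ ℝ (Complex.I)).comp B)) z :=
      h1.sub (h2.const_mul Complex.I)
    have hsy : B Complex.I 1 = B 1 Complex.I := hsymm z Complex.I 1
    have hha : B 1 1 + B Complex.I Complex.I = 0 := hharm' z
    have hBvw : ∀ (v w : ℂ), B v w = v.re * B 1 w + v.im * B Complex.I w := by
      intro v w
      have hv : B v = v.re • B 1 + v.im • B Complex.I := by
        conv_lhs => rw [show v = v.re • (1:ℂ) + v.im • Complex.I by
          simp [Complex.real_smul, Complex.re_add_im]]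
        rw [map_add, B.map_smul, B.map_smul]
      rw [hv]
      simp [smul_eq_mul]
    have hII : B Complex.I Complex.I = -(B 1 1) := by linarith
    have hlin : ∀ v : ℂ, ((B v 1 : ℝ) : ℂ) - Complex.I * ((B v Complex.I : ℝ) : ℂ)
        = v * cc := by
      intro v
      rw [hBvw v 1, hBvw v Complex.I, hsy, hII, hcc]
      conv_rhs => rw [← Complex.re_add_im v]
      push_cast
      linear_combination (v.im : ℂ) * ((B 1 Complex.I : ℝ) : ℂ) * Complex.I_sq
    have hM : (Complex.ofRealCLM.comp ((ContinuousLinearMap.apply ℝ ℝ (1:ℂ)).comp B)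
          - Complex.I • Complex.ofRealCLM.comp
            ((ContinuousLinearMap.apply ℝ ℝ (Complex.I)).comp B))
        = (ContinuousLinearMap.smulRight (1 : ℂ →L[ℂ] ℂ) cc).restrictScalars ℝ := by
      apply ContinuousLinearMap.ext
      intro v
      simp only [ContinuousLinearMap.sub_apply, ContinuousLinearMap.smul_apply,
        ContinuousLinearMap.coe_comp', Function.comp_apply,
        ContinuousLinearMap.apply_apply, Complex.ofRealCLM_apply,
        ContinuousLinearMap.coe_restrictScalars', ContinuousLinearMap.smulRight_apply,
        ContinuousLinearMap.one_apply, smul_eq_mul]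
      exact hlin v
    rw [hM] at h3
    exact (hasFDerivAt_of_restrictScalars ℝ (f' := ContinuousLinearMap.smulRight (1 : ℂ →L[ℂ] ℂ) cc) h3 rfl).differentiableAt
  -- integrability of ‖gfun‖²
  have hnormcomp : ∀ z, ‖fderiv ℝ u z‖ = ‖fderiv ℝ h (e z)‖ := by
    intro z
    rw [hcomp z, heL]
    exact ContinuousLinearMap.opNorm_comp_linearIsometryEquiv _ _
  have hbound : ∀ z, ‖gfun z‖ ^ 2 ≤ 4 * ‖fderiv ℝ h (e z)‖ ^ 2 := by
    intro z
    have h1 : |fderiv ℝ u z 1| ≤ ‖fderiv ℝ u z‖ := by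
      simpa using (fderiv ℝ u z).le_opNorm 1
    have h2 : |fderiv ℝ u z Complex.I| ≤ ‖fderiv ℝ u z‖ := by
      simpa using (fderiv ℝ u z).le_opNorm Complex.I
    have h3 : ‖gfun z‖ ≤ |fderiv ℝ u z 1| + |fderiv ℝ u z Complex.I| := by
      refine (norm_sub_le _ _).trans ?_
      simp
    have h4 : ‖gfun z‖ ≤ 2 * ‖fderiv ℝ h (e z)‖ := by
      rw [← hnormcomp z]; linarith
    have h5 : (0:ℝ) ≤ ‖gfun z‖ := norm_nonneg _
    nlinarith [norm_nonneg (fderiv ℝ h (e z))]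
  have hint2 : Integrable (fun z : ℂ => ‖fderiv ℝ h (e z)‖ ^ 2) :=
    (e.measurePreserving.integrable_comp_emb e.toHomeomorph.measurableEmbedding).2 hint
  have hgint : Integrable (fun z : ℂ => ‖gfun z‖ ^ 2) := by
    apply Integrable.mono' (hint2.const_mul 4)
    · exact ((hgd.continuous.norm.pow 2)).aestronglyMeasurable
    · refine Filter.Eventually.of_forall fun z => ?_
      rw [Real.norm_of_nonneg (by positivity)]
      exact hbound z
  have gzero : ∀ z, gfun z = 0 := fun z => entire_L2_zero hgd hgint z
  have hux : ∀ z, fderiv ℝ u z 1 = 0 := by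
    intro z
    have h0 := congrArg Complex.re (gzero z)
    simpa [hg] using h0
  have huy : ∀ z, fderiv ℝ u z Complex.I = 0 := by
    intro z
    have h0 := congrArg Complex.im (gzero z)
    simp [hg] at h0
    linarith
  have hfz : ∀ x, fderiv ℝ h x = 0 := by
    intro x
    have hu0 : fderiv ℝ u (e.symm x) = 0 := by
      apply ContinuousLinearMap.ext
      intro v
      rw [show v = v.re • (1:ℂ) + v.im • Complex.I by
        simp [Complex.real_smul, Complex.re_add_im]]
      rw [map_add, (fderiv ℝ u (e.symm x)).map_smul, (fderiv ℝ u (e.symm x)).map_smul,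
        hux, huy]
      simp
    apply ContinuousLinearMap.ext
    intro w
    have h6 : fderiv ℝ u (e.symm x) (e.symm w) = fderiv ℝ h x w := by
      rw [hfu, e.apply_symm_apply, e.apply_symm_apply]
    rw [← h6, hu0]
    simp
  exact fun x y => is_const_of_fderiv_eq_zero hhd hfz x y

end HarmonicLiouvilleMain
end

section
/- Let E ⊂ ℝⁿ be a measurable set with 0 < |E| < ∞, let ρ : ℝⁿ → ℝ be measurable with 0 ≤ ρ ≤ 1 and ∫_E ρ(x) dx ≥ c for some c > 0, and let v : ℝⁿ → ℝ be square-integrable on E. Writing v̄ := (1/|E|) ∫_E v(x) dx, one has ( ∫_E v² )^{1/2} ≤ (1 + |E|/c) ( ∫_E (v − v̄)² )^{1/2} + (|E|/c) ( ∫_E (ρ v)² )^{1/2}. -/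
open MeasureTheory

lemma sqrt_add_le' {a b : ℝ} (ha : 0 ≤ a) (hb : 0 ≤ b) :
    Real.sqrt (a + b) ≤ Real.sqrt a + Real.sqrt b := by
  have h : a + b ≤ (Real.sqrt a + Real.sqrt b) ^ 2 := by
    nlinarith [Real.sq_sqrt ha, Real.sq_sqrt hb,
      mul_nonneg (Real.sqrt_nonneg a) (Real.sqrt_nonneg b)]
  calc Real.sqrt (a + b) ≤ Real.sqrt ((Real.sqrt a + Real.sqrt b) ^ 2) := Real.sqrt_le_sqrt h
    _ = Real.sqrt a + Real.sqrt b := Real.sqrt_sq (by positivity)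

/-- Cauchy–Schwarz: `∫ |f| ≤ √(μ univ) * √(∫ f²)` for `f ∈ L²` on a finite measure. -/
lemma integral_abs_le_sqrt_mul_sqrt {α : Type*} [MeasurableSpace α] (μ : Measure α)
    [IsFiniteMeasure μ] {f : α → ℝ} (hf : MemLp f 2 μ) :
    ∫ x, |f x| ∂μ ≤ Real.sqrt (μ Set.univ).toReal * Real.sqrt (∫ x, f x ^ 2 ∂μ) := by
  have hpq : Real.HolderConjugate 2 2 := by constructor <;> norm_num
  have habs : MemLp (fun x => |f x|) (ENNReal.ofReal 2) μ := by
    rw [show ENNReal.ofReal 2 = 2 by norm_num]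
    exact hf.abs
  have hone : MemLp (fun _ : α => (1 : ℝ)) (ENNReal.ofReal 2) μ := memLp_const 1
  have h := integral_mul_le_Lp_mul_Lq_of_nonneg hpq
    (Filter.Eventually.of_forall fun x => abs_nonneg (f x))
    (Filter.Eventually.of_forall fun _ => zero_le_one) habs hone
  simp only [mul_one, Real.one_rpow] at h
  calc ∫ x, |f x| ∂μ ≤ (∫ x, |f x| ^ (2:ℝ) ∂μ) ^ (1/(2:ℝ)) * (∫ _x, (1:ℝ) ∂μ) ^ (1/(2:ℝ)) := by
        convert h using 3 <;> norm_num
    _ = Real.sqrt (μ Set.univ).toReal * Real.sqrt (∫ x, f x ^ 2 ∂μ) := by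
        rw [integral_const, smul_eq_mul, mul_one, mul_comm, ← Real.sqrt_eq_rpow,
          ← Real.sqrt_eq_rpow]
        congr 1
        congr 1
        refine integral_congr_ae (Filter.Eventually.of_forall fun x => ?_)
        show |f x| ^ (2:ℝ) = f x ^ 2
        rw [show (2:ℝ) = ((2:ℕ):ℝ) by norm_num, Real.rpow_natCast, sq_abs]

/-- Weighted-average L² estimate: if `E ⊂ ℝⁿ` has finite positive measure, `0 ≤ ρ ≤ 1`
carries mass at least `c > 0` on `E`, and `v ∈ L²(E)`, then with `v̄` the average of
`v` over `E`, `‖v‖_{L²(E)} ≤ (1 + |E|/c) ‖v − v̄‖_{L²(E)} + (|E|/c) ‖ρv‖_{L²(E)}`. -/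
theorem weighted_average_L2_estimate
    (n : ℕ) (E : Set (Fin n → ℝ)) (hE : MeasurableSet E)
    (hE0 : 0 < volume E) (hEtop : volume E < ⊤)
    (ρ : (Fin n → ℝ) → ℝ) (hρmeas : Measurable ρ)
    (hρ0 : ∀ x, 0 ≤ ρ x) (hρ1 : ∀ x, ρ x ≤ 1)
    (c : ℝ) (hc : 0 < c) (hmass : c ≤ ∫ x in E, ρ x)
    (v : (Fin n → ℝ) → ℝ) (hv : MemLp v 2 (volume.restrict E)) :
    Real.sqrt (∫ x in E, (v x) ^ 2)
      ≤ (1 + (volume E).toReal / c) *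
          Real.sqrt (∫ x in E, (v x - (volume E).toReal⁻¹ * ∫ y in E, v y) ^ 2)
        + ((volume E).toReal / c) * Real.sqrt (∫ x in E, (ρ x * v x) ^ 2) := by
  set μ := volume.restrict E with hμdef
  haveI : IsFiniteMeasure μ := ⟨by rw [Measure.restrict_apply_univ]; exact hEtop⟩
  set M := (volume E).toReal with hMdef
  have hM0 : 0 < M := ENNReal.toReal_pos hE0.ne' hEtop.ne
  have hμuniv : (μ Set.univ).toReal = M := by
    rw [hμdef, Measure.restrict_apply_univ]
  set m : ℝ := M⁻¹ * ∫ y in E, v y with hmdef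
  set w : (Fin n → ℝ) → ℝ := fun x => v x - m with hwdef
  -- basic integrability
  have intv : Integrable v μ := hv.integrable one_le_two
  have hw : MemLp w 2 μ := hv.sub (memLp_const m)
  have intw : Integrable w μ := hw.integrable one_le_two
  have hρv : MemLp (fun x => ρ x * v x) 2 μ := by
    refine MemLp.of_le hv (hρmeas.aestronglyMeasurable.mul hv.1) ?_
    refine Filter.Eventually.of_forall fun x => ?_
    rw [Real.norm_eq_abs, Real.norm_eq_abs, abs_mul]
    have : |ρ x| ≤ 1 := abs_le.2 ⟨by linarith [hρ0 x], hρ1 x⟩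
    nlinarith [abs_nonneg (v x), abs_nonneg (ρ x)]
  have intρv : Integrable (fun x => ρ x * v x) μ := hρv.integrable one_le_two
  have intv2 : Integrable (fun x => v x ^ 2) μ := hv.integrable_sq
  have intw2 : Integrable (fun x => w x ^ 2) μ := hw.integrable_sq
  -- ∫ v = m * M
  have hintv : ∫ x, v x ∂μ = m * M := by
    rw [hmdef]
    field_simp
    rfl
  -- Step A : ∫ v² = ∫ w² + m² M
  have stepA : ∫ x, v x ^ 2 ∂μ = (∫ x, w x ^ 2 ∂μ) + m ^ 2 * M := by
    have hpt : ∀ x, w x ^ 2 = v x ^ 2 - 2 * m * v x + m ^ 2 := by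
      intro x; rw [hwdef]; ring
    have hsub : Integrable (fun x => v x ^ 2 - 2 * m * v x) μ :=
      intv2.sub (intv.const_mul (2 * m))
    have : ∫ x, w x ^ 2 ∂μ
        = (∫ x, v x ^ 2 ∂μ) - 2 * m * (∫ x, v x ∂μ) + m ^ 2 * M := by
      rw [integral_congr_ae (Filter.Eventually.of_forall hpt),
        integral_add hsub (integrable_const _),
        integral_sub intv2 (intv.const_mul (2 * m)), integral_const_mul,
        integral_const, smul_eq_mul, measureReal_def, hμuniv, mul_comm M (m ^ 2)]
    rw [this, hintv]; ring
  -- Cauchy–Schwarz consequences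
  set W := Real.sqrt (∫ x, w x ^ 2 ∂μ) with hWdef
  set R := Real.sqrt (∫ x, (ρ x * v x) ^ 2 ∂μ) with hRdef
  have csw : ∫ x, |w x| ∂μ ≤ Real.sqrt M * W := by
    have := integral_abs_le_sqrt_mul_sqrt μ hw
    rwa [hμuniv] at this
  have csρv : ∫ x, |ρ x * v x| ∂μ ≤ Real.sqrt M * R := by
    have := integral_abs_le_sqrt_mul_sqrt μ hρv
    rwa [hμuniv] at this
  -- Step C : c * |m| ≤ ∫|w| + ∫|ρv|
  have intρ : Integrable ρ μ := by
    refine Integrable.mono' (integrable_const 1) hρmeas.aestronglyMeasurable ?_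
    refine Filter.Eventually.of_forall fun x => ?_
    have : |ρ x| ≤ 1 := abs_le.2 ⟨by linarith [hρ0 x], hρ1 x⟩
    simpa [Real.norm_eq_abs] using this
  have intρw : Integrable (fun x => ρ x * (m - v x)) μ := by
    refine Integrable.mono' (((integrable_const m).sub intv).abs)
      (hρmeas.aestronglyMeasurable.mul (aestronglyMeasurable_const.sub hv.1)) ?_
    refine Filter.Eventually.of_forall fun x => ?_
    have h1 : |ρ x| ≤ 1 := abs_le.2 ⟨by linarith [hρ0 x], hρ1 x⟩
    have h2 : |ρ x * (m - v x)| ≤ |m - v x| := by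
      rw [abs_mul]
      nlinarith [abs_nonneg (m - v x), abs_nonneg (ρ x)]
    simpa [Real.norm_eq_abs, abs_abs, abs_mul] using h2
  have absint : ∀ f : (Fin n → ℝ) → ℝ, |∫ x, f x ∂μ| ≤ ∫ x, |f x| ∂μ := fun f => by
    simpa [Real.norm_eq_abs] using norm_integral_le_integral_norm (μ := μ) f
  have hsum : (∫ x, ρ x * (m - v x) ∂μ) + (∫ x, ρ x * v x ∂μ) = (∫ x, ρ x ∂μ) * m := by
    rw [← integral_add intρw intρv, ← integral_mul_const]
    exact integral_congr_ae (Filter.Eventually.of_forall fun x => by ring)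
  have habs1 : |∫ x, ρ x * (m - v x) ∂μ| ≤ ∫ x, |w x| ∂μ := by
    refine (absint _).trans ?_
    refine integral_mono intρw.abs intw.abs fun x => ?_
    rw [abs_mul, hwdef]
    have h1 : |ρ x| ≤ 1 := abs_le.2 ⟨by linarith [hρ0 x], hρ1 x⟩
    have h2 : |m - v x| = |v x - m| := abs_sub_comm _ _
    nlinarith [abs_nonneg (m - v x), abs_nonneg (ρ x)]
  have habs2 : |∫ x, ρ x * v x ∂μ| ≤ ∫ x, |ρ x * v x| ∂μ := absint _
  have hρint_nonneg : (0:ℝ) ≤ ∫ x, ρ x ∂μ := integral_nonneg fun x => hρ0 x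
  have stepC : c * |m| ≤ (∫ x, |w x| ∂μ) + ∫ x, |ρ x * v x| ∂μ := by
    have h1 : c * |m| ≤ (∫ x, ρ x ∂μ) * |m| :=
      mul_le_mul_of_nonneg_right hmass (abs_nonneg m)
    have h2 : (∫ x, ρ x ∂μ) * |m| = |(∫ x, ρ x ∂μ) * m| := by
      rw [abs_mul (∫ x, ρ x ∂μ) m, abs_of_nonneg hρint_nonneg]
    calc c * |m| ≤ |(∫ x, ρ x ∂μ) * m| := by rw [← h2]; exact h1
      _ = |(∫ x, ρ x * (m - v x) ∂μ) + (∫ x, ρ x * v x ∂μ)| := by rw [hsum]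
      _ ≤ |∫ x, ρ x * (m - v x) ∂μ| + |∫ x, ρ x * v x ∂μ| := abs_add_le _ _
      _ ≤ (∫ x, |w x| ∂μ) + ∫ x, |ρ x * v x| ∂μ := add_le_add habs1 habs2
  -- combine
  have hWnn : 0 ≤ W := Real.sqrt_nonneg _
  have hRnn : 0 ≤ R := Real.sqrt_nonneg _
  have hsM : Real.sqrt M * Real.sqrt M = M := Real.mul_self_sqrt hM0.le
  have hsMnn : 0 ≤ Real.sqrt M := Real.sqrt_nonneg _
  have hmM : |m| * Real.sqrt M ≤ (M / c) * (W + R) := by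
    have h1 : c * |m| ≤ Real.sqrt M * (W + R) := by
      calc c * |m| ≤ (∫ x, |w x| ∂μ) + ∫ x, |ρ x * v x| ∂μ := stepC
        _ ≤ Real.sqrt M * W + Real.sqrt M * R := add_le_add csw csρv
        _ = Real.sqrt M * (W + R) := by ring
    have h2 : |m| * Real.sqrt M * c ≤ (M / c) * (W + R) * c := by
      have := mul_le_mul_of_nonneg_right h1 hsMnn
      calc |m| * Real.sqrt M * c = (c * |m|) * Real.sqrt M := by ring
        _ ≤ (Real.sqrt M * (W + R)) * Real.sqrt M := this
        _ = (Real.sqrt M * Real.sqrt M) * (W + R) := by ring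
        _ = M * (W + R) := by rw [hsM]
        _ = (M / c) * (W + R) * c := by field_simp
    exact le_of_mul_le_mul_right h2 hc
  have hA : Real.sqrt (∫ x, v x ^ 2 ∂μ) ≤ W + |m| * Real.sqrt M := by
    rw [stepA]
    calc Real.sqrt ((∫ x, w x ^ 2 ∂μ) + m ^ 2 * M)
        ≤ W + Real.sqrt (m ^ 2 * M) :=
          sqrt_add_le' (integral_nonneg fun x => sq_nonneg _)
            (by positivity)
      _ = W + |m| * Real.sqrt M := by
          rw [Real.sqrt_mul (sq_nonneg m), Real.sqrt_sq_eq_abs]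
  have final : Real.sqrt (∫ x, v x ^ 2 ∂μ) ≤ (1 + M / c) * W + (M / c) * R := by
    calc Real.sqrt (∫ x, v x ^ 2 ∂μ) ≤ W + |m| * Real.sqrt M := hA
      _ ≤ W + (M / c) * (W + R) := by linarith [hmM]
      _ = (1 + M / c) * W + (M / c) * R := by ring
  exact final
end

section
/- For every q ∈ (2,∞) there exists a constant C_q > 0, depending only on q, with the following property. Let B = B(x₀, r) ⊂ ℝ² be a ball, let ρ : ℝ² → ℝ be measurable with 0 ≤ ρ ≤ 1 and ∫_B ρ(x) dx ≥ c for some c > 0, and let v : ℝ² → ℝ be continuously differentiable with ∇v ∈ L^q(ℝ²). Then for every x ∈ B, |v(x)| ≤ C_q [ r^{1−2/q} ( ∫_{ℝ²} ‖∇v‖^q )^{1/q} + (r/c) ( ∫_B (ρ v)² )^{1/2} ]. -/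
open MeasureTheory Metric Set

local notation "E2" => EuclideanSpace ℝ (Fin 2)

lemma comp_affine_integrable {G : E2 → ℝ} (hG : Integrable G) (x : E2) {t : ℝ} (ht : t ≠ 0) :
    Integrable (fun y : E2 => G (x + t • (y - x))) := by
  have h1 : Integrable (fun z : E2 => G ((x - t • x) + z)) := hG.comp_add_left _
  have h2 := h1.comp_smul (μ := volume) ht
  have : (fun y : E2 => G (x + t • (y - x))) = fun y => G ((x - t • x) + t • y) := by
    funext y
    congr 1
    module
  rw [this]
  exact h2

lemma comp_affine_integral (G : E2 → ℝ) (x : E2) {t : ℝ} (ht : 0 < t) :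
    ∫ y, G (x + t • (y - x)) = (t ^ 2)⁻¹ * ∫ z, G z := by
  have h3 := Measure.integral_comp_smul_of_nonneg (μ := volume)
    (fun z => G ((x - t • x) + z)) t (hR := ht.le)
  simp only [integral_add_left_eq_self, finrank_euclideanSpace_fin, smul_eq_mul] at h3
  rw [← h3]
  congr 1
  funext y
  congr 1
  module

lemma holder_set {q : ℝ} (hq : 2 < q) {s : Set E2} (hs : MeasurableSet s)
    (hμ : volume s ≠ ⊤) {F : E2 → ℝ} (hFc : Continuous F) (hFnn : ∀ z, 0 ≤ F z)
    (hFq : Integrable (fun z => F z ^ q)) :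
    ∫ y in s, F y ≤ ((volume s).toReal) ^ (1 - 1/q) * (∫ z, F z ^ q) ^ (1/q) := by
  have hq1 : (1:ℝ) < q := by linarith
  have hq0 : (0:ℝ) < q := by linarith
  haveI : IsFiniteMeasure (volume.restrict s) :=
    ⟨by rw [Measure.restrict_apply_univ]; exact hμ.lt_top⟩
  set p : ℝ := q / (q - 1) with hp
  have hpq : q.HolderConjugate p := Real.HolderConjugate.conjExponent hq1
  -- Memℒp F (ofReal q) on restrict
  have hmeas : AEStronglyMeasurable F (volume.restrict s) := hFc.aestronglyMeasurable
  have hqE0 : (ENNReal.ofReal q) ≠ 0 := by simp [ENNReal.ofReal_eq_zero]; linarith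
  have hqEt : (ENNReal.ofReal q) ≠ ⊤ := ENNReal.ofReal_ne_top
  have hmem1 : MemLp (fun y => ‖F y‖ ^ (ENNReal.ofReal q).toReal)
      (ENNReal.ofReal q / ENNReal.ofReal q) (volume.restrict s) := by
    rw [ENNReal.div_self hqE0 hqEt, memLp_one_iff_integrable]
    have : (fun y => ‖F y‖ ^ (ENNReal.ofReal q).toReal) = fun y => F y ^ q := by
      funext y
      rw [Real.norm_of_nonneg (hFnn y), ENNReal.toReal_ofReal hq0.le]
    rw [this]
    exact hFq.integrableOn
  have hmemF : MemLp F (ENNReal.ofReal q) (volume.restrict s) :=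
    (memLp_norm_rpow_iff hmeas hqE0 hqEt).1 hmem1
  have hmem1' : MemLp (fun _ : E2 => (1:ℝ)) (ENNReal.ofReal p) (volume.restrict s) :=
    memLp_const 1
  have H := integral_mul_le_Lp_mul_Lq_of_nonneg (μ := volume.restrict s) hpq
    (f := F) (g := fun _ => (1:ℝ))
    (Filter.Eventually.of_forall hFnn) (Filter.Eventually.of_forall fun _ => zero_le_one)
    hmemF hmem1'
  simp only [mul_one, Real.one_rpow] at H
  rw [integral_const, measureReal_restrict_apply_univ, smul_eq_mul, mul_one] at H
  have hs_le : ∫ y in s, F y ^ q ≤ ∫ z, F z ^ q :=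
    setIntegral_le_integral hFq
      (Filter.Eventually.of_forall fun z => Real.rpow_nonneg (hFnn z) q)
  have h1p : 1 / p = 1 - 1 / q := by
    have := hpq.inv_add_inv_eq_one
    rw [one_div, one_div]
    linarith
  calc ∫ y in s, F y ≤ (∫ y in s, F y ^ q) ^ (1/q) * ((volume s).toReal) ^ (1/p) := H
    _ ≤ (∫ z, F z ^ q) ^ (1/q) * ((volume s).toReal) ^ (1/p) := by
        gcongr
        exact setIntegral_nonneg hs fun z _ => Real.rpow_nonneg (hFnn z) q
    _ = ((volume s).toReal) ^ (1 - 1/q) * (∫ z, F z ^ q) ^ (1/q) := by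
        rw [h1p, mul_comm]

lemma key {q : ℝ} (hq : 2 < q) (x₀ : E2) {r : ℝ} (hr : 0 < r) {v : E2 → ℝ}
    (hv : ContDiff ℝ 1 v) (hint : Integrable fun z => ‖fderiv ℝ v z‖ ^ q)
    {x : E2} (hx : x ∈ ball x₀ r) :
    ∫ y in ball x₀ r, |v x - v y| ≤
      (2*r) * ((((volume (ball x₀ r)).toReal) ^ (1 - 1/q) *
        (∫ z, ‖fderiv ℝ v z‖ ^ q) ^ (1/q)) * (q/(q-2))) := by
  have hq0 : (0:ℝ) < q := by linarith
  set F : E2 → ℝ := fun z => ‖fderiv ℝ v z‖ with hF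
  have hFc : Continuous F := (hv.continuous_fderiv one_ne_zero).norm
  have hFnn : ∀ z, 0 ≤ F z := fun z => norm_nonneg _
  set B : Set E2 := ball x₀ r with hB
  set VB : ℝ := (volume B).toReal with hVB
  set N : ℝ := (∫ z, F z ^ q) ^ (1/q) with hN
  have hNnn : 0 ≤ N := Real.rpow_nonneg (integral_nonneg fun z => Real.rpow_nonneg (hFnn z) q) _
  have hVBnn : 0 ≤ VB := ENNReal.toReal_nonneg
  haveI : IsFiniteMeasure (volume.restrict B) :=
    ⟨by rw [Measure.restrict_apply_univ]; exact measure_ball_lt_top⟩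
  haveI : IsFiniteMeasure (volume.restrict (Ioc (0:ℝ) 1)) :=
    ⟨by rw [Measure.restrict_apply_univ]; exact measure_Ioc_lt_top⟩
  set f : E2 → ℝ → ℝ := fun y t => F (x + t • (y - x)) with hf
  -- joint continuity
  have hfc : Continuous fun p : E2 × ℝ => f p.1 p.2 := by
    apply hFc.comp
    exact continuous_const.add (continuous_snd.smul (continuous_fst.sub continuous_const))
  -- segment points stay in the ball
  have hseg : ∀ y ∈ B, ∀ t ∈ Icc (0:ℝ) 1, x + t • (y - x) ∈ B := by
    intro y hy t ht
    have hcvx := (convex_ball x₀ r) hx hy (by linarith [ht.1, ht.2] : (0:ℝ) ≤ 1 - t) ht.1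
      (by ring : (1 - t) + t = 1)
    have : x + t • (y - x) = (1-t) • x + t • y := by module
    rw [this]
    exact hcvx
  -- bound on the ball
  obtain ⟨M, hM⟩ := (isCompact_closedBall x₀ r).exists_bound_of_continuousOn hFc.continuousOn
  -- product integrability
  have hprod : Integrable (Function.uncurry f)
      ((volume.restrict B).prod (volume.restrict (Ioc (0:ℝ) 1))) := by
    constructor
    · exact hfc.aestronglyMeasurable
    · apply HasFiniteIntegral.of_bounded (C := M)
      rw [Measure.prod_restrict]
      apply ae_restrict_of_forall_mem (measurableSet_ball.prod measurableSet_Ioc)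
      rintro ⟨y, t⟩ ⟨hy, ht⟩
      have hz : x + t • (y - x) ∈ B := hseg y hy t ⟨ht.1.le, ht.2⟩
      have := hM _ (ball_subset_closedBall hz)
      simpa [Function.uncurry, f] using this
  -- pointwise FTC bound
  have hpt : ∀ y ∈ B, |v x - v y| ≤ (2*r) * ∫ t in Ioc (0:ℝ) 1, f y t := by
    intro y hy
    set γ : ℝ → E2 := fun s => x + s • (y - x) with hγ
    have hγc : Continuous γ := continuous_const.add (continuous_id.smul continuous_const)
    have hd : ∀ t : ℝ, HasDerivAt (fun s => v (γ s)) ((fderiv ℝ v (γ t)) (y - x)) t := by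
      intro t
      have h1 : HasDerivAt γ (y - x) t := by
        exact (by simpa using (hasDerivAt_id t).smul_const (y - x) :
          HasDerivAt (fun s : ℝ => s • (y - x)) (y - x) t).const_add x
      exact ((hv.differentiable one_ne_zero (γ t)).hasFDerivAt).comp_hasDerivAt t h1
    have hcont : Continuous fun t => (fderiv ℝ v (γ t)) (y - x) :=
      ((hv.continuous_fderiv one_ne_zero).comp hγc).clm_apply continuous_const
    have hFTC : v (γ 1) - v (γ 0) = ∫ t in (0:ℝ)..1, (fderiv ℝ v (γ t)) (y - x) :=
      (intervalIntegral.integral_eq_sub_of_hasDerivAt (fun t _ => hd t)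
        (hcont.intervalIntegrable 0 1)).symm
    have hγ0 : γ 0 = x := by simp [γ]
    have hγ1 : γ 1 = y := by simp [γ]
    have hdist : ‖y - x‖ ≤ 2 * r := by
      have h1 : dist y x ≤ dist y x₀ + dist x₀ x := dist_triangle _ _ _
      have h2 : dist y x₀ < r := mem_ball.1 hy
      have h3 : dist x₀ x < r := by rw [dist_comm]; exact mem_ball.1 hx
      rw [← dist_eq_norm]
      linarith
    have hb1 : |v x - v y| = ‖∫ t in (0:ℝ)..1, (fderiv ℝ v (γ t)) (y - x)‖ := by
      rw [← hFTC, hγ0, hγ1, Real.norm_eq_abs, abs_sub_comm]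
    have hb2 : ‖∫ t in (0:ℝ)..1, (fderiv ℝ v (γ t)) (y - x)‖ ≤
        ∫ t in (0:ℝ)..1, ‖(fderiv ℝ v (γ t)) (y - x)‖ :=
      intervalIntegral.norm_integral_le_integral_norm zero_le_one
    have hb3 : ∫ t in (0:ℝ)..1, ‖(fderiv ℝ v (γ t)) (y - x)‖ ≤
        ∫ t in (0:ℝ)..1, F (γ t) * (2*r) := by
      apply intervalIntegral.integral_mono_on zero_le_one
        (hcont.norm.intervalIntegrable 0 1)
        (((hFc.comp hγc).mul continuous_const).intervalIntegrable 0 1)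
      intro t _
      calc ‖(fderiv ℝ v (γ t)) (y - x)‖ ≤ ‖fderiv ℝ v (γ t)‖ * ‖y - x‖ :=
            (fderiv ℝ v (γ t)).le_opNorm _
        _ ≤ F (γ t) * (2*r) := by
            apply mul_le_mul_of_nonneg_left hdist (hFnn _)
    have hb4 : ∫ t in (0:ℝ)..1, F (γ t) * (2*r) = (2*r) * ∫ t in Ioc (0:ℝ) 1, f y t := by
      rw [intervalIntegral.integral_mul_const, intervalIntegral.integral_of_le zero_le_one]
      ring
    calc |v x - v y| = _ := hb1
      _ ≤ _ := hb2
      _ ≤ _ := hb3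
      _ = _ := hb4
  -- per-t bound after swapping
  have hDbound : ∀ t ∈ Ioc (0:ℝ) 1,
      ∫ y in B, f y t ≤ (VB ^ (1 - 1/q) * N) * t ^ (-2/q) := by
    intro t ht
    have ht0 : 0 < t := ht.1
    have hGint : Integrable (fun y : E2 => F (x + t • (y - x)) ^ q) := by
      have := comp_affine_integrable hint x ht0.ne'
      exact this
    have hH := holder_set (s := B) hq measurableSet_ball measure_ball_lt_top.ne
      (F := fun y => F (x + t • (y - x)))
      (hFc.comp (by fun_prop))
      (fun y => hFnn _) hGint
    have hscale : ∫ y : E2, F (x + t • (y - x)) ^ q = (t^2)⁻¹ * ∫ z, F z ^ q :=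
      comp_affine_integral (fun z => F z ^ q) x ht0
    have hIGnn : (0:ℝ) ≤ ∫ z, F z ^ q := integral_nonneg fun z => Real.rpow_nonneg (hFnn z) q
    have hrpow : ((t^2)⁻¹ * ∫ z, F z ^ q) ^ (1/q) = t ^ (-2/q) * N := by
      rw [Real.mul_rpow (by positivity) hIGnn, hN]
      congr 1
      rw [← Real.rpow_natCast t 2, ← Real.rpow_neg ht0.le, ← Real.rpow_mul ht0.le]
      norm_num
      ring_nf
    calc ∫ y in B, f y t ≤ VB ^ (1 - 1/q) * ((∫ y : E2, F (x + t • (y - x)) ^ q) ^ (1/q)) := hH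
      _ = VB ^ (1 - 1/q) * (t ^ (-2/q) * N) := by rw [hscale, hrpow]
      _ = (VB ^ (1 - 1/q) * N) * t ^ (-2/q) := by ring
  -- the t-integral of the bound
  have hrint : ∫ t in Ioc (0:ℝ) 1, (VB ^ (1 - 1/q) * N) * t ^ (-2/q) =
      (VB ^ (1 - 1/q) * N) * (q/(q-2)) := by
    rw [← intervalIntegral.integral_of_le zero_le_one]
    rw [intervalIntegral.integral_const_mul]
    rw [integral_rpow (Or.inl (by
      rw [neg_div, neg_lt_neg_iff, div_lt_one hq0]; linarith))]
    have h2 : (-2/q + 1) = (q-2)/q := by field_simp; ring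
    rw [Real.one_rpow, h2,
      Real.zero_rpow (div_ne_zero (by linarith) (by linarith))]
    have h3 : (1 - 0 : ℝ) / ((q-2)/q) = q/(q-2) := by
      rw [sub_zero, one_div_div]
    rw [h3]
  -- integrability of the integrand in y
  have hint1 : IntegrableOn (fun y => |v x - v y|) B := by
    have : IntegrableOn (fun y => |v x - v y|) (closedBall x₀ r) :=
      ((continuous_const.sub hv.continuous).abs.continuousOn).integrableOn_compact
        (isCompact_closedBall _ _)
    exact this.mono_set ball_subset_closedBall
  have hint2 : IntegrableOn (fun y => (2*r) * ∫ t in Ioc (0:ℝ) 1, f y t) B :=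
    (hprod.integral_prod_left).const_mul _
  calc ∫ y in B, |v x - v y|
      ≤ ∫ y in B, (2*r) * ∫ t in Ioc (0:ℝ) 1, f y t :=
        setIntegral_mono_on hint1 hint2 measurableSet_ball hpt
    _ = (2*r) * ∫ y in B, ∫ t in Ioc (0:ℝ) 1, f y t := integral_const_mul _ _
    _ = (2*r) * ∫ t in Ioc (0:ℝ) 1, ∫ y in B, f y t := by
        rw [integral_integral_swap hprod]
    _ ≤ (2*r) * ((VB ^ (1 - 1/q) * N) * (q/(q-2))) := by
        apply mul_le_mul_of_nonneg_left _ (by linarith : (0:ℝ) ≤ 2*r)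
        rw [← hrint]
        apply integral_mono_of_nonneg
        · exact Filter.Eventually.of_forall fun t =>
            setIntegral_nonneg measurableSet_ball fun y _ => hFnn _
        · have hii : IntervalIntegrable (fun t : ℝ => t ^ (-2/q)) volume 0 1 :=
            intervalIntegral.intervalIntegrable_rpow' (by
              rw [neg_div, neg_lt_neg_iff, div_lt_one hq0]; linarith)
          exact (hii.const_mul (VB ^ (1 - 1/q) * N)).1
        · exact ae_restrict_of_forall_mem measurableSet_Ioc hDbound
    _ = (2*r) * ((VB ^ (1 - 1/q) * N) * (q/(q-2))) := rfl

lemma osc {q : ℝ} (hq : 2 < q) (x₀ : E2) {r : ℝ} (hr : 0 < r) {v : E2 → ℝ}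
    (hv : ContDiff ℝ 1 v) (hint : Integrable fun z => ‖fderiv ℝ v z‖ ^ q)
    {x x' : E2} (hx : x ∈ ball x₀ r) (hx' : x' ∈ ball x₀ r) :
    |v x - v x'| ≤ (4 * (q/(q-2)) * ((volume (ball (0:E2) 1)).toReal) ^ (-(1:ℝ)/q)) *
      (r ^ ((1:ℝ) - 2/q) * (∫ z, ‖fderiv ℝ v z‖ ^ q) ^ (1/q)) := by
  have hq0 : (0:ℝ) < q := by linarith
  set B : Set E2 := ball x₀ r with hB
  set b : ℝ := (volume (ball (0:E2) 1)).toReal with hbdef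
  have hb : 0 < b := ENNReal.toReal_pos (measure_ball_pos volume 0 one_pos).ne'
    measure_ball_lt_top.ne
  set VB : ℝ := (volume B).toReal with hVBdef
  set N : ℝ := (∫ z, ‖fderiv ℝ v z‖ ^ q) ^ (1/q) with hN
  have hNnn : 0 ≤ N := Real.rpow_nonneg
    (integral_nonneg fun z => Real.rpow_nonneg (norm_nonneg _) q) _
  have hVBval : VB = r^2 * b := by
    rw [hVBdef, hB, Measure.addHaar_ball volume x₀ hr.le, ENNReal.toReal_mul,
      ENNReal.toReal_ofReal (by positivity), finrank_euclideanSpace_fin]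
  have hVBpos : 0 < VB := by rw [hVBval]; positivity
  -- integrability of y ↦ |v x - v y| etc on B
  have hia : ∀ w : E2, IntegrableOn (fun y => |v w - v y|) B := by
    intro w
    have : IntegrableOn (fun y => |v w - v y|) (closedBall x₀ r) :=
      ((continuous_const.sub hv.continuous).abs.continuousOn).integrableOn_compact
        (isCompact_closedBall _ _)
    exact this.mono_set ball_subset_closedBall
  -- triangle inequality under the integral
  have h1 : VB * |v x - v x'| ≤
      (∫ y in B, |v x - v y|) + ∫ y in B, |v x' - v y| := by
    have e1 : VB * |v x - v x'| = ∫ _y in B, |v x - v x'| := by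
      rw [setIntegral_const, smul_eq_mul]; rfl
    rw [e1, ← integral_add (hia x) (hia x')]
    apply setIntegral_mono_on (integrableOn_const measure_ball_lt_top.ne)
      ((hia x).add (hia x')) measurableSet_ball
    intro y _
    calc |v x - v x'| ≤ |v x - v y| + |v y - v x'| := abs_sub_le _ _ _
      _ = |v x - v y| + |v x' - v y| := by rw [abs_sub_comm (v y)]
  have h2 := key hq x₀ hr hv hint hx
  have h3 := key hq x₀ hr hv hint hx'
  -- so VB * |v x - v x'| ≤ 4r * (VB^{1-1/q} * N) * (q/(q-2))
  have h4 : VB * |v x - v x'| ≤ (4*r) * ((VB ^ ((1:ℝ) - 1/q) * N) * (q/(q-2))) := by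
    have := h1.trans (add_le_add h2 h3)
    calc VB * |v x - v x'| ≤ _ := this
      _ = (4*r) * ((VB ^ ((1:ℝ) - 1/q) * N) * (q/(q-2))) := by ring
  -- rpow computation : VB ^ (1-1/q) = VB * (r ^ (-2/q) * b ^ (-1/q))
  have hVBr : VB ^ ((1:ℝ) - 1/q) = VB * (r ^ (-(2:ℝ)/q) * b ^ (-(1:ℝ)/q)) := by
    have e1 : ((1:ℝ) - 1/q) = 1 + (-(1/q)) := by ring
    rw [e1, Real.rpow_add hVBpos, Real.rpow_one]
    congr 1
    rw [hVBval, Real.mul_rpow (by positivity) hb.le]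
    congr 1
    · rw [← Real.rpow_natCast r 2, ← Real.rpow_mul hr.le]
      congr 1
      push_cast
      ring
    · congr 1
      ring
  have hr2q : r * r ^ (-(2:ℝ)/q) = r ^ ((1:ℝ) - 2/q) := by
    nth_rewrite 1 [← Real.rpow_one r]
    rw [← Real.rpow_add hr]
    ring_nf
  have h5 : VB * |v x - v x'| ≤
      VB * ((4 * (q/(q-2)) * b ^ (-(1:ℝ)/q)) * (r ^ ((1:ℝ) - 2/q) * N)) := by
    calc VB * |v x - v x'| ≤ (4*r) * ((VB ^ ((1:ℝ) - 1/q) * N) * (q/(q-2))) := h4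
      _ = VB * ((4 * (q/(q-2)) * b ^ (-(1:ℝ)/q)) * ((r * r ^ (-(2:ℝ)/q)) * N)) := by
          rw [hVBr]; ring
      _ = VB * ((4 * (q/(q-2)) * b ^ (-(1:ℝ)/q)) * (r ^ ((1:ℝ) - 2/q) * N)) := by
          rw [hr2q]
  exact le_of_mul_le_mul_left h5 hVBpos

/-- Localized `L^∞` estimate with a degenerate weight: for `q ∈ (2,∞)` there is
`C_q > 0` such that for every ball `B(x₀,r) ⊂ ℝ²`, every measurable `0 ≤ ρ ≤ 1`
carrying mass at least `c > 0` on the ball, and every `C¹` function `v` with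
`∇v ∈ L^q(ℝ²)`, one has for all `x ∈ B`:
`|v(x)| ≤ C_q [r^{1−2/q} ‖∇v‖_{L^q(ℝ²)} + (r/c) ‖ρv‖_{L²(B)}]`. -/
theorem localized_Linfty_estimate :
    ∀ q : ℝ, 2 < q → ∃ C > 0,
      ∀ (x₀ : EuclideanSpace ℝ (Fin 2)) (r : ℝ), 0 < r →
      ∀ ρ : EuclideanSpace ℝ (Fin 2) → ℝ, Measurable ρ →
        (∀ x, 0 ≤ ρ x) → (∀ x, ρ x ≤ 1) →
      ∀ c : ℝ, 0 < c → c ≤ ∫ x in Metric.ball x₀ r, ρ x →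
      ∀ v : EuclideanSpace ℝ (Fin 2) → ℝ, ContDiff ℝ 1 v →
        Integrable (fun x => ‖fderiv ℝ v x‖ ^ q) →
      ∀ x ∈ Metric.ball x₀ r,
        |v x| ≤ C * (r ^ (1 - 2 / q) * (∫ y, ‖fderiv ℝ v y‖ ^ q) ^ (1 / q)
            + (r / c) * Real.sqrt (∫ y in Metric.ball x₀ r, (ρ y * v y) ^ 2)) := by
  intro q hq
  set b : ℝ := (volume (ball (0:E2) 1)).toReal with hbdef
  have hb : 0 < b := ENNReal.toReal_pos (measure_ball_pos volume 0 one_pos).ne'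
    measure_ball_lt_top.ne
  set K : ℝ := 4 * (q/(q-2)) * b ^ (-(1:ℝ)/q) with hK
  have hKnn : 0 ≤ K := by
    apply mul_nonneg (mul_nonneg (by norm_num) _) (Real.rpow_nonneg hb.le _)
    apply div_nonneg <;> linarith
  refine ⟨2 * K + Real.sqrt b + 1, by positivity, ?_⟩
  intro x₀ r hr ρ hρm hρ0 hρ1 c hc hcρ v hv hint x hx
  set B : Set E2 := ball x₀ r with hB
  set N : ℝ := (∫ z, ‖fderiv ℝ v z‖ ^ q) ^ (1/q) with hN
  set S : ℝ := Real.sqrt (∫ y in B, (ρ y * v y) ^ 2) with hS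
  have hNnn : 0 ≤ N := Real.rpow_nonneg
    (integral_nonneg fun z => Real.rpow_nonneg (norm_nonneg _) q) _
  have hSnn : 0 ≤ S := Real.sqrt_nonneg _
  haveI : IsFiniteMeasure (volume.restrict B) :=
    ⟨by rw [Measure.restrict_apply_univ]; exact measure_ball_lt_top⟩
  -- minimum point of |v| on the closed ball
  obtain ⟨x', hx'B, hmin⟩ := (isCompact_closedBall x₀ r).exists_isMinOn
    ⟨x₀, mem_closedBall_self hr.le⟩ (hv.continuous.abs.continuousOn)
  -- bound |v| on the closed ball
  obtain ⟨Mv, hMv⟩ := (isCompact_closedBall x₀ r).exists_bound_of_continuousOn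
    hv.continuous.continuousOn
  -- integrability facts
  have hρ_int : IntegrableOn ρ B := by
    constructor
    · exact hρm.aestronglyMeasurable
    · apply HasFiniteIntegral.of_bounded (C := 1)
      apply ae_restrict_of_forall_mem measurableSet_ball
      intro y _
      rw [Real.norm_eq_abs, abs_of_nonneg (hρ0 y)]
      exact hρ1 y
  have hρv_int : IntegrableOn (fun y => ρ y * |v y|) B := by
    constructor
    · exact (hρm.aestronglyMeasurable.mul hv.continuous.abs.aestronglyMeasurable).restrict
    · apply HasFiniteIntegral.of_bounded (C := Mv)
      apply ae_restrict_of_forall_mem measurableSet_ball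
      intro y hy
      rw [Real.norm_eq_abs, abs_of_nonneg (mul_nonneg (hρ0 y) (abs_nonneg _))]
      calc ρ y * |v y| ≤ 1 * |v y| := by
            apply mul_le_mul_of_nonneg_right (hρ1 y) (abs_nonneg _)
        _ = |v y| := one_mul _
        _ ≤ Mv := by
            have := hMv y (ball_subset_closedBall hy)
            rwa [Real.norm_eq_abs] at this
  -- Step 1: c * |v x'| ≤ ∫_B ρ |v|
  have step1 : c * |v x'| ≤ ∫ y in B, ρ y * |v y| := by
    calc c * |v x'| ≤ (∫ y in B, ρ y) * |v x'| :=
          mul_le_mul_of_nonneg_right hcρ (abs_nonneg _)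
      _ = ∫ y in B, ρ y * |v x'| := (integral_mul_const _ _).symm
      _ ≤ ∫ y in B, ρ y * |v y| := by
          apply setIntegral_mono_on (hρ_int.mul_const _) hρv_int measurableSet_ball
          intro y hy
          exact mul_le_mul_of_nonneg_left (hmin (ball_subset_closedBall hy)) (hρ0 y)
  -- Step 2: Cauchy–Schwarz
  have step2 : ∫ y in B, ρ y * |v y| ≤ Real.sqrt ((volume B).toReal) * S := by
    have hpq : (2:ℝ).HolderConjugate 2 := (Real.holderConjugate_iff_eq_conjExponent one_lt_two).2 (by norm_num)
    have hf_meas : AEStronglyMeasurable (fun y => ρ y * |v y|) (volume.restrict B) :=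
      (hρm.aestronglyMeasurable.mul hv.continuous.abs.aestronglyMeasurable).restrict
    have hmemf : MemLp (fun y => ρ y * |v y|) (ENNReal.ofReal 2) (volume.restrict B) := by
      apply MemLp.of_bound hf_meas Mv
      apply ae_restrict_of_forall_mem measurableSet_ball
      intro y hy
      rw [Real.norm_eq_abs, abs_of_nonneg (mul_nonneg (hρ0 y) (abs_nonneg _))]
      calc ρ y * |v y| ≤ 1 * |v y| :=
            mul_le_mul_of_nonneg_right (hρ1 y) (abs_nonneg _)
        _ = |v y| := one_mul _
        _ ≤ Mv := by
            have := hMv y (ball_subset_closedBall hy)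
            rwa [Real.norm_eq_abs] at this
    have hmem1 : MemLp (fun _ : E2 => (1:ℝ)) (ENNReal.ofReal 2) (volume.restrict B) :=
      memLp_const 1
    have H := integral_mul_le_Lp_mul_Lq_of_nonneg (μ := volume.restrict B) hpq
      (f := fun y => ρ y * |v y|) (g := fun _ => (1:ℝ))
      (Filter.Eventually.of_forall fun y => mul_nonneg (hρ0 y) (abs_nonneg _))
      (Filter.Eventually.of_forall fun _ => zero_le_one) hmemf hmem1
    simp only [mul_one, Real.one_rpow] at H
    rw [integral_const, measureReal_restrict_apply_univ, smul_eq_mul, mul_one] at H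
    have e2 : (fun y => (ρ y * |v y|) ^ (2:ℝ)) = fun y => (ρ y * v y) ^ 2 := by
      funext y
      rw [show (2:ℝ) = ((2:ℕ):ℝ) by norm_num, Real.rpow_natCast]
      rw [mul_pow, mul_pow, sq_abs]
    rw [e2] at H
    calc ∫ y in B, ρ y * |v y|
        ≤ (∫ y in B, (ρ y * v y) ^ 2) ^ ((1:ℝ)/2) * ((volume B).toReal) ^ ((1:ℝ)/2) := H
      _ = Real.sqrt ((volume B).toReal) * S := by
          rw [hS, Real.sqrt_eq_rpow, Real.sqrt_eq_rpow]
          ring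
  -- Step 3: |v x'| ≤ sqrt b * (r/c) * S
  have hVBval : (volume B).toReal = r^2 * b := by
    rw [hB, Measure.addHaar_ball volume x₀ hr.le, ENNReal.toReal_mul,
      ENNReal.toReal_ofReal (by positivity), finrank_euclideanSpace_fin]
  have hsqrtVB : Real.sqrt ((volume B).toReal) = r * Real.sqrt b := by
    rw [hVBval, Real.sqrt_mul (sq_nonneg r), Real.sqrt_sq hr.le]
  have step3 : |v x'| ≤ Real.sqrt b * ((r/c) * S) := by
    have h := step1.trans step2
    rw [hsqrtVB] at h
    rw [show Real.sqrt b * ((r/c) * S) = (r * Real.sqrt b * S) / c by ring]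
    rw [le_div_iff₀ hc]
    calc |v x'| * c = c * |v x'| := by ring
      _ ≤ r * Real.sqrt b * S := h
  -- Step 4: oscillation on the ball of radius 2r
  have hr2 : (0:ℝ) < 2 * r := by linarith
  have hx2 : x ∈ ball x₀ (2*r) := ball_subset_ball (by linarith) hx
  have hx'2 : x' ∈ ball x₀ (2*r) := closedBall_subset_ball (by linarith) hx'B
  have hosc := osc hq x₀ hr2 hv hint hx2 hx'2
  -- (2r)^{1-2/q} ≤ 2 * r^{1-2/q}
  have hexp : (2*r) ^ ((1:ℝ) - 2/q) ≤ 2 * r ^ ((1:ℝ) - 2/q) := by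
    rw [Real.mul_rpow (by norm_num) hr.le]
    apply mul_le_mul_of_nonneg_right _ (Real.rpow_nonneg hr.le _)
    calc (2:ℝ) ^ ((1:ℝ) - 2/q) ≤ (2:ℝ) ^ (1:ℝ) := by
          apply Real.rpow_le_rpow_of_exponent_le one_le_two
          have : 0 < 2/q := by positivity
          linarith
      _ = 2 := Real.rpow_one 2
  have step4 : |v x - v x'| ≤ (2 * K) * (r ^ ((1:ℝ) - 2/q) * N) := by
    calc |v x - v x'| ≤ K * ((2*r) ^ ((1:ℝ) - 2/q) * N) := hosc
      _ ≤ K * ((2 * r ^ ((1:ℝ) - 2/q)) * N) := by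
          apply mul_le_mul_of_nonneg_left _ hKnn
          exact mul_le_mul_of_nonneg_right hexp hNnn
      _ = (2 * K) * (r ^ ((1:ℝ) - 2/q) * N) := by ring
  -- final combination
  have habs : |v x| ≤ |v x - v x'| + |v x'| := by
    calc |v x| = |(v x - v x') + v x'| := by ring_nf
      _ ≤ |v x - v x'| + |v x'| := abs_add_le _ _
  have hA : 0 ≤ r ^ ((1:ℝ) - 2/q) * N := mul_nonneg (Real.rpow_nonneg hr.le _) hNnn
  have hBn : 0 ≤ (r/c) * S := mul_nonneg (by positivity) hSnn
  calc |v x| ≤ |v x - v x'| + |v x'| := habs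
    _ ≤ (2 * K) * (r ^ ((1:ℝ) - 2/q) * N) + Real.sqrt b * ((r/c) * S) :=
        add_le_add step4 step3
    _ ≤ (2 * K + Real.sqrt b + 1) * (r ^ ((1:ℝ) - 2/q) * N + (r/c) * S) := by
        have hsb : 0 ≤ Real.sqrt b := Real.sqrt_nonneg b
        nlinarith [mul_nonneg hKnn hA, mul_nonneg hsb hBn]
    _ = (2 * K + Real.sqrt b + 1) * (r ^ (1 - 2/q) * N + (r/c) * S) := by norm_num
end
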